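/- arXiv:2411.07374 — 12 statements merged into one kernel-verified Lean document; each statement's English description precedes it below -/
import Mathlib

section
/- Let G be an Abelian group and let P, Q : {0,1}^n → G be distinct multilinear polynomials of degree at most d ≤ n. Then P and Q differ on at least a 2^{-d} fraction of points of {0,1}^n; equivalently, |{x ∈ {0,1}^n : P(x) ≠ Q(x)}| ≥ 2^{n-d}. -/
open Finset

/-- Evaluation of a multilinear polynomial with coefficients `c` over an Abelian
group at a point of the Boolean cube. -/
def evalPoly {G : Type*} [AddCommMonoid G] {n : ℕ} (c : Finset (Fin n) → G)
    (x : Fin n → Bool) : G :=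
  ∑ S : Finset (Fin n), if ∀ i ∈ S, x i = true then c S else 0

lemma alt_sum {α : Type*} [DecidableEq α] (A B : Finset α) (hAB : A ⊆ B) :
    (∑ z ∈ B.powerset, if A ⊆ z then (-1:ℤ)^z.card else 0)
      = if A = B then (-1:ℤ)^B.card else 0 := by
  rw [← Finset.sum_filter]
  have h1 : ∑ z ∈ B.powerset.filter (fun z => A ⊆ z), (-1:ℤ)^z.card
      = ∑ w ∈ (B \ A).powerset, (-1:ℤ)^A.card * (-1:ℤ)^w.card := by
    apply Finset.sum_nbij' (fun z => z \ A) (fun w => A ∪ w)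
    · intro z hz
      simp only [mem_filter, mem_powerset] at hz ⊢
      exact sdiff_subset_sdiff hz.1 (Finset.Subset.refl _)
    · intro w hw
      simp only [mem_powerset] at hw
      simp only [mem_filter, mem_powerset]
      exact ⟨Finset.union_subset hAB (hw.trans Finset.sdiff_subset), Finset.subset_union_left⟩
    · intro z hz
      simp only [mem_filter, mem_powerset] at hz
      exact Finset.union_sdiff_of_subset hz.2
    · intro w hw
      simp only [mem_powerset] at hw
      rw [Finset.union_sdiff_cancel_left]
      exact Finset.disjoint_left.2 fun a ha hw' => (Finset.mem_sdiff.1 (hw hw')).2 ha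
    · intro z hz
      simp only [mem_filter, mem_powerset] at hz
      rw [← pow_add, ← Finset.card_union_of_disjoint, Finset.union_sdiff_of_subset hz.2]
      exact Finset.disjoint_left.2 fun a ha ha' => (Finset.mem_sdiff.1 ha').2 ha
  rw [h1, ← Finset.mul_sum, Finset.sum_powerset_neg_one_pow_card]
  by_cases h : A = B
  · simp [h, Finset.sdiff_eq_empty_iff_subset.2 (le_of_eq h.symm)]
  · have : B \ A ≠ ∅ := fun he => h (Finset.Subset.antisymm hAB
      (Finset.sdiff_eq_empty_iff_subset.1 he))
    simp [this, h]

lemma key_sum {G : Type*} [AddCommGroup G] {n : ℕ} (c : Finset (Fin n) → G)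
    (S₀ : Finset (Fin n)) (hmax : ∀ S, S₀ ⊂ S → c S = 0) (y : Fin n → Bool) :
    ∑ z ∈ S₀.powerset, (-1:ℤ)^z.card •
      evalPoly c (fun i => if i ∈ S₀ then decide (i ∈ z) else y i)
      = (-1:ℤ)^S₀.card • c S₀ := by
  unfold evalPoly
  simp_rw [Finset.smul_sum]
  rw [Finset.sum_comm]
  have hterm : ∀ S : Finset (Fin n), ∀ z ∈ S₀.powerset,
      (-1:ℤ)^z.card • (if ∀ i ∈ S, (if i ∈ S₀ then decide (i ∈ z) else y i) = true
        then c S else 0)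
      = if ∀ i ∈ S \ S₀, y i = true then
          (if S ∩ S₀ ⊆ z then (-1:ℤ)^z.card else 0) • c S else 0 := by
    intro S z _
    have hiff : (∀ i ∈ S, (if i ∈ S₀ then decide (i ∈ z) else y i) = true)
        ↔ ((∀ i ∈ S \ S₀, y i = true) ∧ S ∩ S₀ ⊆ z) := by
      constructor
      · intro h
        refine ⟨fun i hi => ?_, fun i hi => ?_⟩
        · have := h i (Finset.mem_sdiff.1 hi).1
          rwa [if_neg (Finset.mem_sdiff.1 hi).2] at this
        · have := h i (Finset.mem_inter.1 hi).1
          rw [if_pos (Finset.mem_inter.1 hi).2] at this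
          exact of_decide_eq_true this
      · rintro ⟨h1, h2⟩ i hi
        by_cases hi0 : i ∈ S₀
        · rw [if_pos hi0]
          exact decide_eq_true (h2 (Finset.mem_inter.2 ⟨hi, hi0⟩))
        · rw [if_neg hi0]
          exact h1 i (Finset.mem_sdiff.2 ⟨hi, hi0⟩)
    by_cases h1 : ∀ i ∈ S \ S₀, y i = true
    · by_cases h2 : S ∩ S₀ ⊆ z
      · rw [if_pos (hiff.2 ⟨h1, h2⟩), if_pos h1, if_pos h2]
      · rw [if_neg (fun hh => h2 (hiff.1 hh).2), if_pos h1, if_neg h2, zero_smul, smul_zero]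
    · rw [if_neg (fun hh => h1 (hiff.1 hh).1), if_neg h1, smul_zero]
  calc ∑ S : Finset (Fin n), ∑ z ∈ S₀.powerset,
        (-1:ℤ)^z.card • (if ∀ i ∈ S, (if i ∈ S₀ then decide (i ∈ z) else y i) = true
          then c S else 0)
      = ∑ S : Finset (Fin n), if ∀ i ∈ S \ S₀, y i = true then
          (if S ∩ S₀ = S₀ then (-1:ℤ)^S₀.card else 0) • c S else 0 := by
        refine Finset.sum_congr rfl fun S _ => ?_
        rw [Finset.sum_congr rfl (hterm S)]
        by_cases h1 : ∀ i ∈ S \ S₀, y i = true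
        · rw [Finset.sum_congr rfl (fun z _ => if_pos h1), if_pos h1,
            ← Finset.sum_smul, alt_sum _ _ Finset.inter_subset_right]
        · rw [Finset.sum_congr rfl (fun z _ => if_neg h1), if_neg h1,
            Finset.sum_const_zero]
    _ = (-1:ℤ)^S₀.card • c S₀ := by
        rw [Finset.sum_eq_single S₀]
        · simp
        · intro S _ hS
          by_cases h1 : ∀ i ∈ S \ S₀, y i = true
          · rw [if_pos h1]
            by_cases h2 : S ∩ S₀ = S₀
            · have hsub : S₀ ⊆ S := by
                intro i hi; have := h2 ▸ hi; exact (Finset.mem_inter.1 this).1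
              have : c S = 0 := hmax S (lt_of_le_of_ne hsub (fun he => hS he.symm))
              rw [this, smul_zero]
            · rw [if_neg h2, zero_smul]
          · rw [if_neg h1]
        · intro h; exact absurd (Finset.mem_univ S₀) h

/-- DeMillo–Lipton–Schwartz–Zippel over Abelian groups: two distinct multilinear
polynomials of degree at most `d ≤ n` differ on at least `2^(n-d)` points of `{0,1}ⁿ`. -/
theorem stmt1 {G : Type*} [AddCommGroup G] [DecidableEq G] (n d : ℕ) (hdn : d ≤ n)
    (p q : Finset (Fin n) → G)
    (hp : ∀ S : Finset (Fin n), d < S.card → p S = 0)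
    (hq : ∀ S : Finset (Fin n), d < S.card → q S = 0)
    (hne : p ≠ q) :
    2 ^ (n - d) ≤
      (Finset.univ.filter (fun x : Fin n → Bool => evalPoly p x ≠ evalPoly q x)).card := by
  classical
  set c : Finset (Fin n) → G := fun S => p S - q S with hc
  have hsub : ∀ x, evalPoly c x = evalPoly p x - evalPoly q x := by
    intro x
    unfold evalPoly
    rw [← Finset.sum_sub_distrib]
    refine Finset.sum_congr rfl fun S _ => ?_
    split <;> simp [hc]
  -- support nonempty
  have hFne : (Finset.univ.filter (fun S => c S ≠ 0)).Nonempty := by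
    by_contra h
    rw [Finset.not_nonempty_iff_eq_empty, Finset.filter_eq_empty_iff] at h
    apply hne
    funext S
    have := h (Finset.mem_univ S)
    simpa [hc, sub_eq_zero] using not_not.1 this
  obtain ⟨S₀, hS₀mem, hS₀max⟩ := Finset.exists_max_image _ Finset.card hFne
  have hS₀ne : c S₀ ≠ 0 := (Finset.mem_filter.1 hS₀mem).2
  have hS₀d : S₀.card ≤ d := by
    by_contra h
    push_neg at h
    exact hS₀ne (by simp [hc, hp S₀ h, hq S₀ h])
  have hmax : ∀ S, S₀ ⊂ S → c S = 0 := by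
    intro S hS
    by_contra h
    have : S.card ≤ S₀.card := hS₀max S (Finset.mem_filter.2 ⟨Finset.mem_univ S, h⟩)
    exact absurd (Finset.card_lt_card hS) (not_lt.2 this)
  -- for each w ⊆ S₀ᶜ, find a bad point
  have hz : ∀ w : Finset (Fin n), ∃ z : Finset (Fin n),
      evalPoly c (fun i => if i ∈ S₀ then decide (i ∈ z) else decide (i ∈ w)) ≠ 0 := by
    intro w
    by_contra h
    push_neg at h
    have hk := key_sum c S₀ hmax (fun i => decide (i ∈ w))
    rw [Finset.sum_congr rfl (fun z _ => by rw [h z, smul_zero]), Finset.sum_const_zero] at hk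
    rcases Nat.even_or_odd S₀.card with he | ho
    · rw [he.neg_one_pow, one_smul] at hk
      exact hS₀ne hk.symm
    · rw [ho.neg_one_pow, neg_smul, one_smul] at hk
      exact hS₀ne (neg_eq_zero.1 hk.symm)
  choose zf hzf using hz
  set f : Finset (Fin n) → (Fin n → Bool) :=
    fun w => fun i => if i ∈ S₀ then decide (i ∈ zf w) else decide (i ∈ w) with hf
  have hmaps : ∀ w ∈ S₀ᶜ.powerset, f w ∈
      Finset.univ.filter (fun x : Fin n → Bool => evalPoly p x ≠ evalPoly q x) := by
    intro w _
    refine Finset.mem_filter.2 ⟨Finset.mem_univ _, ?_⟩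
    intro heq
    apply hzf w
    rw [hsub, heq, sub_self]
  have hinj : Set.InjOn f S₀ᶜ.powerset := by
    intro w hw w' hw' heq
    simp only [Finset.coe_powerset, Set.mem_preimage, Set.mem_powerset_iff,
      Finset.coe_subset] at hw hw'
    ext i
    by_cases hi : i ∈ S₀
    · constructor
      · intro h; exact absurd hi (Finset.mem_compl.1 (hw h))
      · intro h; exact absurd hi (Finset.mem_compl.1 (hw' h))
    · have := congrFun heq i
      simp only [hf, if_neg hi] at this
      rw [decide_eq_decide] at this
      exact this
  have hcard := Finset.card_le_card_of_injOn f hmaps hinj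
  have h1 : S₀ᶜ.powerset.card = 2 ^ (n - S₀.card) := by
    rw [Finset.card_powerset, Finset.card_compl, Fintype.card_fin]
  have h2 : (2:ℕ) ^ (n - d) ≤ 2 ^ (n - S₀.card) :=
    Nat.pow_le_pow_right (by norm_num) (Nat.sub_le_sub_left hS₀d n)
  calc (2:ℕ) ^ (n - d) ≤ 2 ^ (n - S₀.card) := h2
    _ = S₀ᶜ.powerset.card := h1.symm
    _ ≤ _ := hcard
end

section
/- Let G be an Abelian group, n, k, d non-negative integers with k ≤ n and d ≤ min{k, n−k}. Let R : {0,1}^n → G be a polynomial of degree at most d that does not vanish at some point of Hamming weight exactly k. Then the number of points a ∈ {0,1}^n of Hamming weight k with R(a) ≠ 0 is at least C(n−2d, k−d). -/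
open Finset

/-- Hamming weight of a point of the Boolean cube. -/
def hwt {n : ℕ} (x : Fin n → Bool) : ℕ :=
  (Finset.univ.filter (fun i => x i = true)).card

/-!
Induction on the degree `d`. For distinct coordinates `i, j` and a point `Y` of weight `k - 1`
avoiding both, the difference `R(Y + eᵢ) - R(Y + eⱼ)` is the value at `Y` of a polynomial of
degree `≤ d - 1` in the other `n - 2` variables. If some such difference is non-zero, the induction
hypothesis gives `C(n - 2d, k - d)` non-zero points `Y` of that smaller slice, and each of them
yields a non-zero point `Y + eᵢ` or `Y + eⱼ` of the weight-`k` slice, injectively. If all such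
differences vanish, `R` is invariant under exchanging one coordinate, hence constant on the
connected slice, so it is non-zero at all `C(n, k) ≥ C(n - 2d, k - d)` of its points.
-/

lemma Nat.choose_le_choose_add_add (m r d : ℕ) : m.choose r ≤ (m + d).choose (r + d) := by
  induction d with
  | zero => rfl
  | succ d ih =>
    rw [← add_assoc, ← add_assoc, Nat.choose_succ_succ']
    exact ih.trans (Nat.le_add_right _ _)

lemma Nat.choose_sub_two_mul_le {n k d : ℕ} (hdk : d ≤ k) (hkn : k ≤ n) :
    (n - 2 * d).choose (k - d) ≤ n.choose k :=
  calc (n - 2 * d).choose (k - d) ≤ (n - 2 * d + d).choose (k - d + d) :=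
        Nat.choose_le_choose_add_add _ _ _
    _ ≤ n.choose k := by
        rw [Nat.sub_add_cancel hdk]
        exact Nat.choose_le_choose _ (by omega)

section Slice

variable {α β G : Type*} [DecidableEq α]

def ExchangeInvariant (f : Finset α → β) (U : Finset α) (k : ℕ) : Prop :=
  ∀ Y ⊆ U, #Y + 1 = k → ∀ i ∈ U, ∀ j ∈ U, i ∉ Y → j ∉ Y → f (insert i Y) = f (insert j Y)

namespace ExchangeInvariant

variable {f : Finset α → β} {U : Finset α} {k : ℕ}

theorem eq (hf : ExchangeInvariant f U k) {A B : Finset α} (hA : A ∈ U.powersetCard k)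
    (hB : B ∈ U.powersetCard k) : f A = f B := by
  rw [mem_powersetCard] at hA hB
  induction h : #(A \ B) using Nat.strong_induction_on generalizing A with
  | _ m ih =>
    obtain rfl | hAB := eq_or_ne A B
    · rfl
    obtain ⟨i, hi⟩ : (A \ B).Nonempty :=
      sdiff_nonempty.2 fun hsub => hAB (eq_of_subset_of_card_le hsub (by omega))
    obtain ⟨j, hj⟩ : (B \ A).Nonempty := by
      rw [← card_pos, card_sdiff_comm (by omega), card_pos]
      exact sdiff_nonempty.2 fun hsub => hAB (eq_of_subset_of_card_le hsub (by omega))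
    rw [mem_sdiff] at hi hj
    have hjA : j ∉ A.erase i := fun h => hj.2 (mem_of_mem_erase h)
    have hAi : #(A.erase i) + 1 = k := by
      rw [card_erase_of_mem hi.1, Nat.sub_add_cancel (card_pos.2 ⟨i, hi.1⟩), hA.2]
    have hA' : insert j (A.erase i) ⊆ U ∧ #(insert j (A.erase i)) = k :=
      ⟨insert_subset (hB.1 hj.1) ((erase_subset _ _).trans hA.1),
        (card_insert_of_notMem hjA).trans hAi⟩
    have hsdiff : insert j (A.erase i) \ B = (A \ B).erase i := by
      ext x
      simp only [mem_sdiff, mem_insert, mem_erase]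
      constructor
      · rintro ⟨rfl | ⟨hxi, hxA⟩, hxB⟩
        · exact absurd hj.1 hxB
        · exact ⟨hxi, hxA, hxB⟩
      · rintro ⟨hxi, hxA, hxB⟩
        exact ⟨Or.inr ⟨hxi, hxA⟩, hxB⟩
    calc f A = f (insert i (A.erase i)) := by rw [insert_erase hi.1]
      _ = f (insert j (A.erase i)) :=
        hf _ ((erase_subset _ _).trans hA.1) hAi
          i (hA.1 hi.1) j (hB.1 hj.1) (notMem_erase _ _) hjA
      _ = f B := by
        refine ih _ ?_ hA' rfl
        rw [hsdiff, card_erase_of_mem (mem_sdiff.2 hi), ← h]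
        exact Nat.pred_lt (card_pos.2 ⟨i, mem_sdiff.2 hi⟩).ne'

theorem card_filter_ne_eq [DecidableEq β] (hf : ExchangeInvariant f U k) {A : Finset α}
    (hA : A ∈ U.powersetCard k) {b : β} (hfA : f A ≠ b) :
    #{B ∈ U.powersetCard k | f B ≠ b} = (#U).choose k := by
  rw [filter_true_of_mem fun B hB => hf.eq hB hA ▸ hfA, card_powersetCard]

end ExchangeInvariant

/-- The value of the multilinear polynomial with coefficients `R` at the indicator vector
of `A`. -/
def evalSet [AddCommMonoid G] (R : Finset α → G) (A : Finset α) : G :=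
  ∑ S ∈ A.powerset, R S

variable [AddCommGroup G]

/-- The coefficients of `x ↦ R(x + eᵢ) - R(x + eⱼ)` as a polynomial in the variables other than
`i` and `j`. -/
def swapDiff (R : Finset α → G) (i j : α) (S : Finset α) : G :=
  if i ∈ S ∨ j ∈ S then 0 else R (insert i S) - R (insert j S)

theorem evalSet_swapDiff (R : Finset α → G) {i j : α} {Y : Finset α} (hi : i ∉ Y) (hj : j ∉ Y) :
    evalSet (swapDiff R i j) Y = evalSet R (insert i Y) - evalSet R (insert j Y) := by
  rw [evalSet, evalSet, evalSet, sum_powerset_insert hi, sum_powerset_insert hj,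
    add_sub_add_left_eq_sub, ← sum_sub_distrib]
  refine sum_congr rfl fun S hS => if_neg ?_
  rw [mem_powerset] at hS
  exact not_or.2 ⟨fun h => hi (hS h), fun h => hj (hS h)⟩

theorem swapDiff_eq_zero {R : Finset α → G} {d : ℕ} (hR : ∀ S, d < #S → R S = 0) (i j : α)
    {S : Finset α} (hS : d ≤ #S) : swapDiff R i j S = 0 := by
  unfold swapDiff
  split_ifs with h
  · rfl
  · rw [not_or] at h
    rw [hR _ (by rw [card_insert_of_notMem h.1]; omega),
      hR _ (by rw [card_insert_of_notMem h.2]; omega), sub_zero]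

variable [DecidableEq G]

theorem card_filter_evalSet_swapDiff_le (R : Finset α → G) {U : Finset α} {i j : α} (hi : i ∈ U)
    (hj : j ∈ U) (m : ℕ) :
    #{Y ∈ (U \ {i, j}).powersetCard m | evalSet (swapDiff R i j) Y ≠ 0} ≤
      #{A ∈ U.powersetCard (m + 1) | evalSet R A ≠ 0} := by
  have hYij : ∀ Y ∈ (U \ {i, j}).powersetCard m, Y ⊆ U ∧ i ∉ Y ∧ j ∉ Y ∧ #Y = m := by
    intro Y hY
    rw [mem_powersetCard, subset_sdiff, disjoint_insert_right, disjoint_singleton_right] at hY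
    exact ⟨hY.1.1, hY.1.2.1, hY.1.2.2, hY.2⟩
  let φ (Y : Finset α) : Finset α := if evalSet R (insert i Y) ≠ 0 then insert i Y else insert j Y
  refine card_le_card_of_injOn φ (fun Y hY => ?_) (fun Y₁ hY₁ Y₂ hY₂ hφ => ?_)
  · rw [coe_filter] at hY
    obtain ⟨hY, hne⟩ := hY
    obtain ⟨hYU, hiY, hjY, rfl⟩ := hYij Y hY
    rw [evalSet_swapDiff R hiY hjY, sub_ne_zero] at hne
    simp only [φ, coe_filter, Set.mem_ofPred_eq, mem_powersetCard]
    split_ifs with h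
    · exact ⟨⟨insert_subset hi hYU, card_insert_of_notMem hiY⟩, h⟩
    · rw [not_not] at h
      exact ⟨⟨insert_subset hj hYU, card_insert_of_notMem hjY⟩, fun h' => hne (h.trans h'.symm)⟩
  · have hφ_sdiff : ∀ Y ∈ (U \ {i, j}).powersetCard m, φ Y \ {i, j} = Y := by
      intro Y hY
      obtain ⟨-, hiY, hjY, -⟩ := hYij Y hY
      simp only [φ]
      split_ifs <;> simp [insert_sdiff_of_mem, sdiff_eq_self_of_disjoint, hiY, hjY]
    rw [coe_filter] at hY₁ hY₂
    rw [← hφ_sdiff Y₁ hY₁.1, ← hφ_sdiff Y₂ hY₂.1, hφ]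

theorem choose_le_card_filter_evalSet_ne_zero {d k : ℕ} {U A : Finset α} {R : Finset α → G}
    (hR : ∀ S, d < #S → R S = 0) (hdk : d ≤ k) (hdkU : d + k ≤ #U)
    (hA : A ∈ U.powersetCard k) (hRA : evalSet R A ≠ 0) :
    (#U - 2 * d).choose (k - d) ≤ #{B ∈ U.powersetCard k | evalSet R B ≠ 0} := by
  induction d generalizing k U A R with
  | zero =>
    have inv : ExchangeInvariant (evalSet R) U k := fun Y _ _ i _ j _ hiY hjY =>
      sub_eq_zero.1 <| by
        rw [← evalSet_swapDiff R hiY hjY]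
        exact sum_eq_zero fun S _ => swapDiff_eq_zero hR i j (Nat.zero_le _)
    rw [inv.card_filter_ne_eq hA hRA]
    exact Nat.choose_sub_two_mul_le hdk (by omega)
  | succ d ih =>
    by_cases inv : ExchangeInvariant (evalSet R) U k
    · rw [inv.card_filter_ne_eq hA hRA]
      exact Nat.choose_sub_two_mul_le hdk (by omega)
    unfold ExchangeInvariant at inv
    push Not at inv
    obtain ⟨Y, hYU, rfl, i, hi, j, hj, hiY, hjY, hne⟩ := inv
    have hij : i ≠ j := by rintro rfl; exact hne rfl
    have hY : Y ∈ (U \ {i, j}).powersetCard #Y := by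
      rw [mem_powersetCard, subset_sdiff, disjoint_insert_right, disjoint_singleton_right]
      exact ⟨⟨hYU, hiY, hjY⟩, rfl⟩
    have hcard : #(U \ {i, j}) = #U - 2 := by
      rw [card_sdiff_of_subset (insert_subset hi (singleton_subset_iff.2 hj)), card_pair hij]
    calc (#U - 2 * (d + 1)).choose (#Y + 1 - (d + 1))
        = (#(U \ {i, j}) - 2 * d).choose (#Y - d) := by rw [hcard]; congr 1 <;> omega
      _ ≤ #{Y ∈ (U \ {i, j}).powersetCard #Y | evalSet (swapDiff R i j) Y ≠ 0} :=
        ih (fun S hS => swapDiff_eq_zero hR i j hS) (by omega) (by omega) hY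
          (by rwa [evalSet_swapDiff R hiY hjY, sub_ne_zero])
      _ ≤ _ := card_filter_evalSet_swapDiff_le R hi hj _

end Slice

theorem evalPoly_eq_evalSet {G : Type*} [AddCommMonoid G] {n : ℕ} (c : Finset (Fin n) → G)
    (x : Fin n → Bool) : evalPoly c x = evalSet c ({i | x i = true} : Finset (Fin n)) := by
  rw [evalPoly, evalSet, ← sum_filter]
  congr 1
  ext S
  simp [subset_iff]

theorem card_filter_evalSet_ne_zero_le_card_filter_evalPoly {G : Type*} [AddCommMonoid G]
    [DecidableEq G] {n : ℕ} (R : Finset (Fin n) → G) (k : ℕ) :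
    #{A ∈ (univ : Finset (Fin n)).powersetCard k | evalSet R A ≠ 0} ≤
      #{a : Fin n → Bool | hwt a = k ∧ evalPoly R a ≠ 0} := by
  let ind (A : Finset (Fin n)) (i : Fin n) : Bool := decide (i ∈ A)
  have hsupp (A : Finset (Fin n)) : ({i | ind A i = true} : Finset (Fin n)) = A := by
    ext
    simp [ind]
  refine card_le_card_of_injOn ind (fun A hA => ?_) fun A₁ _ A₂ _ h => ?_
  · simp only [coe_filter, mem_powersetCard, Set.mem_ofPred_eq] at hA ⊢
    rw [hwt, evalPoly_eq_evalSet, hsupp]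
    exact ⟨mem_univ _, hA.1.2, hA.2⟩
  · rw [← hsupp A₁, ← hsupp A₂, h]

theorem stmt2_general {G : Type*} [AddCommGroup G] [DecidableEq G] (n k d : ℕ)
    (hdk : d ≤ k) (hdnk : d + k ≤ n)
    (R : Finset (Fin n) → G) (hdeg : ∀ S : Finset (Fin n), d < S.card → R S = 0)
    (hnz : ∃ a : Fin n → Bool, hwt a = k ∧ evalPoly R a ≠ 0) :
    (n - 2*d).choose (k - d) ≤
      (Finset.univ.filter (fun a : Fin n → Bool => hwt a = k ∧ evalPoly R a ≠ 0)).card := by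
  obtain ⟨a, ha, hRa⟩ := hnz
  have hA : ({i | a i = true} : Finset (Fin n)) ∈ (univ : Finset (Fin n)).powersetCard k :=
    mem_powersetCard.2 ⟨subset_univ _, ha⟩
  have hdkU : d + k ≤ #(univ : Finset (Fin n)) := by rwa [card_univ, Fintype.card_fin]
  calc (n - 2 * d).choose (k - d) = (#(univ : Finset (Fin n)) - 2 * d).choose (k - d) := by
        rw [card_univ, Fintype.card_fin]
    _ ≤ #{A ∈ (univ : Finset (Fin n)).powersetCard k | evalSet R A ≠ 0} :=
        choose_le_card_filter_evalSet_ne_zero hdeg hdk hdkU hA (evalPoly_eq_evalSet R a ▸ hRa)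
    _ ≤ _ := card_filter_evalSet_ne_zero_le_card_filter_evalPoly R k

/-- DLSZ lemma over Hamming slices: if a degree-`d` polynomial over an Abelian group
does not vanish at some point of Hamming weight `k`, then it is non-zero at at least
`C(n-2d, k-d)` points of the weight-`k` slice. -/
theorem stmt2 {G : Type*} [AddCommGroup G] [DecidableEq G] (n k d : ℕ)
    (hk : k ≤ n) (hdk : d ≤ k) (hdnk : d + k ≤ n)
    (R : Finset (Fin n) → G) (hdeg : ∀ S : Finset (Fin n), d < S.card → R S = 0)
    (hnz : ∃ a : Fin n → Bool, hwt a = k ∧ evalPoly R a ≠ 0) :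
    (n - 2*d).choose (k - d) ≤
      (Finset.univ.filter (fun a : Fin n → Bool => hwt a = k ∧ evalPoly R a ≠ 0)).card :=
  stmt2_general n k d hdk hdnk R hdeg hnz
end

section
/- Fix a non-negative integer d and positive integers n ≥ d. For every interval I ⊆ {0,…,n} of consecutive integers of size d+1, there exists a set H ⊆ {0,1}^n of size at most (2(n+1))^d such that: (1) every point z ∈ H has Hamming weight in I; and (2) for every Abelian group G and every non-zero polynomial P of degree at most d mapping {0,1}^n to G, there is a point z ∈ H with P(z) ≠ 0. -/
open Finset

universe u

-- auxiliary lemmas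

lemma notmem_image_succAbove {m : ℕ} (i : Fin (m+1)) (T : Finset (Fin m)) :
    i ∉ T.image i.succAbove := by
  simp [Fin.succAbove_ne]

lemma preimage_image_inj {α β : Type*} [DecidableEq α] [DecidableEq β] {f : α → β} (hf : Function.Injective f)
    (T : Finset α) : (T.image f).preimage f hf.injOn = T :=
  coe_injective <| by simp [Set.preimage_image_eq _ hf]

lemma sum_split {M : Type*} [AddCommMonoid M] {m : ℕ} (i : Fin (m+1))
    (f : Finset (Fin (m+1)) → M) :
    ∑ S : Finset (Fin (m+1)), f S =
      (∑ T : Finset (Fin m), f (T.image i.succAbove)) +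
      (∑ T : Finset (Fin m), f (insert i (T.image i.succAbove))) := by
  classical
  rw [← Finset.sum_filter_add_sum_filter_not univ (fun S => i ∉ S)]
  congr 1
  · refine (Finset.sum_nbij' (fun T => T.image i.succAbove) (fun S => S.preimage i.succAbove
      (Fin.succAbove_right_injective.injOn)) ?_ ?_ ?_ ?_ ?_).symm
    · intro T _
      simp only [mem_filter, mem_univ, true_and, mem_image, not_exists]
      push_neg
      intro x _
      exact Fin.succAbove_ne i x
    · intro S _
      exact mem_univ _
    · intro T _
      exact preimage_image_inj Fin.succAbove_right_injective T
    · intro S hS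
      simp only [mem_filter] at hS
      rw [Finset.image_preimage]
      ext j
      simp only [mem_filter, Fin.range_succAbove, Set.mem_compl_iff, Set.mem_singleton_iff,
        and_iff_left_iff_imp]
      rintro hj rfl
      exact hS.2 hj
    · intro T _
      rfl
  · refine (Finset.sum_nbij' (fun T => insert i (T.image i.succAbove))
      (fun S => (S.erase i).preimage i.succAbove
      (Fin.succAbove_right_injective.injOn)) ?_ ?_ ?_ ?_ ?_).symm
    · intro T _
      simp only [mem_filter, mem_univ, true_and, not_not]
      exact mem_insert_self _ _
    · intro S _
      exact mem_univ _
    · intro T _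
      rw [Finset.erase_insert (notmem_image_succAbove i T)]
      exact preimage_image_inj Fin.succAbove_right_injective T
    · intro S hS
      simp only [mem_filter, not_not] at hS
      rw [Finset.image_preimage]
      have h2 : (S.erase i).filter (fun x => x ∈ Set.range i.succAbove) = S.erase i := by
        apply Finset.filter_true_of_mem
        intro j hj
        rw [Fin.range_succAbove]
        simpa using (Finset.ne_of_mem_erase hj)
      rw [h2, Finset.insert_erase hS.2]
    · intro S hS
      rfl

lemma eval_insertNth {G : Type*} [AddCommGroup G] {m : ℕ} (c : Finset (Fin (m+1)) → G)
    (i : Fin (m+1)) (b : Bool) (z : Fin m → Bool) :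
    evalPoly c (i.insertNth b z) =
      evalPoly (fun T => c (T.image i.succAbove)) z +
      (if b = true then evalPoly (fun T => c (insert i (T.image i.succAbove))) z else 0) := by
  classical
  unfold evalPoly
  rw [sum_split i]
  congr 1
  · apply Finset.sum_congr rfl
    intro T _
    congr 1
    simp only [eq_iff_iff]
    constructor
    · intro h k hk
      have := h (i.succAbove k) (Finset.mem_image_of_mem _ hk)
      rwa [Fin.insertNth_apply_succAbove] at this
    · intro h j hj
      obtain ⟨k, hk, rfl⟩ := Finset.mem_image.1 hj
      rw [Fin.insertNth_apply_succAbove]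
      exact h k hk
  · rcases b with _ | _
    · simp only [Bool.false_eq_true, if_false]
      apply Finset.sum_eq_zero
      intro T _
      rw [if_neg]
      intro h
      have := h i (mem_insert_self _ _)
      rw [Fin.insertNth_apply_same] at this
      exact Bool.false_ne_true this
    · simp only [if_true]
      apply Finset.sum_congr rfl
      intro T _
      congr 1
      simp only [eq_iff_iff]
      constructor
      · intro h k hk
        have := h (i.succAbove k) (Finset.mem_insert_of_mem (Finset.mem_image_of_mem _ hk))
        rwa [Fin.insertNth_apply_succAbove] at this
      · intro h j hj
        rcases Finset.mem_insert.1 hj with rfl | hj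
        · rw [Fin.insertNth_apply_same]
        · obtain ⟨k, hk, rfl⟩ := Finset.mem_image.1 hj
          rw [Fin.insertNth_apply_succAbove]
          exact h k hk

lemma hwt_insertNth {m : ℕ} (i : Fin (m+1)) (b : Bool) (z : Fin m → Bool) :
    hwt (i.insertNth b z) = hwt z + b.toNat := by
  classical
  unfold hwt
  have key : Finset.univ.filter (fun j => (i.insertNth (α := fun _ => Bool) b z) j = true) =
      (if b then insert i ((Finset.univ.filter (fun k => z k = true)).image i.succAbove)
       else (Finset.univ.filter (fun k => z k = true)).image i.succAbove) := by
    ext j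
    by_cases hj : j = i
    · subst hj
      simp only [Finset.mem_filter, Finset.mem_univ, true_and, Fin.insertNth_apply_same]
      rcases b with _ | _ <;>
        simp [notmem_image_succAbove, Finset.mem_insert, notmem_image_succAbove j
          (Finset.univ.filter (fun k => z k = true))]
    · obtain ⟨k, rfl⟩ := Fin.exists_succAbove_eq hj
      have hmem : i.succAbove k ∈
          (Finset.univ.filter (fun k => z k = true)).image i.succAbove ↔ z k = true := by
        constructor
        · intro h
          obtain ⟨k', hk', hkk⟩ := Finset.mem_image.1 h
          obtain rfl := Fin.succAbove_right_injective hkk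
          exact (Finset.mem_filter.1 hk').2
        · intro h
          exact Finset.mem_image_of_mem _ (Finset.mem_filter.2 ⟨Finset.mem_univ _, h⟩)
      rcases b with _ | _ <;>
        simp [Fin.insertNth_apply_succAbove, hmem, Finset.mem_insert, Fin.succAbove_ne i k]
  rw [key]
  have himg : ((Finset.univ.filter (fun k => z k = true)).image i.succAbove).card
      = (Finset.univ.filter (fun k => z k = true)).card :=
    Finset.card_image_of_injective _ Fin.succAbove_right_injective
  rcases b with _ | _
  · simpa using himg
  · simp only [if_true, Bool.toNat_true]
    rw [Finset.card_insert_of_notMem (notmem_image_succAbove i _), himg]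

lemma hwt_base {n a : ℕ} (ha : a ≤ n) :
    hwt (fun j : Fin n => decide (j.val < a)) = a := by
  classical
  unfold hwt
  have : (Finset.univ.filter (fun j : Fin n => decide (j.val < a) = true)).image Fin.val
      = Finset.range a := by
    ext k
    simp only [Finset.mem_image, Finset.mem_filter, Finset.mem_univ, true_and,
      decide_eq_true_eq, Finset.mem_range]
    constructor
    · rintro ⟨j, hj, rfl⟩; exact hj
    · intro hk; exact ⟨⟨k, lt_of_lt_of_le hk ha⟩, hk, rfl⟩
  have hcard := congrArg Finset.card this
  rwa [Finset.card_image_of_injective _ Fin.val_injective, Finset.card_range] at hcard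

lemma eval_const {G : Type u} [AddCommGroup G] {n : ℕ} (c : Finset (Fin n) → G)
    (h : ∀ S : Finset (Fin n), S.Nonempty → c S = 0) (x : Fin n → Bool) :
    evalPoly c x = c ∅ := by
  unfold evalPoly
  rw [Finset.sum_eq_single_of_mem ∅ (Finset.mem_univ _)]
  · simp
  · intro S _ hS
    rw [h S (Finset.nonempty_iff_ne_empty.2 hS)]
    simp

lemma exists_ne_zero {G : Type u} [AddCommGroup G] {n : ℕ} {c : Finset (Fin n) → G}
    (hc : c ≠ 0) : ∃ S, c S ≠ 0 := by
  by_contra h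
  push_neg at h
  exact hc (funext fun S => h S)

lemma pow_aux (x k : ℕ) (hx : 2 ≤ x) : x ^ (k + 1) + 1 ≤ (x + 2) ^ (k + 1) := by
  induction k with
  | zero => simpa using by omega
  | succ k ih =>
    calc x ^ (k + 2) + 1 ≤ x * (x ^ (k + 1) + 1) := by ring_nf; nlinarith
    _ ≤ (x + 2) * (x + 2) ^ (k + 1) := Nat.mul_le_mul (by omega) ih
    _ = (x + 2) ^ (k + 2) := by ring

lemma insert_image_preimage {m : ℕ} (i : Fin (m+1)) (S₀ : Finset (Fin (m+1))) (hi : i ∈ S₀) :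
    insert i (((S₀.erase i).preimage i.succAbove
      Fin.succAbove_right_injective.injOn).image i.succAbove) = S₀ := by
  classical
  rw [Finset.image_preimage]
  have h2 : (S₀.erase i).filter (fun x => x ∈ Set.range i.succAbove) = S₀.erase i := by
    apply Finset.filter_true_of_mem
    intro j hj
    rw [Fin.range_succAbove]
    simpa using (Finset.ne_of_mem_erase hj)
  rw [h2, Finset.insert_erase hi]

set_option maxHeartbeats 1000000 in
lemma key_lemma (d : ℕ) : ∀ n a : ℕ, a + d ≤ n →
    ∃ H : Finset (Fin n → Bool),
      H.card ≤ (2 * (n + 1)) ^ d ∧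
      (∀ z ∈ H, hwt z ∈ Finset.Icc a (a + d)) ∧
      (∀ (G : Type u) [AddCommGroup G] (c : Finset (Fin n) → G),
        (∀ S : Finset (Fin n), d < S.card → c S = 0) → c ≠ 0 →
          ∃ z ∈ H, evalPoly c z ≠ 0) := by
  induction d with
  | zero =>
    intro n a ha
    refine ⟨{fun j : Fin n => decide (j.val < a)}, by simp, ?_, ?_⟩
    · intro z hz
      rw [Finset.mem_singleton] at hz
      subst hz
      rw [hwt_base (by omega)]
      simp
    · intro G _ c hdeg hc
      refine ⟨_, Finset.mem_singleton_self _, ?_⟩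
      have hne : ∀ S : Finset (Fin n), S.Nonempty → c S = 0 := fun S hS =>
        hdeg S (Finset.card_pos.2 hS)
      rw [eval_const c hne]
      obtain ⟨S, hS⟩ := exists_ne_zero hc
      rcases Finset.eq_empty_or_nonempty S with rfl | hSne
      · exact hS
      · exact absurd (hne S hSne) hS
  | succ d ih =>
    intro n a ha
    obtain ⟨m, rfl⟩ : ∃ m, n = m + 1 := ⟨n - 1, by omega⟩
    obtain ⟨H', hcard', hwt', hhit'⟩ := ih m a (by omega)
    set w : Fin (m+1) → Bool := fun j => decide (j.val < a) with hw
    refine ⟨insert w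
      ((Finset.univ ×ˢ H' ×ˢ (Finset.univ : Finset Bool)).image
        (fun p : Fin (m+1) × (Fin m → Bool) × Bool => p.1.insertNth (α := fun _ => Bool) p.2.2 p.2.1)), ?_, ?_, ?_⟩
    · calc (insert w
      ((Finset.univ ×ˢ H' ×ˢ (Finset.univ : Finset Bool)).image
        (fun p : Fin (m+1) × (Fin m → Bool) × Bool => p.1.insertNth (α := fun _ => Bool) p.2.2 p.2.1))).card ≤ ((Finset.univ ×ˢ H' ×ˢ (Finset.univ : Finset Bool)).image
            (fun p : Fin (m+1) × (Fin m → Bool) × Bool => p.1.insertNth (α := fun _ => Bool) p.2.2 p.2.1)).card + 1 :=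
          Finset.card_insert_le _ _
      _ ≤ (Finset.univ ×ˢ H' ×ˢ (Finset.univ : Finset Bool)).card + 1 :=
          Nat.add_le_add_right (Finset.card_image_le) 1
      _ = (m + 1) * (H'.card * 2) + 1 := by
          simp [Finset.card_product]
      _ ≤ (m + 1) * ((2 * (m + 1)) ^ d * 2) + 1 := by
          have := Nat.mul_le_mul_right 2 hcard'
          exact Nat.add_le_add_right (Nat.mul_le_mul_left _ this) 1
      _ = (2 * (m + 1)) ^ (d + 1) + 1 := by ring
      _ ≤ (2 * (m + 1) + 2) ^ (d + 1) := pow_aux _ _ (by omega)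
      _ = (2 * (m + 1 + 1)) ^ (d + 1) := by ring
    · intro z hz
      rw [Finset.mem_insert] at hz
      rcases hz with rfl | hz
      · rw [hw, hwt_base (by omega)]
        simp only [Finset.mem_Icc]
        omega
      · obtain ⟨p, hp, rfl⟩ := Finset.mem_image.1 hz
        rw [Finset.mem_product] at hp
        have hp2 := hp.2
        rw [Finset.mem_product] at hp2
        have hw2 := hwt' p.2.1 hp2.1
        rw [Finset.mem_Icc] at hw2
        rw [hwt_insertNth]
        simp only [Finset.mem_Icc]
        rcases p.2.2 with _ | _ <;> simp <;> omega
    · intro G _ c hdeg hc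
      by_cases hex : ∃ S : Finset (Fin (m+1)), S.Nonempty ∧ c S ≠ 0
      · obtain ⟨S₀, hS₀ne, hS₀⟩ := hex
        obtain ⟨i, hi⟩ := hS₀ne
        set c₁ : Finset (Fin m) → G := fun T => c (insert i (T.image i.succAbove)) with hc₁def
        have hdeg₁ : ∀ T : Finset (Fin m), d < T.card → c₁ T = 0 := by
          intro T hT
          apply hdeg
          rw [Finset.card_insert_of_notMem (notmem_image_succAbove i T),
            Finset.card_image_of_injective _ Fin.succAbove_right_injective]
          omega
        have hc₁ : c₁ ≠ 0 := by
          intro h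
          apply hS₀
          have hT := congrFun h ((S₀.erase i).preimage i.succAbove
            Fin.succAbove_right_injective.injOn)
          rw [hc₁def] at hT
          simpa [insert_image_preimage i S₀ hi] using hT
        obtain ⟨z, hzmem, hz0⟩ := hhit' G c₁ hdeg₁ hc₁
        have hmem : ∀ b : Bool, i.insertNth b z ∈ insert w
            ((Finset.univ ×ˢ H' ×ˢ (Finset.univ : Finset Bool)).image
              (fun p : Fin (m+1) × (Fin m → Bool) × Bool => p.1.insertNth (α := fun _ => Bool) p.2.2 p.2.1)) := by
          intro b
          apply Finset.mem_insert_of_mem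
          apply Finset.mem_image.2
          exact ⟨(i, z, b), by simp [Finset.mem_product, hzmem], rfl⟩
        by_cases h0 : evalPoly c (i.insertNth false z) = 0
        · refine ⟨i.insertNth true z, hmem true, ?_⟩
          rw [eval_insertNth] at h0 ⊢
          simp only [Bool.false_eq_true, if_false, add_zero] at h0
          rw [h0, if_pos rfl, zero_add]
          exact hz0
        · exact ⟨i.insertNth false z, hmem false, h0⟩
      · push_neg at hex
        refine ⟨w, Finset.mem_insert_self _ _, ?_⟩
        have hne : ∀ S : Finset (Fin (m+1)), S.Nonempty → c S = 0 := fun S hS => hex S hS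
        rw [eval_const c hne]
        obtain ⟨S, hS⟩ := exists_ne_zero hc
        rcases Finset.eq_empty_or_nonempty S with rfl | hSne
        · exact hS
        · exact absurd (hne S hSne) hS

/-- For every interval `{a, …, a+d} ⊆ {0, …, n}` there is a hitting set
`H ⊆ {0,1}ⁿ` of size at most `(2(n+1))^d` consisting of points with Hamming weight
in the interval, such that every non-zero degree-`d` polynomial over every Abelian
group is non-zero at some point of `H`. -/
theorem stmt4 (n d a : ℕ) (hd : d ≤ n) (hn : 0 < n) (ha : a + d ≤ n) :
    ∃ H : Finset (Fin n → Bool),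
      H.card ≤ (2 * (n + 1)) ^ d ∧
      (∀ z ∈ H, hwt z ∈ Finset.Icc a (a + d)) ∧
      (∀ (G : Type u) [AddCommGroup G] (c : Finset (Fin n) → G),
        (∀ S : Finset (Fin n), d < S.card → c S = 0) → c ≠ 0 →
          ∃ z ∈ H, evalPoly c z ≠ 0) :=
  key_lemma d n a ha
end

section
/- Fix a degree parameter d ≥ 0 and a dimension k divisible by 10(d+1). There exist positive integer weights w_1,…,w_k with total weight W = Σ w_j, and a set S ⊆ {0,1}^k of size at most O_d(k^d), such that: (1) every point y ∈ S satisfies |Σ_j w_j y_j − W/2| ≤ W/2^{Ω(k/(d+1))}; and (2) for every Abelian group G and every non-zero polynomial Q of degree at most d from {0,1}^k to G, there is a point z ∈ S with Q(z) ≠ 0. -/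
/-!
Split the `k = 10(d+1)m` coordinates into `m` levels of `10(d+1)` consecutive coordinates and
give the coordinates of level `l` the weight `2^l`. For every `T` with `|T| ≤ d` choose a gadget:
for each `x ∈ T` of level `l ≥ 1` two fresh coordinates `P x` of level `l - 1`, so that
`w(P x) = w x`, and a set `A` of fresh coordinates such that `A ∪ T` contains exactly half of every
level. The `2^|T|` points `A ∪ V ∪ ⋃_{x ∈ T \ V} P x`, `V ⊆ T`, then have weight `W/2` up to the at
most `d` coordinates of `T` of level `0`, which have no partners.

The alternating sum `Σ_{V ⊆ T} (-1)^|V| Q(point V)` is `±c_T` plus a combination of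
coefficients `c_S` where `S ⊋ T` or some `x ∈ T` is replaced by a coordinate of lower level. So the
potential `Σ_{j ∈ S} (m - level j)` of every such `S` exceeds that of `T`, and if `Q` vanished on
all points, its non-zero coefficient of maximal potential would have to vanish.
-/

open Finset

universe u

theorem Finset.sum_Icc_neg_one_pow_card {α : Type*} [DecidableEq α] (s t : Finset α) :
    ∑ V ∈ Icc s t, (-1 : ℤ) ^ #V = if s = t then (-1) ^ #s else 0 := by
  by_cases hst : s ⊆ t
  · have hdisj : ∀ x ∈ (t \ s).powerset, Disjoint s x := fun x hx =>
      disjoint_sdiff.mono_right (mem_powerset.1 hx)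
    rw [Icc_eq_image_powerset hst, sum_image fun x hx y hy hxy => by
        simpa only [union_sdiff_left, (hdisj x hx).sdiff_eq_right, (hdisj y hy).sdiff_eq_right]
          using congr_arg (· \ s) hxy, sum_congr rfl fun x hx => by
        rw [card_union_of_disjoint (hdisj x hx), pow_add], ← mul_sum,
      sum_powerset_neg_one_pow_card]
    simp only [sdiff_eq_empty_iff_subset, mul_ite, mul_one, mul_zero]
    exact if_congr ⟨hst.antisymm, fun h => h ▸ subset_rfl⟩ rfl rfl
  · rw [Icc_eq_empty_iff.2 hst, sum_empty, if_neg (fun h => hst h.le)]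

theorem Finset.exists_pairwiseDisjoint_subset_card_eq {ι α : Type*} [DecidableEq α]
    (F : Finset α) (s : Finset ι) (n : ι → ℕ) (hn : ∑ i ∈ s, n i ≤ #F) :
    ∃ B : ι → Finset α, (∀ i ∈ s, B i ⊆ F ∧ #(B i) = n i) ∧ (s : Set ι).PairwiseDisjoint B := by
  classical
  induction s using Finset.induction_on with
  | empty => exact ⟨fun _ => ∅, by simp, by simp⟩
  | @insert a s ha ih =>
    rw [sum_insert ha] at hn
    obtain ⟨B, hBF, hBdisj⟩ := ih (by omega)
    have hcard : #(s.biUnion B) = ∑ i ∈ s, n i := by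
      rw [card_biUnion hBdisj]; exact sum_congr rfl fun i hi => (hBF i hi).2
    obtain ⟨Ba, hBaF, hBa⟩ := exists_subset_card_eq (s := F \ s.biUnion B) (n := n a) (by
      have := le_card_sdiff (s.biUnion B) F; omega)
    have hupd : ∀ i ∈ s, Function.update B a Ba i = B i := fun i hi =>
      Function.update_of_ne (ne_of_mem_of_not_mem hi ha) _ _
    refine ⟨Function.update B a Ba, ?_, ?_⟩
    · simp only [mem_insert, forall_eq_or_imp, Function.update_self]
      exact ⟨⟨hBaF.trans sdiff_subset, hBa⟩, fun i hi => hupd i hi ▸ hBF i hi⟩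
    · rw [coe_insert, Set.pairwiseDisjoint_insert]
      refine ⟨fun i hi j hj hij => ?_, fun j hj _ => ?_⟩
      · show Disjoint _ _
        rw [hupd i hi, hupd j hj]; exact hBdisj hi hj hij
      · rw [Function.update_self, hupd j hj]
        exact disjoint_of_subset_left hBaF (disjoint_sdiff_self_left.mono_right
          (subset_biUnion_of_mem B hj))

theorem Finset.card_filter_card_le_le {α : Type*} [Fintype α] (d : ℕ)
    (hα : 0 < Fintype.card α) : #{T : Finset α | #T ≤ d} ≤ (d + 1) * Fintype.card α ^ d := by
  classical
  calc #{T : Finset α | #T ≤ d}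
      ≤ #((range (d + 1)).biUnion fun i => powersetCard i (univ : Finset α)) :=
        card_le_card fun T hT => mem_biUnion.2
          ⟨#T, mem_range.2 (Nat.lt_succ_of_le (mem_filter.1 hT).2), by simp⟩
    _ ≤ ∑ i ∈ range (d + 1), #(powersetCard i (univ : Finset α)) := card_biUnion_le
    _ ≤ ∑ _i ∈ range (d + 1), Fintype.card α ^ d := sum_le_sum fun i hi => by
        rw [card_powersetCard, card_univ]
        exact (Nat.choose_le_pow _ _).trans
          (Nat.pow_le_pow_right hα (Nat.lt_succ_iff.1 (mem_range.1 hi)))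
    _ = (d + 1) * Fintype.card α ^ d := by simp

theorem eq_zero_of_triangular {ι G β : Type*} [Fintype ι] [AddCommGroup G] [LinearOrder β]
    (ψ : ι → β) (N : ι → ι → ℤ) (c : ι → G)
    (h : ∀ i, c i ≠ 0 → IsUnit (N i i) ∧ ∑ j, N i j • c j = 0 ∧
      ∀ j, j ≠ i → N i j ≠ 0 → c j ≠ 0 → ψ i < ψ j) : c = 0 := by
  classical
  by_contra hc
  obtain ⟨i, hi, hmax⟩ := exists_max_image {i | c i ≠ 0} ψ
    (by simpa [Finset.Nonempty, funext_iff] using hc)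
  obtain ⟨hunit, hsum, htri⟩ := h i (mem_filter.1 hi).2
  rw [← add_sum_erase _ _ (mem_univ i), sum_eq_zero, add_zero, hunit.smul_eq_zero] at hsum
  · exact (mem_filter.1 hi).2 hsum
  intro j hj
  by_contra hne
  have hN : N i j ≠ 0 := fun h0 => hne (by rw [h0, zero_smul])
  have hcj : c j ≠ 0 := fun h0 => hne (by rw [h0, smul_zero])
  exact (htri j (ne_of_mem_erase hj) hN hcj).not_ge (hmax j (by simpa using hcj))

lemma evalPoly_decide_mem {n : ℕ} {G : Type*} [AddCommMonoid G] (c : Finset (Fin n) → G)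
    (X : Finset (Fin n)) :
    evalPoly c (fun j => decide (j ∈ X)) = ∑ S, if S ⊆ X then c S else 0 := by
  simp [evalPoly, subset_iff]

section Gadget

variable {α : Type*} [DecidableEq α]

structure IsGadget (T A : Finset α) (P : α → Finset α) : Prop where
  disjoint_A_T : Disjoint A T
  disjoint_P_T : ∀ x ∈ T, Disjoint (P x) T
  disjoint_P_A : ∀ x ∈ T, Disjoint (P x) A
  pairwiseDisjoint_P : (T : Set α).PairwiseDisjoint P

/-- The image of `V ⊆ T` under the substitution `y_x = v_x` for `x ∈ T`, `y_j = 1 - v_x` for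
`j ∈ P x`, `y_j = 1` on `A` and `y_j = 0` elsewhere. -/
def gadgetPoint (T A : Finset α) (P : α → Finset α) (V : Finset α) : Finset α :=
  A ∪ V ∪ (T \ V).biUnion P

def gadgetCoeff (T A : Finset α) (P : α → Finset α) (S : Finset α) : ℤ :=
  ∑ V ∈ T.powerset, if S ⊆ gadgetPoint T A P V then (-1) ^ #V else 0

lemma sum_gadgetCoeff_smul [Fintype α] {G : Type*} [AddCommGroup G] (T A : Finset α)
    (P : α → Finset α) (c : Finset α → G) :
    ∑ S, gadgetCoeff T A P S • c S =
      ∑ V ∈ T.powerset, (-1 : ℤ) ^ #V • ∑ S, if S ⊆ gadgetPoint T A P V then c S else 0 := by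
  simp only [gadgetCoeff, sum_smul, smul_sum, ite_smul, zero_smul, smul_ite, smul_zero]
  exact sum_comm

namespace IsGadget

variable {T A : Finset α} {P : α → Finset α}

lemma eq_of_mem_of_mem (g : IsGadget T A P) {x y j : α}
    (hx : x ∈ T) (hy : y ∈ T) (hjx : j ∈ P x) (hjy : j ∈ P y) : x = y := by
  by_contra hxy
  exact disjoint_left.1 (g.pairwiseDisjoint_P hx hy hxy) hjx hjy

lemma subset_gadgetPoint_iff (g : IsGadget T A P) {V : Finset α} (hV : V ⊆ T) (S : Finset α) :
    S ⊆ gadgetPoint T A P V ↔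
      S \ (T ∪ T.biUnion P) ⊆ A ∧ S ∩ T ⊆ V ∧ V ⊆ T \ {x ∈ T | ¬Disjoint S (P x)} := by
  have hAT := disjoint_left.1 g.disjoint_A_T
  have hPT := fun x hx => disjoint_left.1 (g.disjoint_P_T x hx)
  have hPA := fun x hx => disjoint_left.1 (g.disjoint_P_A x hx)
  have hPP := fun {x y j} => g.eq_of_mem_of_mem (x := x) (y := y) (j := j)
  simp only [gadgetPoint, subset_iff, mem_union, mem_sdiff, mem_biUnion, mem_inter, mem_filter,
    not_disjoint_iff]
  grind

lemma gadgetCoeff_eq (g : IsGadget T A P) (S : Finset α) :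
    gadgetCoeff T A P S =
      if S \ (T ∪ T.biUnion P) ⊆ A ∧ S ∩ T = T \ {x ∈ T | ¬Disjoint S (P x)}
      then (-1) ^ #(S ∩ T) else 0 := by
  rw [gadgetCoeff, ← sum_filter]
  by_cases hA : S \ (T ∪ T.biUnion P) ⊆ A
  · have hIcc : {V ∈ T.powerset | S ⊆ gadgetPoint T A P V} =
        Icc (S ∩ T) (T \ {x ∈ T | ¬Disjoint S (P x)}) := by
      ext V
      simp only [mem_filter, mem_powerset, mem_Icc]
      constructor
      · rintro ⟨hV, hS⟩
        exact ((g.subset_gadgetPoint_iff hV S).1 hS).2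
      · rintro ⟨hSV, hVD⟩
        have hV := hVD.trans sdiff_subset
        exact ⟨hV, (g.subset_gadgetPoint_iff hV S).2 ⟨hA, hSV, hVD⟩⟩
    simp only [hIcc, sum_Icc_neg_one_pow_card, hA, true_and]
  · rw [if_neg (fun h => hA h.1), sum_eq_zero]
    intro V hV
    obtain ⟨hVT, hS⟩ := mem_filter.1 hV
    exact absurd ((g.subset_gadgetPoint_iff (mem_powerset.1 hVT) S).1 hS).1 hA

lemma gadgetCoeff_self (g : IsGadget T A P) : gadgetCoeff T A P T = (-1) ^ #T := by
  have hD : {x ∈ T | ¬Disjoint T (P x)} = ∅ :=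
    filter_false_of_mem fun x hx => not_not.2 (g.disjoint_P_T x hx).symm
  have hA : T \ (T ∪ T.biUnion P) ⊆ A := by
    rw [sdiff_eq_empty_iff_subset.2 subset_union_left]; exact empty_subset A
  rw [g.gadgetCoeff_eq, hD, sdiff_empty, inter_self, if_pos ⟨hA, rfl⟩]

lemma sum_lt_sum_of_gadgetCoeff_ne_zero (g : IsGadget T A P) (f : α → ℕ) (hf : ∀ j, 0 < f j)
    (hfP : ∀ x ∈ T, ∀ j ∈ P x, f x < f j) {S : Finset α} (hST : S ≠ T)
    (hS : gadgetCoeff T A P S ≠ 0) : ∑ j ∈ T, f j < ∑ j ∈ S, f j := by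
  set D := {x ∈ T | ¬Disjoint S (P x)}
  have hy : S ∩ T = T \ D := by
    rw [g.gadgetCoeff_eq] at hS
    by_contra h
    exact hS (if_neg fun h' => h h'.2)
  rcases D.eq_empty_or_nonempty with hD | hD
  · rw [hD, sdiff_empty] at hy
    have hTS : T ⊂ S := ssubset_of_subset_of_ne (hy ▸ inter_subset_left) hST.symm
    obtain ⟨i, hiS, hiT⟩ := exists_of_ssubset hTS
    exact sum_lt_sum_of_subset hTS.subset hiS hiT (hf i) fun _ _ _ => Nat.zero_le _
  have hDT : D ⊆ T := filter_subset _ _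
  have hpair : (D : Set α).PairwiseDisjoint fun x => S ∩ P x := fun x hx y hy hxy =>
    (g.pairwiseDisjoint_P (hDT hx) (hDT hy) hxy).mono inter_subset_right inter_subset_right
  have hdisj : Disjoint (S ∩ T) (D.biUnion fun x => S ∩ P x) := by
    rw [disjoint_biUnion_right]
    exact fun x hx => (g.disjoint_P_T x (hDT hx)).symm.mono inter_subset_right inter_subset_right
  have hsub : S ∩ T ∪ D.biUnion (fun x => S ∩ P x) ⊆ S :=
    union_subset inter_subset_left (biUnion_subset.2 fun _ _ => inter_subset_left)
  have hlt : ∀ x ∈ D, f x < ∑ j ∈ S ∩ P x, f j := by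
    intro x hx
    obtain ⟨j, hjS, hjP⟩ := not_disjoint_iff.1 (mem_filter.1 hx).2
    exact (hfP x (hDT hx) j hjP).trans_le
      (single_le_sum (fun _ _ => Nat.zero_le _) (mem_inter.2 ⟨hjS, hjP⟩))
  calc ∑ j ∈ T, f j = ∑ j ∈ S ∩ T, f j + ∑ x ∈ D, f x := by
        rw [hy, sum_sdiff hDT]
    _ < ∑ j ∈ S ∩ T, f j + ∑ x ∈ D, ∑ j ∈ S ∩ P x, f j := by
        gcongr ?_ + ?_
        exact sum_lt_sum_of_nonempty hD hlt
    _ = ∑ j ∈ S ∩ T ∪ D.biUnion (fun x => S ∩ P x), f j := by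
        rw [sum_union hdisj, sum_biUnion hpair]
    _ ≤ ∑ j ∈ S, f j := sum_le_sum_of_subset hsub

lemma abs_sum_gadgetPoint_sub_le (g : IsGadget T A P) (w : α → ℝ)
    (hw : ∀ x ∈ T, |∑ j ∈ P x, w j - w x| ≤ 1) {V : Finset α} (hV : V ⊆ T) :
    |∑ j ∈ gadgetPoint T A P V, w j - ∑ j ∈ A ∪ T, w j| ≤ #T := by
  have hAV : Disjoint A V := g.disjoint_A_T.mono_right hV
  have hAVP : Disjoint (A ∪ V) ((T \ V).biUnion P) := by
    rw [disjoint_biUnion_right]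
    intro x hx
    have hxT := (mem_sdiff.1 hx).1
    exact disjoint_union_left.2
      ⟨(g.disjoint_P_A x hxT).symm, ((g.disjoint_P_T x hxT).mono_right hV).symm⟩
  have hpt : ∑ j ∈ gadgetPoint T A P V, w j - ∑ j ∈ A ∪ T, w j =
      ∑ x ∈ T \ V, (∑ j ∈ P x, w j - w x) := by
    rw [gadgetPoint, sum_union hAVP, sum_union hAV, sum_biUnion (g.pairwiseDisjoint_P.subset
      (by simp)), sum_union g.disjoint_A_T, ← sum_sdiff hV, sum_sub_distrib]
    ring
  calc |∑ j ∈ gadgetPoint T A P V, w j - ∑ j ∈ A ∪ T, w j|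
      ≤ ∑ x ∈ T \ V, |∑ j ∈ P x, w j - w x| := hpt ▸ abs_sum_le_sum_abs _ _
    _ ≤ ∑ x ∈ T \ V, (1 : ℝ) := sum_le_sum fun x hx => hw x (mem_sdiff.1 hx).1
    _ ≤ #T := by
        rw [sum_const, nsmul_one]
        exact_mod_cast card_le_card sdiff_subset

end IsGadget

variable [Fintype α]

def gadgetPoints (d : ℕ) (A : Finset α → Finset α) (P : Finset α → α → Finset α) :
    Finset (α → Bool) :=
  ({T | #T ≤ d} : Finset (Finset α)).biUnion fun T =>
    T.powerset.image fun V j => decide (j ∈ gadgetPoint T (A T) (P T) V)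

lemma mem_gadgetPoints {d : ℕ} {A : Finset α → Finset α} {P : Finset α → α → Finset α}
    {y : α → Bool} :
    y ∈ gadgetPoints d A P ↔
      ∃ T : Finset α, #T ≤ d ∧
        ∃ V ⊆ T, (fun j => decide (j ∈ gadgetPoint T (A T) (P T) V)) = y := by
  simp [gadgetPoints]

lemma card_gadgetPoints_le (d : ℕ) (A : Finset α → Finset α) (P : Finset α → α → Finset α)
    (hα : 0 < Fintype.card α) : #(gadgetPoints d A P) ≤ (d + 1) * Fintype.card α ^ d * 2 ^ d :=
  calc #(gadgetPoints d A P) ≤ ∑ T ∈ ({T | #T ≤ d} : Finset (Finset α)), 2 ^ d :=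
        card_biUnion_le.trans (sum_le_sum fun T hT => card_image_le.trans <| by
          rw [card_powerset]; exact Nat.pow_le_pow_right two_pos (mem_filter.1 hT).2)
    _ ≤ (d + 1) * Fintype.card α ^ d * 2 ^ d := by
        rw [sum_const, smul_eq_mul]; exact Nat.mul_le_mul_right _ (card_filter_card_le_le d hα)

end Gadget

theorem exists_mem_gadgetPoints_evalPoly_ne_zero {n d : ℕ} {G : Type*} [AddCommGroup G]
    {A : Finset (Fin n) → Finset (Fin n)} {P : Finset (Fin n) → Fin n → Finset (Fin n)}
    (f : Fin n → ℕ) (hf : ∀ j, 0 < f j)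
    (hgad : ∀ T : Finset (Fin n), #T ≤ d →
      IsGadget T (A T) (P T) ∧ ∀ x ∈ T, ∀ j ∈ P T x, f x < f j)
    {c : Finset (Fin n) → G} (hdeg : ∀ T : Finset (Fin n), d < #T → c T = 0) (hc : c ≠ 0) :
    ∃ z ∈ gadgetPoints d A P, evalPoly c z ≠ 0 := by
  by_contra! hvan
  refine hc (eq_zero_of_triangular (fun T => ∑ j ∈ T, f j) (fun T => gadgetCoeff T (A T) (P T)) c
    fun T hT => ?_)
  have hTd : #T ≤ d := not_lt.1 fun h => hT (hdeg T h)
  obtain ⟨g, hfP⟩ := hgad T hTd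
  refine ⟨?_, ?_, fun S hST hS _ => g.sum_lt_sum_of_gadgetCoeff_ne_zero f hf hfP hST hS⟩
  · rw [g.gadgetCoeff_self]
    exact isUnit_neg_one.pow _
  · rw [sum_gadgetCoeff_smul]
    refine sum_eq_zero fun V hV => ?_
    rw [← evalPoly_decide_mem, hvan _ (mem_gadgetPoints.2 ⟨T, hTd, V, mem_powerset.1 hV, rfl⟩),
      smul_zero]

section Levels

def level (h : ℕ) {k : ℕ} (j : Fin k) : ℕ := j / (2 * h)

variable {h m k : ℕ}

lemma level_lt (hk : k = 2 * h * m) (j : Fin k) : level h j < m :=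
  Nat.div_lt_of_lt_mul (hk ▸ j.isLt)

lemma card_level_eq (hk : k = 2 * h * m) {l : ℕ} (hl : l < m) :
    #{j : Fin k | level h j = l} = 2 * h := by
  rcases Nat.eq_zero_or_pos h with rfl | hpos
  · obtain rfl : k = 0 := by simp [hk]
    simp
  have hlm : 2 * h * l + 2 * h ≤ k := by rw [hk]; nlinarith
  have hIco : ({j | level h j = l} : Finset (Fin k)).map Fin.valEmbedding =
      Ico (2 * h * l) (2 * h * l + 2 * h) := by
    ext x
    simp only [level, mem_map, mem_filter, mem_univ, true_and, Fin.valEmbedding_apply, mem_Ico,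
      Nat.div_eq_iff (by omega : 0 < 2 * h), mul_comm l]
    constructor
    · rintro ⟨j, hj, rfl⟩
      omega
    · rintro ⟨h1, h2⟩
      exact ⟨⟨x, by omega⟩, by dsimp only; omega, rfl⟩
  rw [← card_map, hIco, Nat.card_Ico, Nat.add_sub_cancel_left]

lemma sum_level_eq (hk : k = 2 * h * m) (H : Finset (Fin k)) (g : ℕ → ℝ) :
    ∑ j ∈ H, g (level h j) = ∑ l ∈ range m, #{j ∈ H | level h j = l} * g l := by
  rw [← sum_fiberwise_of_maps_to (g := level h) (t := range m)
    fun j _ => mem_range.2 (level_lt hk j)]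
  refine sum_congr rfl fun l _ => ?_
  rw [sum_congr rfl fun j hj => by rw [(mem_filter.1 hj).2], sum_const, nsmul_eq_mul]

lemma two_mul_sum_level_eq_sum_univ (hk : k = 2 * h * m) {H : Finset (Fin k)}
    (hH : ∀ l < m, #{j ∈ H | level h j = l} = h) (g : ℕ → ℝ) :
    2 * ∑ j ∈ H, g (level h j) = ∑ j : Fin k, g (level h j) := by
  rw [sum_level_eq hk H, sum_level_eq hk univ, mul_sum]
  refine sum_congr rfl fun l hl => ?_
  rw [hH l (mem_range.1 hl), card_level_eq hk (mem_range.1 hl)]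
  push_cast; ring

lemma sum_univ_two_pow_level (hk : k = 2 * h * m) :
    ∑ j : Fin k, (2 : ℝ) ^ level h j = 2 * h * (2 ^ m - 1) := by
  rw [sum_level_eq hk univ (2 ^ ·), sum_congr rfl fun l hl => by
    rw [card_level_eq hk (mem_range.1 hl)], ← mul_sum, geom_sum_eq (by norm_num)]
  push_cast; ring

lemma exists_level_allocation {d : ℕ} (hk : k = 2 * h * m) (hd : 3 * d ≤ h)
    (T : Finset (Fin k)) (hT : #T ≤ d) {l : ℕ} (hl : l < m) :
    ∃ (A : Finset (Fin k)) (Q : Fin k → Finset (Fin k)),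
      (∀ j ∈ A, level h j = l ∧ j ∉ T) ∧ #A = h - #{x ∈ T | level h x = l} ∧
      (∀ x ∈ T, level h x = l + 1 →
        (∀ j ∈ Q x, level h j = l ∧ j ∉ T) ∧ #(Q x) = 2 ∧ Disjoint (Q x) A) ∧
      ∀ x ∈ T, ∀ y ∈ T, level h x = l + 1 → level h y = l + 1 → x ≠ y → Disjoint (Q x) (Q y) := by
  -- `none` indexes `A`, and `some x` the partners of `x`.
  let s : Finset (Option (Fin k)) := insert none ({x ∈ T | level h x = l + 1}.map .some)
  let n : Option (Fin k) → ℕ := fun i => i.elim (h - #{x ∈ T | level h x = l}) fun _ => 2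
  have hsum : ∑ i ∈ s, n i ≤ #(({j | level h j = l} : Finset (Fin k)) \ T) := by
    have hF := card_level_eq hk hl ▸ le_card_sdiff T {j : Fin k | level h j = l}
    rw [sum_insert (by simp), sum_map]
    simp only [n, Option.elim, Function.Embedding.some_apply, sum_const, smul_eq_mul]
    have := (card_filter_le T (level h · = l + 1)).trans hT
    omega
  obtain ⟨B, hB, hBdisj⟩ := exists_pairwiseDisjoint_subset_card_eq _ s n hsum
  have hmem : ∀ i ∈ s, ∀ j ∈ B i, level h j = l ∧ j ∉ T := fun i hi j hj => by
    simpa using (hB i hi).1 hj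
  have hnone : none ∈ s := mem_insert_self _ _
  have hsome : ∀ x ∈ T, level h x = l + 1 → some x ∈ s := fun x hx hxl => by simp [s, hx, hxl]
  exact ⟨B none, (B <| some ·), hmem none hnone, (hB none hnone).2,
    fun x hx hxl => ⟨hmem _ (hsome x hx hxl), (hB _ (hsome x hx hxl)).2,
      hBdisj (hsome x hx hxl) hnone (by simp)⟩,
    fun x hx y hy hxl hyl hxy => hBdisj (hsome x hx hxl) (hsome y hy hyl) (by simpa using hxy)⟩

lemma exists_levelwise_allocation {d : ℕ} (hk : k = 2 * h * m) (hd : 3 * d ≤ h)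
    (T : Finset (Fin k)) (hT : #T ≤ d) :
    ∃ (A : ℕ → Finset (Fin k)) (P : Fin k → Finset (Fin k)),
      (∀ l < m, ∀ j ∈ A l, level h j = l ∧ j ∉ T) ∧
      (∀ l < m, #(A l) = h - #{x ∈ T | level h x = l}) ∧
      (∀ x ∈ T, ∀ j ∈ P x, level h j + 1 = level h x ∧ j ∉ T) ∧
      (∀ x ∈ T, level h x ≠ 0 → #(P x) = 2) ∧
      (∀ x ∈ T, ∀ l < m, Disjoint (P x) (A l)) ∧
      (T : Set (Fin k)).PairwiseDisjoint P := by
  choose! A Q hA hAcard hQ hQQ using fun l (hl : l < m) => exists_level_allocation hk hd T hT hl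
  have hlt : ∀ x, level h x - 1 < m := fun x => by have := level_lt hk x; omega
  have hQ' : ∀ x ∈ T, level h x ≠ 0 →
      (∀ j ∈ Q (level h x - 1) x, level h j = level h x - 1 ∧ j ∉ T) ∧
        #(Q (level h x - 1) x) = 2 ∧ Disjoint (Q (level h x - 1) x) (A (level h x - 1)) :=
    fun x hx hx0 => hQ (level h x - 1) (hlt x) x hx (by omega)
  refine ⟨A, fun x => if level h x = 0 then ∅ else Q (level h x - 1) x, hA, hAcard,
    fun x hx j hj => ?_, fun x hx hx0 => ?_, fun x hx l hl => ?_, fun x hx y hy hxy => ?_⟩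
  · dsimp only at hj
    split_ifs at hj with hx0
    · exact absurd hj (notMem_empty j)
    · have := (hQ' x hx hx0).1 j hj
      exact ⟨by omega, this.2⟩
  · simpa [hx0] using (hQ' x hx hx0).2.1
  · dsimp only
    split_ifs with hx0
    · exact disjoint_empty_left _
    refine disjoint_left.2 fun j hj hjA => ?_
    obtain rfl : level h x - 1 = l := ((hQ' x hx hx0).1 j hj).1.symm.trans (hA l hl j hjA).1
    exact disjoint_left.1 (hQ' x hx hx0).2.2 hj hjA
  · change Disjoint (ite _ _ _) (ite _ _ _)
    split_ifs with hx0 hy0 hy0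
    · exact disjoint_empty_left _
    · exact disjoint_empty_left _
    · exact disjoint_empty_right _
    refine disjoint_left.2 fun j hjx hjy => ?_
    have hyx : level h y - 1 = level h x - 1 :=
      ((hQ' y hy hy0).1 j hjy).1.symm.trans ((hQ' x hx hx0).1 j hjx).1
    rw [hyx] at hjy
    exact disjoint_left.1 (hQQ _ (hlt x) x hx y hy (by omega) (by omega) hxy) hjx hjy

lemma exists_gadget {d : ℕ} (hk : k = 2 * h * m) (hd : 3 * d ≤ h) (T : Finset (Fin k))
    (hT : #T ≤ d) :
    ∃ A P, IsGadget T A P ∧ (∀ x ∈ T, ∀ j ∈ P x, level h j < level h x) ∧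
      (∀ x ∈ T, |∑ j ∈ P x, (2 : ℝ) ^ level h j - 2 ^ level h x| ≤ 1) ∧
      ∀ l < m, #{j ∈ A ∪ T | level h j = l} = h := by
  obtain ⟨A, P, hA, hAcard, hP, hPcard, hPA, hPP⟩ := exists_levelwise_allocation hk hd T hT
  refine ⟨(range m).biUnion A, P, ⟨?_, ?_, ?_, hPP⟩, ?_, ?_, ?_⟩
  · exact disjoint_left.2 fun j hj => by
      obtain ⟨l, hl, hjl⟩ := mem_biUnion.1 hj
      exact (hA l (mem_range.1 hl) j hjl).2
  · exact fun x hx => disjoint_left.2 fun j hj => (hP x hx j hj).2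
  · exact fun x hx => (disjoint_biUnion_right _ _ _).2 fun l hl => hPA x hx l (mem_range.1 hl)
  · exact fun x hx j hj => by have := (hP x hx j hj).1; omega
  · intro x hx
    by_cases hx0 : level h x = 0
    · have : P x = ∅ := eq_empty_of_forall_notMem fun j hj => by have := (hP x hx j hj).1; omega
      simp [this, hx0]
    have hpow : (2 : ℝ) ^ level h x = 2 * 2 ^ (level h x - 1) := by
      rw [← pow_succ', Nat.sub_add_cancel (Nat.one_le_iff_ne_zero.2 hx0)]
    rw [sum_congr rfl fun j hj => show (2 : ℝ) ^ level h j = 2 ^ (level h x - 1) by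
        rw [← (hP x hx j hj).1, Nat.add_sub_cancel], sum_const,
      hPcard x hx hx0, hpow]
    simp
  · intro l hl
    have hsplit : {j ∈ (range m).biUnion A ∪ T | level h j = l} =
        A l ∪ {x ∈ T | level h x = l} := by
      ext j
      simp only [mem_filter, mem_union, mem_biUnion, mem_range]
      constructor
      · rintro ⟨⟨l', hl', hjl'⟩ | hj, rfl⟩
        · left
          rwa [(hA l' hl' j hjl').1]
        · exact Or.inr ⟨hj, rfl⟩
      · rintro (hj | hj)
        · exact ⟨Or.inl ⟨l, hl, hj⟩, (hA l hl j hj).1⟩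
        · exact ⟨Or.inr hj.1, hj.2⟩
    have hdisj : Disjoint (A l) {x ∈ T | level h x = l} :=
      disjoint_left.2 fun j hj hjT => (hA l hl j hj).2 (mem_filter.1 hjT).1
    rw [hsplit, card_union_of_disjoint hdisj, hAcard l hl]
    have := (card_filter_le T (level h · = l)).trans hT
    omega

lemma abs_sum_sub_half_le (hk : k = 2 * h * m) (hm : 0 < m) {H X : Finset (Fin k)}
    (hH : ∀ l < m, #{j ∈ H | level h j = l} = h)
    (hX : |∑ j ∈ X, (2 : ℝ) ^ level h j - ∑ j ∈ H, (2 : ℝ) ^ level h j| ≤ h) :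
    |∑ j ∈ X, (2 : ℝ) ^ level h j - (∑ j : Fin k, (2 : ℝ) ^ level h j) / 2|
      ≤ (∑ j : Fin k, (2 : ℝ) ^ level h j) / 2 ^ m := by
  have hhalf := two_mul_sum_level_eq_sum_univ hk hH (2 ^ ·)
  have hpow : (2 : ℝ) ≤ 2 ^ m := le_self_pow₀ one_le_two hm.ne'
  calc |∑ j ∈ X, (2 : ℝ) ^ level h j - (∑ j : Fin k, (2 : ℝ) ^ level h j) / 2|
      = |∑ j ∈ X, (2 : ℝ) ^ level h j - ∑ j ∈ H, (2 : ℝ) ^ level h j| := by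
        rw [← hhalf, mul_div_cancel_left₀ _ two_ne_zero]
    _ ≤ h := hX
    _ ≤ (∑ j : Fin k, (2 : ℝ) ^ level h j) / 2 ^ m := by
        rw [sum_univ_two_pow_level hk, le_div_iff₀ (by positivity)]
        nlinarith [(Nat.cast_nonneg h : (0 : ℝ) ≤ h)]

end Levels

/-- Weight-balanced hitting set: for every degree `d` there are a constant `Cd`
(the `O_d(·)` constant) and an absolute constant `γ > 0` (the `Ω(·)` constant) such
that for every dimension `k` divisible by `10(d+1)` there exist positive integer
weights `w₁, …, w_k` with total `W` and a set `S ⊆ {0,1}^k` of size at most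
`Cd · k^d`, all of whose points `y` satisfy `|Σ w_j y_j − W/2| ≤ W / 2^(γ k/(d+1))`,
and such that every non-zero degree-`d` polynomial over every Abelian group is
non-zero at some point of `S`. -/
theorem stmt5 (d : ℕ) :
    ∃ Cd : ℝ, ∃ γ : ℝ, 0 < γ ∧
      ∀ k : ℕ, 0 < k → 10 * (d + 1) ∣ k →
        ∃ w : Fin k → ℕ, (∀ j, 0 < w j) ∧
          ∃ S : Finset (Fin k → Bool),
            (S.card : ℝ) ≤ Cd * (k : ℝ) ^ d ∧
            (∀ y ∈ S,
              |(∑ j, (w j : ℝ) * (if y j then 1 else 0)) - (∑ j, (w j : ℝ)) / 2|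
                ≤ (∑ j, (w j : ℝ)) / (2 : ℝ) ^ (γ * (k : ℝ) / ((d : ℝ) + 1))) ∧
            (∀ (G : Type u) [AddCommGroup G] (c : Finset (Fin k) → G),
              (∀ T : Finset (Fin k), d < T.card → c T = 0) → c ≠ 0 →
                ∃ z ∈ S, evalPoly c z ≠ 0) := by
  refine ⟨(d + 1) * 2 ^ d, 1 / 10, by norm_num, fun k hk0 hdvd => ?_⟩
  obtain ⟨m, hm⟩ := hdvd
  have hk : k = 2 * (5 * (d + 1)) * m := by rw [hm]; ring
  have hm0 : 0 < m := Nat.pos_of_ne_zero fun h0 => by simp [h0] at hm; omega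
  have hlt := level_lt hk
  choose! A P hgad hrank hw hhalf using fun T (hT : #T ≤ d) => exists_gadget hk (by omega) T hT
  refine ⟨fun j => 2 ^ level (5 * (d + 1)) j, fun j => by positivity, gadgetPoints d A P, ?_,
    fun y hy => ?_, fun G _ c hdeg hc => exists_mem_gadgetPoints_evalPoly_ne_zero
      (fun j => m - level (5 * (d + 1)) j) (fun j => by have := hlt j; omega)
      (fun T hT => ⟨hgad T hT, fun x hx j hj => by
        have := hrank T hT x hx j hj; have := hlt x; omega⟩)
      hdeg hc⟩
  · have := card_gadgetPoints_le d A P (by simpa using hk0)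
    rw [Fintype.card_fin] at this
    calc _ ≤ (((d + 1) * k ^ d * 2 ^ d : ℕ) : ℝ) := by exact_mod_cast this
      _ = _ := by push_cast; ring
  obtain ⟨T, hT, V, hV, rfl⟩ := mem_gadgetPoints.1 hy
  have hexp : (2 : ℝ) ^ (1 / 10 * (k : ℝ) / ((d : ℝ) + 1)) = 2 ^ m := by
    rw [← Real.rpow_natCast]
    congr 1
    rw [hk]; push_cast; field_simp; ring
  push_cast
  simp only [decide_eq_true_eq, mul_ite, mul_one, mul_zero, sum_ite_mem, univ_inter, hexp]
  refine abs_sum_sub_half_le hk hm0 (hhalf T hT)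
    (((hgad T hT).abs_sum_gadgetPoint_sub_le _ (hw T hT) hV).trans ?_)
  exact_mod_cast hT.trans (by omega)
end

section
/- Let S ⊆ {0,1}^k be a set such that every non-zero polynomial of degree at most d from {0,1}^k to the group ℚ/ℤ is non-zero at some point of S. Then for every point b ∈ {0,1}^k there exist integers c_u for u ∈ S such that for every Abelian group G and every polynomial Q of degree at most d from {0,1}^k to G, Q(b) = Σ_{u∈S} c_u · Q(u). -/
open Finset

universe u

/-- The truncated 0/1 evaluation vector of a point `x` : entry `T` is 1 if `x`
satisfies `T` and `T` has low degree, else 0. -/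
def evalVec (k d : ℕ) (x : Fin k → Bool) : Finset (Fin k) → ℤ :=
  fun T => if T.card ≤ d ∧ ∀ i ∈ T, x i = true then 1 else 0

lemma evalPoly_eq_sum_vec {G : Type*} [AddCommGroup G] {k d : ℕ}
    (q : Finset (Fin k) → G) (hq : ∀ T : Finset (Fin k), d < T.card → q T = 0)
    (x : Fin k → Bool) :
    evalPoly q x = ∑ T : Finset (Fin k), evalVec k d x T • q T := by
  unfold evalPoly evalVec
  refine Finset.sum_congr rfl fun T _ => ?_
  by_cases h1 : T.card ≤ d
  · by_cases h2 : ∀ i ∈ T, x i = true <;> simp [h1, h2]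
  · simp only [not_le] at h1
    simp [hq T h1, h1.not_ge]

/-- A hitting set for degree-`d` polynomials over `ℚ/ℤ` is an integral interpolating
set for degree-`d` polynomials over every Abelian group: for every `b ∈ {0,1}^k`
there are integers `c_u` (`u ∈ S`) with `Q(b) = Σ_{u ∈ S} c_u • Q(u)` for every
degree-`d` polynomial `Q` over every Abelian group `G`. -/
theorem stmt6 (k d : ℕ) (S : Finset (Fin k → Bool))
    (hS : ∀ c : Finset (Fin k) → ℚ ⧸ AddSubgroup.zmultiples (1 : ℚ),
      (∀ T : Finset (Fin k), d < T.card → c T = 0) → c ≠ 0 →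
        ∃ u ∈ S, evalPoly c u ≠ 0) :
    ∀ b : Fin k → Bool, ∃ coef : (Fin k → Bool) → ℤ,
      ∀ (G : Type u) [AddCommGroup G] (q : Finset (Fin k) → G),
        (∀ T : Finset (Fin k), d < T.card → q T = 0) →
          evalPoly q b = ∑ u ∈ S, coef u • evalPoly q u := by
  intro b
  classical
  set V := (Finset (Fin k)) → ℤ with hV
  set v : (Fin k → Bool) → V := fun x => evalVec k d x with hv
  set L : Submodule ℤ V := Submodule.span ℤ (Set.range (fun u : S => v u)) with hL
  -- Key claim : v b ∈ L
  have key : v b ∈ L := by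
    by_contra hmem
    -- get a character of V ⧸ L nonzero at the class of v b
    set Q := V ⧸ L
    have hne : (Submodule.Quotient.mk (v b) : Q) ≠ 0 := by
      simpa [Submodule.Quotient.mk_eq_zero] using hmem
    obtain ⟨φ, hφ⟩ := CharacterModule.exists_character_apply_ne_zero_of_ne_zero hne
    -- define the ℚ/ℤ-polynomial
    set ψ : V → AddCircle (1 : ℚ) := fun w => φ (Submodule.Quotient.mk w) with hψ
    have ψadd : ∀ w₁ w₂ : V, ψ (w₁ + w₂) = ψ w₁ + ψ w₂ := by
      intro w₁ w₂; simp [hψ, Submodule.Quotient.mk_add]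
    have ψsmul : ∀ (n : ℤ) (w : V), ψ (n • w) = n • ψ w := by
      intro n w
      simp only [hψ, Submodule.Quotient.mk_smul]
      exact map_zsmul φ n _
    set c : Finset (Fin k) → AddCircle (1 : ℚ) :=
      fun T => if T.card ≤ d then ψ (Pi.single T 1) else 0 with hc
    have hdeg : ∀ T : Finset (Fin k), d < T.card → c T = 0 := by
      intro T hT; simp [hc, hT.not_ge]
    have heval : ∀ x : Fin k → Bool, evalPoly c x = ψ (v x) := by
      intro x
      have hvx : v x = ∑ T : Finset (Fin k), (v x T) • Pi.single T 1 := by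
        funext T'
        rw [Finset.sum_apply]
        rw [Finset.sum_eq_single T']
        · simp
        · intro T _ hT; simp [Pi.single_apply, hT]
        · simp
      rw [hvx]
      have hsum : ψ (∑ T : Finset (Fin k), (v x T) • Pi.single T 1) =
          ∑ T : Finset (Fin k), ψ ((v x T) • Pi.single T 1) :=
        map_sum (AddMonoidHom.mk' ψ ψadd) _ _
      rw [hsum]
      unfold evalPoly
      refine Finset.sum_congr rfl fun T _ => ?_
      rw [ψsmul]
      simp only [hv, evalVec, hc]
      by_cases h1 : T.card ≤ d
      · by_cases h2 : ∀ i ∈ T, x i = true <;> simp [h1, h2]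
      · simp [h1]
    have hzero : ∀ u ∈ S, evalPoly c u = 0 := by
      intro u hu
      rw [heval]
      have : (Submodule.Quotient.mk (v u) : Q) = 0 := by
        rw [Submodule.Quotient.mk_eq_zero]
        exact Submodule.subset_span ⟨⟨u, hu⟩, rfl⟩
      simp [hψ, this]
    have hb : evalPoly c b ≠ 0 := by
      rw [heval]; exact hφ
    have hcne : c ≠ 0 := by
      intro h
      apply hb
      rw [h]
      simp [evalPoly]
    obtain ⟨u, hu, hne'⟩ := hS c hdeg hcne
    exact hne' (hzero u hu)
  -- extract integer coefficients
  rw [hL, Submodule.mem_span_range_iff_exists_fun] at key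
  obtain ⟨co, hco⟩ := key
  refine ⟨fun u => if h : u ∈ S then co ⟨u, h⟩ else 0, ?_⟩
  intro G _ q hq
  have hvb : ∑ u ∈ S, (if h : u ∈ S then co ⟨u, h⟩ else 0) • v u = v b := by
    rw [← hco, ← Finset.sum_attach S fun u => (if h : u ∈ S then co ⟨u, h⟩ else 0) • v u]
    refine Finset.sum_congr rfl fun u _ => by simp [u.2]
  calc evalPoly q b = ∑ T : Finset (Fin k), v b T • q T := evalPoly_eq_sum_vec q hq b
    _ = ∑ T : Finset (Fin k), (∑ u ∈ S, (if h : u ∈ S then co ⟨u, h⟩ else 0) • v u) T • q T := by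
        rw [hvb]
    _ = ∑ T : Finset (Fin k), ∑ u ∈ S,
          ((if h : u ∈ S then co ⟨u, h⟩ else 0) * v u T) • q T := by
        refine Finset.sum_congr rfl fun T _ => ?_
        rw [Finset.sum_apply, Finset.sum_smul]
        rfl
    _ = ∑ u ∈ S, (if h : u ∈ S then co ⟨u, h⟩ else 0) •
          ∑ T : Finset (Fin k), v u T • q T := by
        rw [Finset.sum_comm]
        refine Finset.sum_congr rfl fun u _ => ?_
        rw [Finset.smul_sum]
        refine Finset.sum_congr rfl fun T _ => ?_
        rw [mul_smul]
    _ = ∑ u ∈ S, (if h : u ∈ S then co ⟨u, h⟩ else 0) • evalPoly q u := by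
        refine Finset.sum_congr rfl fun u _ => ?_
        rw [← evalPoly_eq_sum_vec q hq u]
end

section
/- Let A be a rational matrix and a a rational column vector. Then the system Ax = a has a solution x with integer entries if and only if for every rational row vector y such that yA has integer entries, the scalar ya is an integer. -/
/-!
Necessity is `y a = y (A x) = (y A) x`. For sufficiency, suppose `a` lies outside the lattice `L`
spanned by the columns of `A`. The group `M = L + ℤ a` is finitely generated and torsion-free,
hence free. A character `M / L → ℚ/ℤ` that does not vanish at `a` lifts, by freeness, to a
homomorphism `M → ℚ`, which extends to `ℚ^m` because `ℚ` is divisible. The extension is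
`ℚ`-linear, i.e. given by a row vector `y`; then `y A` is integral and `y a` is not.
-/

open Matrix

theorem Submodule.exists_linearMap_rat_separating_of_projective {M : Type*} [AddCommGroup M]
    [Module.Projective ℤ M] {N : Submodule ℤ M} {x : M} (hx : x ∉ N) :
    ∃ ψ : M →ₗ[ℤ] ℚ, (∀ v ∈ N, ∃ z : ℤ, ψ v = z) ∧ ¬ ∃ z : ℤ, ψ x = z := by
  have hcoe : ∀ q : ℚ, (q : AddCircle (1 : ℚ)) = 0 ↔ ∃ z : ℤ, q = z := fun q => by
    rw [AddCircle.coe_eq_zero_iff]; simp [eq_comm]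
  obtain ⟨c, hc⟩ := CharacterModule.exists_character_apply_ne_zero_of_ne_zero
    (mt (Submodule.Quotient.mk_eq_zero N).mp hx)
  obtain ⟨ψ, hψ⟩ := Module.projective_lifting_property
    (QuotientAddGroup.mk' (AddSubgroup.zmultiples (1 : ℚ))).toIntLinearMap
    (c.comp N.mkQ.toAddMonoidHom).toIntLinearMap (QuotientAddGroup.mk'_surjective _)
  have hψc : ∀ v, (ψ v : AddCircle (1 : ℚ)) = c (N.mkQ v) := fun v => LinearMap.congr_fun hψ v
  refine ⟨ψ, fun v hv => ?_, ?_⟩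
  · rw [← hcoe, hψc, Submodule.mkQ_apply, (Submodule.Quotient.mk_eq_zero N).mpr hv, map_zero]
  · rw [← hcoe, hψc]
    exact hc

theorem Submodule.exists_ratLinearMap_extension {V : Type*} [AddCommGroup V] [Module ℚ V]
    (M : Submodule ℤ V) (ψ : M →ₗ[ℤ] ℚ) : ∃ φ : V →ₗ[ℚ] ℚ, ∀ v : M, φ v = ψ v := by
  obtain ⟨φ, hφ⟩ := (Module.Baer.of_divisible ℚ).extension_property M.subtype
    M.injective_subtype ψ
  exact ⟨φ.toAddMonoidHom.toRatLinearMap, fun v => LinearMap.congr_fun hφ v⟩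

theorem Submodule.FG.exists_linearMap_rat_separating {V : Type*} [AddCommGroup V] [Module ℚ V]
    {L : Submodule ℤ V} (hL : L.FG) {a : V} (ha : a ∉ L) :
    ∃ φ : V →ₗ[ℚ] ℚ, (∀ v ∈ L, ∃ z : ℤ, φ v = z) ∧ ¬ ∃ z : ℤ, φ a = z := by
  set M := L ⊔ ℤ ∙ a
  have : Module.Finite ℤ M := Module.Finite.iff_fg.mpr (hL.sup (Submodule.fg_span_singleton a))
  have : Module.IsTorsionFree ℤ V := .trans ℚ
  have haM : a ∈ M := Submodule.mem_sup_right (Submodule.mem_span_singleton_self a)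
  obtain ⟨ψ, hψL, hψa⟩ := Submodule.exists_linearMap_rat_separating_of_projective
    (N := L.comap M.subtype) (x := ⟨a, haM⟩) ha
  obtain ⟨φ, hφ⟩ := M.exists_ratLinearMap_extension ψ
  refine ⟨φ, fun v hv => ?_, ?_⟩
  · rw [hφ ⟨v, Submodule.mem_sup_left hv⟩]
    exact hψL _ hv
  · rwa [hφ ⟨a, haM⟩]

theorem Matrix.mem_span_int_columns_iff {R m n : Type*} [Ring R] [Fintype n] (A : Matrix m n R)
    (a : m → R) :
    a ∈ Submodule.span ℤ (Set.range fun j i => A i j) ↔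
      ∃ x : n → ℤ, A *ᵥ (fun j => (x j : R)) = a := by
  rw [Submodule.mem_span_range_iff_exists_fun]
  refine exists_congr fun x => Eq.congr_left ?_
  ext i
  simp [Matrix.mulVec, dotProduct, Finset.sum_apply, zsmul_eq_mul, Int.cast_comm]

/-- Schrijver, Corollary 4.1.a: a rational linear system `Ax = a` has an integral
solution iff for every rational row vector `y` with `yA` integral, `ya` is an
integer. -/
theorem stmt7 (m n : ℕ) (A : Matrix (Fin m) (Fin n) ℚ) (a : Fin m → ℚ) :
    (∃ x : Fin n → ℤ, A.mulVec (fun j => (x j : ℚ)) = a) ↔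
      ∀ y : Fin m → ℚ,
        (∀ j : Fin n, ∃ z : ℤ, ∑ i, y i * A i j = (z : ℚ)) →
          ∃ z : ℤ, ∑ i, y i * a i = (z : ℚ) := by
  constructor
  · rintro ⟨x, rfl⟩ y hy
    choose z hz using hy
    refine ⟨∑ j, z j * x j, ?_⟩
    calc y ⬝ᵥ A *ᵥ (fun j => (x j : ℚ))
        = y ᵥ* A ⬝ᵥ (fun j => (x j : ℚ)) := dotProduct_mulVec ..
      _ = _ := by push_cast; exact Finset.sum_congr rfl fun j _ => by rw [← hz j]; rfl
  · intro h
    by_contra hx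
    rw [← Matrix.mem_span_int_columns_iff] at hx
    obtain ⟨φ, hφA, hφa⟩ :=
      (Submodule.fg_span (Set.finite_range _)).exists_linearMap_rat_separating hx
    set y := (dotProductEquiv ℚ (Fin m)).symm φ
    have hφ : ∀ v, φ v = ∑ i, y i * v i := fun v => by
      conv_lhs => rw [← (dotProductEquiv ℚ (Fin m)).apply_symm_apply φ]
      rfl
    refine hφa ?_
    simp only [hφ] at hφA ⊢
    exact h y fun j => hφA _ (Submodule.subset_span ⟨j, rfl⟩)
end

section
/- Let D' be a probability distribution on {0,1}^n in which the n coordinates are mutually independent and each coordinate i satisfies 1/2 − η ≤ Pr[y_i = 1] ≤ 1/2 + η for some η > 0. Then the statistical (total variation) distance between D' and the uniform distribution on {0,1}^n is at most O(η√n). -/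
open Finset

/-- A product distribution on `{0,1}ⁿ` whose coordinates are independent and
`η`-close to unbiased is `O(η√n)`-close to uniform in statistical distance:
there is an absolute constant `C > 0` such that for every event
`T ⊆ {0,1}ⁿ`, `|Pr_{D'}[T] − |T|/2ⁿ| ≤ C·η·√n`. -/
theorem stmt8 :
    ∃ C : ℝ, 0 < C ∧
      ∀ (n : ℕ) (η : ℝ) (μ : Fin n → ℝ),
        0 < η →
        (∀ i, 0 ≤ μ i ∧ μ i ≤ 1) →
        (∀ i, 1/2 - η ≤ μ i ∧ μ i ≤ 1/2 + η) →
        ∀ T : Finset (Fin n → Bool),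
          |(∑ x ∈ T, ∏ i, (if x i then μ i else 1 - μ i)) - (T.card : ℝ) / 2 ^ n|
            ≤ C * η * Real.sqrt n := by
  refine ⟨3, by norm_num, fun n η μ hη hμ01 hμη T => ?_⟩
  set p : (Fin n → Bool) → ℝ := fun x => ∏ i, (if x i then μ i else 1 - μ i) with hp
  have hsqrtn : Real.sqrt n ^ 2 = n := Real.sq_sqrt (Nat.cast_nonneg n)
  have hsqrtn0 : 0 ≤ Real.sqrt n := Real.sqrt_nonneg n
  have hpnonneg : ∀ x, 0 ≤ p x := by
    intro x
    exact Finset.prod_nonneg fun i _ => by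
      rcases hμ01 i with ⟨h0, h1⟩; split <;> linarith
  have hsum1 : ∑ x : Fin n → Bool, p x = 1 := by
    rw [hp, ← Fintype.prod_sum (fun i (b : Bool) => if b = true then μ i else 1 - μ i)]
    simp
  have hsumsq : ∑ x : Fin n → Bool, (p x) ^ 2 = ∏ i, ((μ i)^2 + (1 - μ i)^2) := by
    have h2 : ∀ x : Fin n → Bool, (p x) ^ 2
        = ∏ i, (if x i then (μ i)^2 else (1 - μ i)^2) := by
      intro x
      rw [hp, ← Finset.prod_pow]
      exact Finset.prod_congr rfl fun i _ => by split <;> rfl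
    simp_rw [h2]
    rw [← Fintype.prod_sum (fun i (b : Bool) => if b = true then (μ i)^2 else (1 - μ i)^2)]
    simp
  have hcard : (Fintype.card (Fin n → Bool) : ℝ) = 2 ^ n := by simp
  have h2n : (0:ℝ) < 2 ^ n := by positivity
  -- Case split on whether η√n is large
  by_cases hbig : 1/2 < 4 * n * η ^ 2
  · -- trivial bound: |diff| ≤ 1 ≤ 3η√n
    have h1 : 1 ≤ 3 * η * Real.sqrt n := by
      have hB2 : (3 * η * Real.sqrt n) ^ 2 = 9 * η ^ 2 * n := by
        rw [mul_pow, mul_pow, hsqrtn]; ring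
      nlinarith [hB2, mul_nonneg (mul_nonneg (by norm_num : (0:ℝ) ≤ 3) hη.le) hsqrtn0]
    have hT1 : ∑ x ∈ T, p x ≤ 1 := by
      rw [← hsum1]
      exact Finset.sum_le_sum_of_subset_of_nonneg (Finset.subset_univ T)
        (fun x _ _ => hpnonneg x)
    have hT0 : 0 ≤ ∑ x ∈ T, p x := Finset.sum_nonneg fun x _ => hpnonneg x
    have hc1 : (T.card : ℝ) / 2 ^ n ≤ 1 := by
      rw [div_le_one h2n]
      calc (T.card : ℝ) ≤ Fintype.card (Fin n → Bool) := by
            exact_mod_cast Finset.card_le_card (Finset.subset_univ T)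
        _ = 2 ^ n := hcard
    have hc0 : (0:ℝ) ≤ (T.card : ℝ) / 2 ^ n := by positivity
    rw [abs_sub_le_iff]
    constructor <;> linarith
  · push_neg at hbig
    -- Cauchy–Schwarz route
    set u : ℝ := ((2:ℝ) ^ n)⁻¹ with hu
    have hvar : ∑ x : Fin n → Bool, (p x - u) ^ 2
        = (∏ i, ((μ i)^2 + (1 - μ i)^2)) - u := by
      have : ∀ x, (p x - u)^2 = (p x)^2 - 2 * u * p x + u^2 := fun x => by ring
      simp_rw [this]
      rw [Finset.sum_add_distrib, Finset.sum_sub_distrib, hsumsq, ← Finset.mul_sum, hsum1,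
        Finset.sum_const, Finset.card_univ, nsmul_eq_mul, hcard]
      rw [hu]
      field_simp
      ring
    have hprodle : ∏ i, ((μ i)^2 + (1 - μ i)^2) ≤ (1/2 + 2 * η^2) ^ n := by
      calc ∏ i, ((μ i)^2 + (1 - μ i)^2) ≤ ∏ _i : Fin n, (1/2 + 2 * η^2) := by
            apply Finset.prod_le_prod
            · intro i _; positivity
            · intro i _
              rcases hμη i with ⟨h1, h2⟩
              nlinarith
        _ = (1/2 + 2 * η^2) ^ n := by simp
    -- sum of |p x - u| over all x
    have hCS : (∑ x : Fin n → Bool, |p x - u|) ^ 2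
        ≤ 2 ^ n * ((∏ i, ((μ i)^2 + (1 - μ i)^2)) - u) := by
      calc (∑ x : Fin n → Bool, |p x - u|) ^ 2
          ≤ (#(univ : Finset (Fin n → Bool)) : ℝ) * ∑ x : Fin n → Bool, |p x - u| ^ 2 :=
            sq_sum_le_card_mul_sum_sq
        _ = 2 ^ n * ∑ x : Fin n → Bool, (p x - u) ^ 2 := by
            rw [Finset.card_univ, hcard]; simp [sq_abs]
        _ = 2 ^ n * ((∏ i, ((μ i)^2 + (1 - μ i)^2)) - u) := by rw [hvar]
    have hexp : (2:ℝ) ^ n * ((1/2 + 2 * η^2) ^ n - u) ≤ 8 * n * η^2 := by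
      have h1 : (2:ℝ) ^ n * (1/2 + 2 * η^2) ^ n = (1 + 4 * η^2) ^ n := by
        rw [← mul_pow]; ring_nf
      have h2 : (2:ℝ) ^ n * u = 1 := by rw [hu]; field_simp
      have h3 : (1 + 4 * η^2 : ℝ) ^ n ≤ Real.exp (4 * n * η^2) := by
        calc (1 + 4 * η^2 : ℝ) ^ n ≤ (Real.exp (4 * η^2)) ^ n := by
              apply pow_le_pow_left₀ (by positivity)
              linarith [Real.add_one_le_exp (4 * η^2)]
          _ = Real.exp (4 * n * η^2) := by
              rw [← Real.exp_nat_mul]; ring_nf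
      have h4 : Real.exp (4 * n * η^2) ≤ 1 + 8 * n * η^2 := by
        set x : ℝ := 4 * n * η^2 with hx
        have hx0 : 0 ≤ x := by positivity
        have h5 : 1 - x ≤ Real.exp (-x) := by linarith [Real.add_one_le_exp (-x)]
        have h6 : Real.exp x ≤ 1 / (1 - x) := by
          rw [le_div_iff₀ (by linarith)]
          calc Real.exp x * (1 - x) ≤ Real.exp x * Real.exp (-x) :=
                mul_le_mul_of_nonneg_left h5 (Real.exp_pos x).le
            _ = 1 := by rw [← Real.exp_add]; simp
        have h7 : 1 / (1 - x) ≤ 1 + 2 * x := by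
          rw [div_le_iff₀ (by linarith)]
          nlinarith
        linarith
      have h8 : (2:ℝ) ^ n * ((1/2 + 2 * η^2) ^ n - u) = (1 + 4 * η^2) ^ n - 1 := by
        rw [mul_sub, h1, h2]
      linarith
    have hSbound : (∑ x : Fin n → Bool, |p x - u|) ^ 2 ≤ 8 * n * η^2 := by
      calc (∑ x : Fin n → Bool, |p x - u|) ^ 2
          ≤ 2 ^ n * ((∏ i, ((μ i)^2 + (1 - μ i)^2)) - u) := hCS
        _ ≤ 2 ^ n * ((1/2 + 2 * η^2) ^ n - u) := by
            apply mul_le_mul_of_nonneg_left _ h2n.le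
            linarith
        _ ≤ 8 * n * η^2 := by
            have := hexp; linarith [hexp]
    have hS0 : 0 ≤ ∑ x : Fin n → Bool, |p x - u| :=
      Finset.sum_nonneg fun x _ => abs_nonneg _
    have hdiff : |(∑ x ∈ T, p x) - (T.card : ℝ) / 2 ^ n|
        ≤ ∑ x : Fin n → Bool, |p x - u| := by
      have h1 : (∑ x ∈ T, p x) - (T.card : ℝ) / 2 ^ n = ∑ x ∈ T, (p x - u) := by
        rw [Finset.sum_sub_distrib, Finset.sum_const, nsmul_eq_mul, hu]
        ring
      rw [h1]
      calc |∑ x ∈ T, (p x - u)| ≤ ∑ x ∈ T, |p x - u| := Finset.abs_sum_le_sum_abs _ _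
        _ ≤ ∑ x : Fin n → Bool, |p x - u| :=
            Finset.sum_le_sum_of_subset_of_nonneg (Finset.subset_univ T)
              (fun x _ _ => abs_nonneg _)
    have hfinal : ∑ x : Fin n → Bool, |p x - u| ≤ 3 * η * Real.sqrt n := by
      nlinarith [sq_nonneg (∑ x : Fin n → Bool, |p x - u| - 3 * η * Real.sqrt n),
        sq_nonneg (∑ x : Fin n → Bool, |p x - u| + 3 * η * Real.sqrt n),
        mul_nonneg (mul_nonneg (by norm_num : (0:ℝ) ≤ 3) hη.le) hsqrtn0]
    linarith [hdiff]
end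

section
/- Let F be a field, d ≥ 1, and let S_1,…,S_t : {0,1}^n → F be polynomials of degree at most d such that the leading monomials LM(S_i) (with respect to the graded lexicographic order), viewed as subsets of [n] of size at most d, are pairwise disjoint. Then for every subset I ⊆ [t], the fraction of points a ∈ {0,1}^n at which all S_i, i ∈ I, simultaneously vanish is at most (1 − 2^{-d})^{|I|}. -/
open Finset
open scoped Classical

universe u

/-- Graded lexicographic order on multilinear monomials (identified with subsets of
`[n]`): `S ≺ T` if `S` has smaller degree, or degrees are equal and at the least
index where they differ, `T` contains the variable and `S` does not. -/
def glexLT {n : ℕ} (S T : Finset (Fin n)) : Prop :=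
  S.card < T.card ∨
    (S.card = T.card ∧ ∃ i : Fin n, i ∉ S ∧ i ∈ T ∧ ∀ j : Fin n, j < i → (j ∈ S ↔ j ∈ T))

/-- `M` is the leading monomial of the polynomial with coefficients `c`
with respect to the graded lexicographic order. -/
def IsLeadingMonomial {F : Type*} [Zero F] {n : ℕ} (c : Finset (Fin n) → F)
    (M : Finset (Fin n)) : Prop :=
  c M ≠ 0 ∧ ∀ T : Finset (Fin n), c T ≠ 0 → T = M ∨ glexLT T M

namespace Stmt9Aux

variable {n : ℕ}

/-- weight of a monomial: binary value with most significant bit at index 0 -/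
def wgt (S : Finset (Fin n)) : ℕ := ∑ i ∈ S, 2 ^ (n - i.val)

/-- graded rank -/
def rnk (S : Finset (Fin n)) : ℕ := 2 ^ (n + 1) * S.card + wgt S

lemma sum_pow_lt (A : Finset (Fin n)) (K : ℕ) (h : ∀ j ∈ A, n - j.val < K) :
    ∑ j ∈ A, 2 ^ (n - j.val) < 2 ^ K := by
  have hinj : ∀ x ∈ A, ∀ y ∈ A, n - x.val = n - y.val → x = y := by
    intro x _ y _ hxy
    have hx := x.isLt; have hy := y.isLt
    exact Fin.ext (by omega)
  have h1 : ∑ j ∈ A, 2 ^ (n - j.val) = ∑ k ∈ A.image (fun j : Fin n => n - j.val), 2 ^ k :=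
    (Finset.sum_image hinj).symm
  have h2 : A.image (fun j : Fin n => n - j.val) ⊆ Finset.range K := by
    intro k hk
    simp only [Finset.mem_image] at hk
    obtain ⟨j, hj, rfl⟩ := hk
    exact Finset.mem_range.2 (h j hj)
  calc ∑ j ∈ A, 2 ^ (n - j.val) ≤ ∑ k ∈ Finset.range K, 2 ^ k := by
        rw [h1]; exact Finset.sum_le_sum_of_subset h2
    _ = 2 ^ K - 1 := by
        rw [Nat.geomSum_eq le_rfl]; simp
    _ < 2 ^ K := by have := Nat.one_le_two_pow (n := K); omega

lemma wgt_lt (S : Finset (Fin n)) : wgt S < 2 ^ (n + 1) :=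
  sum_pow_lt S (n + 1) (fun j _ => by omega)

lemma rnk_lt_of_card_lt {S T : Finset (Fin n)} (h : S.card < T.card) : rnk S < rnk T := by
  have h1 := wgt_lt S
  have h2 : 2 ^ (n + 1) * (S.card + 1) ≤ 2 ^ (n + 1) * T.card := Nat.mul_le_mul_left _ (by omega)
  have h3 : 2 ^ (n + 1) * (S.card + 1) = 2 ^ (n + 1) * S.card + 2 ^ (n + 1) := by ring
  unfold rnk
  omega

lemma glex_wgt {S T : Finset (Fin n)} {i : Fin n} (hiS : i ∉ S) (hiT : i ∈ T)
    (hlt : ∀ j : Fin n, j < i → (j ∈ S ↔ j ∈ T)) : wgt S < wgt T := by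
  have hsplit : wgt S = ∑ j ∈ S.filter (fun j => j < i), 2 ^ (n - j.val)
      + ∑ j ∈ S.filter (fun j => ¬ j < i), 2 ^ (n - j.val) :=
    (Finset.sum_filter_add_sum_filter_not S _ _).symm
  have hfeq : S.filter (fun j => j < i) = T.filter (fun j => j < i) := by
    ext j
    simp only [Finset.mem_filter]
    constructor
    · rintro ⟨hj, hji⟩; exact ⟨(hlt j hji).1 hj, hji⟩
    · rintro ⟨hj, hji⟩; exact ⟨(hlt j hji).2 hj, hji⟩
  have hhigh : ∑ j ∈ S.filter (fun j => ¬ j < i), 2 ^ (n - j.val) < 2 ^ (n - i.val) := by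
    apply sum_pow_lt
    intro j hj
    rw [Finset.mem_filter] at hj
    have hji : i < j := by
      rcases lt_trichotomy i j with h | h | h
      · exact h
      · exact absurd (h ▸ hj.1) hiS
      · exact absurd h hj.2
    have := j.isLt
    have : i.val < j.val := hji
    omega
  have hsub : insert i (T.filter (fun j => j < i)) ⊆ T := by
    intro j hj
    rcases Finset.mem_insert.1 hj with rfl | hj
    · exact hiT
    · exact (Finset.mem_filter.1 hj).1
  have hTge : 2 ^ (n - i.val) + ∑ j ∈ T.filter (fun j => j < i), 2 ^ (n - j.val) ≤ wgt T := by
    have hnotmem : i ∉ T.filter (fun j => j < i) := by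
      simp [Finset.mem_filter]
    calc 2 ^ (n - i.val) + ∑ j ∈ T.filter (fun j => j < i), 2 ^ (n - j.val)
        = ∑ j ∈ insert i (T.filter (fun j => j < i)), 2 ^ (n - j.val) :=
          by rw [Finset.sum_insert hnotmem]
      _ ≤ wgt T := Finset.sum_le_sum_of_subset hsub
  rw [hsplit, hfeq]
  omega

lemma glex_key {S T : Finset (Fin n)} (h : glexLT S T) :
    S.card < T.card ∨ (S.card = T.card ∧ wgt S < wgt T) := by
  rcases h with h | ⟨hc, i, hiS, hiT, hlt⟩
  · exact Or.inl h
  · exact Or.inr ⟨hc, glex_wgt hiS hiT hlt⟩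

lemma glex_rnk {S T : Finset (Fin n)} (h : glexLT S T) : rnk S < rnk T := by
  rcases glex_key h with h | ⟨hc, hw⟩
  · exact rnk_lt_of_card_lt h
  · simp only [rnk, hc]; omega

lemma rank_step {M T U : Finset (Fin n)} (hMT : M ⊆ T) (hU : glexLT U M) :
    rnk (U ∪ (T \ M)) < rnk T := by
  set V := T \ M with hV
  have hMV : M ∪ V = T := Finset.union_sdiff_of_subset hMT
  have hdMV : Disjoint M V := Finset.disjoint_sdiff
  have hTcard : T.card = M.card + V.card := by
    rw [← hMV, Finset.card_union_of_disjoint hdMV]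
  have hcle : (U ∪ V).card ≤ U.card + V.card := Finset.card_union_le U V
  rcases glex_key hU with h | ⟨hc, hw⟩
  · exact rnk_lt_of_card_lt (by omega)
  · by_cases hcc : (U ∪ V).card < T.card
    · exact rnk_lt_of_card_lt hcc
    · have hceq : (U ∪ V).card = U.card + V.card := by omega
      have hdUV : Disjoint U V := Finset.card_union_eq_card_add_card.1 hceq
      have hwUV : wgt (U ∪ V) = wgt U + wgt V := Finset.sum_union hdUV
      have hwT : wgt T = wgt M + wgt V := by rw [← hMV]; exact Finset.sum_union hdMV
      have hceq2 : (U ∪ V).card = T.card := by omega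
      simp only [rnk, hceq2]
      omega

end Stmt9Aux

namespace Stmt9Aux

variable {F : Type u} [Field F] {n : ℕ}

/-- monomial function restricted to a finite set of points -/
noncomputable def mres (F : Type u) [Field F] {n : ℕ} (Z : Finset (Fin n → Bool))
    (T : Finset (Fin n)) : {x // x ∈ Z} → F :=
  fun z => if ∀ j ∈ T, z.val j = true then (1 : F) else 0

lemma mres_union (Z : Finset (Fin n → Bool)) (A B : Finset (Fin n)) (z : {x // x ∈ Z}) :
    mres F Z (A ∪ B) z = mres F Z A z * mres F Z B z := by
  simp only [mres, Finset.forall_mem_union]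
  split_ifs with h1 h2 h3 h4 h5 <;> simp_all

theorem card_zero_le_std (t : ℕ) (c : Fin t → Finset (Fin n) → F)
    (M : Fin t → Finset (Fin n)) (hM : ∀ i, IsLeadingMonomial (c i) (M i))
    (I : Finset (Fin t)) :
    (Finset.univ.filter
        (fun a : Fin n → Bool => ∀ i ∈ I, evalPoly (c i) a = 0)).card
      ≤ (Finset.univ.filter (fun T : Finset (Fin n) => ∀ i ∈ I, ¬ M i ⊆ T)).card := by
  classical
  set Z : Finset (Fin n → Bool) :=
    Finset.univ.filter (fun a : Fin n → Bool => ∀ i ∈ I, evalPoly (c i) a = 0) with hZ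
  set Std : Finset (Finset (Fin n)) :=
    Finset.univ.filter (fun T : Finset (Fin n) => ∀ i ∈ I, ¬ M i ⊆ T) with hStd
  set s : Finset ({x // x ∈ Z} → F) := Std.image (mres F Z) with hs
  -- every monomial restricted to Z lies in the span of standard monomials
  have key : ∀ (N : ℕ) (T : Finset (Fin n)), rnk T < N →
      mres F Z T ∈ Submodule.span F (s : Set ({x // x ∈ Z} → F)) := by
    intro N
    induction N with
    | zero => intro T hT; omega
    | succ N ih =>
      intro T hT
      by_cases hstd : ∀ i ∈ I, ¬ M i ⊆ T
      · exact Submodule.subset_span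
          (Finset.mem_coe.2 (Finset.mem_image_of_mem _
            (Finset.mem_filter.2 ⟨Finset.mem_univ _, hstd⟩)))
      · push_neg at hstd
        obtain ⟨i, hiI, hMiT⟩ := hstd
        have hcMi : c i (M i) ≠ 0 := (hM i).1
        -- key identity on Z
        have hid : mres F Z T = (-(c i (M i))⁻¹) •
            ∑ U ∈ Finset.univ.erase (M i), c i U • mres F Z (U ∪ (T \ M i)) := by
          funext z
          have hz : evalPoly (c i) z.val = 0 :=
            (Finset.mem_filter.1 z.2).2 i hiI
          have htot : ∑ U : Finset (Fin n), c i U * mres F Z (U ∪ (T \ M i)) z = 0 := by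
            have h1 : ∀ U : Finset (Fin n),
                c i U * mres F Z (U ∪ (T \ M i)) z
                  = (if ∀ j ∈ U, z.val j = true then c i U else 0) * mres F Z (T \ M i) z := by
              intro U
              rw [mres_union]
              by_cases hU : ∀ j ∈ U, z.val j = true <;>
                simp [mres, hU, mul_comm, mul_assoc]
            calc ∑ U : Finset (Fin n), c i U * mres F Z (U ∪ (T \ M i)) z
                = (∑ U : Finset (Fin n), if ∀ j ∈ U, z.val j = true then c i U else 0)
                    * mres F Z (T \ M i) z := by
                  rw [Finset.sum_mul]; exact Finset.sum_congr rfl fun U _ => h1 U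
              _ = evalPoly (c i) z.val * mres F Z (T \ M i) z := rfl
              _ = 0 := by rw [hz, zero_mul]
          have hsplit : ∑ U : Finset (Fin n), c i U * mres F Z (U ∪ (T \ M i)) z
              = c i (M i) * mres F Z T z
                + ∑ U ∈ Finset.univ.erase (M i), c i U * mres F Z (U ∪ (T \ M i)) z := by
            rw [← Finset.add_sum_erase _ _ (Finset.mem_univ (M i)),
              Finset.union_sdiff_of_subset hMiT]
          rw [hsplit] at htot
          have h2 : c i (M i) * mres F Z T z
              = - ∑ U ∈ Finset.univ.erase (M i), c i U * mres F Z (U ∪ (T \ M i)) z :=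
            eq_neg_of_add_eq_zero_left htot
          have h3 : mres F Z T z = (-(c i (M i))⁻¹) *
              ∑ U ∈ Finset.univ.erase (M i), c i U * mres F Z (U ∪ (T \ M i)) z := by
            refine mul_left_cancel₀ hcMi ?_
            rw [h2]; field_simp
          simpa [Pi.smul_apply, Finset.sum_apply, smul_eq_mul] using h3
        rw [hid]
        refine Submodule.smul_mem _ _ (Submodule.sum_mem _ fun U hU => ?_)
        by_cases hcU : c i U = 0
        · rw [hcU, zero_smul]; exact Submodule.zero_mem _
        · refine Submodule.smul_mem _ _ (ih _ ?_)
          rcases (hM i).2 U hcU with h | h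
          · exact absurd h (Finset.ne_of_mem_erase hU)
          · have := rank_step hMiT h
            omega
  have keyall : ∀ T : Finset (Fin n), mres F Z T ∈ Submodule.span F (s : Set _) :=
    fun T => key (rnk T + 1) T (Nat.lt_succ_self _)
  -- point indicators lie in the span
  have hdelta : ∀ z₀ : {x // x ∈ Z},
      (fun z : {x // x ∈ Z} => if z₀ = z then (1 : F) else 0)
        ∈ Submodule.span F (s : Set ({x // x ∈ Z} → F)) := by
    intro z₀
    set A : Finset (Fin n) := Finset.univ.filter (fun j => z₀.val j = true) with hA
    have hrep : (fun z : {x // x ∈ Z} => if z₀ = z then (1 : F) else 0)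
        = ∑ W ∈ Aᶜ.powerset, ((-1 : F) ^ W.card) • mres F Z (A ∪ W) := by
      funext z
      set X : Finset (Fin n) := Finset.univ.filter (fun j => z.val j = true) with hX
      have hmemB : ∀ B : Finset (Fin n), mres F Z B z = if B ⊆ X then (1 : F) else 0 := by
        intro B
        unfold mres
        have : (∀ j ∈ B, z.val j = true) ↔ B ⊆ X := by
          simp [hX, Finset.subset_iff]
        simp only [this]
      have hRHS : ∑ W ∈ Aᶜ.powerset, ((-1 : F) ^ W.card) • mres F Z (A ∪ W) z
          = (if A ⊆ X then (1 : F) else 0) * (if Aᶜ ∩ X = ∅ then (1 : F) else 0) := by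
        have step1 : ∀ W ∈ Aᶜ.powerset, ((-1 : F) ^ W.card) • mres F Z (A ∪ W) z
            = (if A ⊆ X then (1 : F) else 0) *
              (if W ⊆ X then ((-1 : F) ^ W.card) else 0) := by
          intro W _
          rw [smul_eq_mul, mres_union, hmemB A, hmemB W]
          by_cases h1 : A ⊆ X <;> by_cases h2 : W ⊆ X <;> simp [h1, h2]
        rw [Finset.sum_congr rfl step1, ← Finset.mul_sum]
        congr 1
        have hfilter : Aᶜ.powerset.filter (fun W => W ⊆ X) = (Aᶜ ∩ X).powerset := by
          ext W
          simp only [Finset.mem_filter, Finset.mem_powerset, Finset.subset_inter_iff]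
        rw [← Finset.sum_filter, hfilter]
        have hint := Finset.sum_powerset_neg_one_pow_card (x := Aᶜ ∩ X)
        have hcast : ((∑ m ∈ (Aᶜ ∩ X).powerset, (-1 : ℤ) ^ m.card : ℤ) : F)
            = ∑ m ∈ (Aᶜ ∩ X).powerset, (-1 : F) ^ m.card := by
          push_cast
          rfl
        rw [← hcast, hint]
        split_ifs <;> simp
      rw [Finset.sum_apply, Finset.sum_congr rfl (fun W _ => Pi.smul_apply ((-1 : F) ^ W.card) (mres F Z (A ∪ W)) z), hRHS]
      have hiff : z₀ = z ↔ (A ⊆ X ∧ Aᶜ ∩ X = ∅) := by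
        constructor
        · rintro rfl
          constructor
          · intro j hj
            rw [hA] at hj
            rw [hX]
            simpa using (Finset.mem_filter.1 hj).2
          · ext j
            simp only [Finset.mem_inter, Finset.mem_compl, hA, hX, Finset.mem_filter,
              Finset.mem_univ, true_and, Finset.notMem_empty, iff_false, not_and]
            intro h
            simp at h
            simp [h]
        · rintro ⟨h1, h2⟩
          apply Subtype.ext
          funext j
          by_cases hb : z₀.val j = true
          · have hjA : j ∈ A := by simp [hA, hb]
            have := h1 hjA
            rw [hX] at this
            simp only [Finset.mem_filter] at this
            rw [hb, this.2]
          · have hjA : j ∈ Aᶜ := by simp [hA, hb]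
            have hnX : j ∉ X := by
              intro hjX
              have : j ∈ Aᶜ ∩ X := Finset.mem_inter.2 ⟨hjA, hjX⟩
              rw [h2] at this
              exact absurd this (Finset.notMem_empty j)
            rw [hX] at hnX
            simp only [Finset.mem_filter, Finset.mem_univ, true_and] at hnX
            simp only [Bool.not_eq_true] at hb hnX
            rw [hb, hnX]
      by_cases hz : z₀ = z
      · have := hiff.1 hz
        simp [hz, this.1, this.2]
      · have : ¬ (A ⊆ X ∧ Aᶜ ∩ X = ∅) := fun h => hz (hiff.2 h)
        by_cases h1 : A ⊆ X <;> by_cases h2 : Aᶜ ∩ X = ∅ <;> simp_all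
    rw [hrep]
    exact Submodule.sum_mem _ fun W _ => Submodule.smul_mem _ _ (keyall (A ∪ W))
  -- the span is everything
  have hspan : Submodule.span F (s : Set ({x // x ∈ Z} → F)) = ⊤ := by
    rw [eq_top_iff]
    intro f _
    rw [pi_eq_sum_univ f]
    exact Submodule.sum_mem _ fun z _ => Submodule.smul_mem _ _ (hdelta z)
  -- dimension count
  have hdim : Z.card ≤ s.card := by
    calc Z.card = Fintype.card {x // x ∈ Z} := (Fintype.card_coe Z).symm
      _ = Module.finrank F ({x // x ∈ Z} → F) := (Module.finrank_pi F).symm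
      _ = Module.finrank F (Submodule.span F (s : Set ({x // x ∈ Z} → F))) := by
          rw [hspan, finrank_top]
      _ ≤ s.card := finrank_span_finset_le_card s
  exact le_trans hdim (le_trans (Finset.card_image_le) le_rfl)

end Stmt9Aux

namespace Stmt9Aux

theorem std_count {n : ℕ} (d t : ℕ) (hd : 1 ≤ d) (M : Fin t → Finset (Fin n))
    (hMd : ∀ i, (M i).card ≤ d)
    (hdisj : ∀ i j, i ≠ j → Disjoint (M i) (M j)) :
    ∀ I : Finset (Fin t),
    ((Finset.univ.filter (fun T : Finset (Fin n) => ∀ i ∈ I, ¬ M i ⊆ T)).card : ℝ)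
      ≤ (1 - (2 : ℝ) ^ (-(d : ℤ))) ^ I.card * 2 ^ n := by
  classical
  have h2d : (2 : ℝ) ^ (-(d : ℤ)) = ((2 : ℝ) ^ d)⁻¹ := by
    rw [zpow_neg, zpow_natCast]
  have h2dpos : (0 : ℝ) < (2 : ℝ) ^ d := by positivity
  have hfrac : (0 : ℝ) ≤ 1 - (2 : ℝ) ^ (-(d : ℤ)) := by
    rw [h2d]
    have h1 : (1 : ℝ) ≤ (2 : ℝ) ^ d := by
      calc (1 : ℝ) = 1 ^ d := (one_pow d).symm
        _ ≤ (2 : ℝ) ^ d := pow_le_pow_left₀ (by norm_num) (by norm_num) d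
    have := inv_le_one_of_one_le₀ h1
    linarith
  intro I
  induction I using Finset.induction_on with
  | empty =>
      simp only [Finset.notMem_empty, false_implies, implies_true, Finset.filter_true,
        Finset.card_empty, pow_zero, one_mul]
      rw [Finset.card_univ, Fintype.card_finset, Fintype.card_fin]
      norm_num
  | @insert i I' hiI' ih =>
      set A : Finset (Finset (Fin n)) :=
        Finset.univ.filter (fun T : Finset (Fin n) => ∀ j ∈ I', ¬ M j ⊆ T) with hA
      set B : Finset (Finset (Fin n)) := A.filter (fun T => M i ⊆ T) with hB
      set D : Finset (Finset (Fin n)) := A.filter (fun T => Disjoint (M i) T) with hD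
      have hAmem : ∀ T, T ∈ A ↔ ∀ j ∈ I', ¬ M j ⊆ T := by
        intro T; simp [hA]
      -- the new filter is A minus B
      have hsplitset : Finset.univ.filter
          (fun T : Finset (Fin n) => ∀ j ∈ insert i I', ¬ M j ⊆ T)
            = A.filter (fun T => ¬ M i ⊆ T) := by
        ext T
        simp only [Finset.mem_filter, Finset.mem_univ, true_and, Finset.forall_mem_insert, hA]
        tauto
      have hcards : (A.filter (fun T => ¬ M i ⊆ T)).card + B.card = A.card := by
        rw [hB, add_comm]
        exact Finset.card_filter_add_card_filter_not _
      -- sdiff preserves membership in A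
      have hsd : ∀ T ∈ A, T \ M i ∈ D := by
        intro T hT
        rw [hD, Finset.mem_filter]
        refine ⟨?_, Finset.disjoint_sdiff⟩
        rw [hAmem] at hT ⊢
        intro j hj hsub
        exact hT j hj (hsub.trans (Finset.sdiff_subset))
      -- B and D are in bijection
      have hBD : B.card = D.card := by
        apply Finset.card_bij (fun T _ => T \ M i)
        · intro T hT
          exact hsd T (Finset.mem_filter.1 hT).1
        · intro T₁ h₁ T₂ h₂ heq
          have e₁ : T₁ \ M i ∪ M i = T₁ :=
            Finset.sdiff_union_of_subset (Finset.mem_filter.1 h₁).2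
          have e₂ : T₂ \ M i ∪ M i = T₂ :=
            Finset.sdiff_union_of_subset (Finset.mem_filter.1 h₂).2
          rw [← e₁, ← e₂, heq]
        · intro T' hT'
          rw [hD, Finset.mem_filter] at hT'
          obtain ⟨hT'A, hT'disj⟩ := hT'
          refine ⟨T' ∪ M i, ?_, ?_⟩
          · rw [hB, Finset.mem_filter]
            constructor
            · rw [hAmem]
              intro j hj hsub
              have hjd : Disjoint (M j) (M i) := hdisj j i (fun h => hiI' (h ▸ hj))
              have : M j ⊆ T' := by
                intro x hx
                rcases Finset.mem_union.1 (hsub hx) with h | h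
                · exact h
                · exact absurd h (Finset.disjoint_left.1 hjd hx)
              exact (hAmem T').1 hT'A j hj this
            · exact Finset.subset_union_right
          · exact Finset.union_sdiff_cancel_right hT'disj.symm
      -- fibers of sdiff have size at most 2^d
      have hAD : A.card ≤ 2 ^ d * D.card := by
        apply Finset.card_le_mul_card_image_of_maps_to hsd
        intro V hV
        have hinj : ∀ T₁ ∈ A.filter (fun T => T \ M i = V),
            ∀ T₂ ∈ A.filter (fun T => T \ M i = V),
              T₁ ∩ M i = T₂ ∩ M i → T₁ = T₂ := by
          intro T₁ h₁ T₂ h₂ heq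
          have e₁ : T₁ \ M i ∪ T₁ ∩ M i = T₁ := Finset.sdiff_union_inter T₁ (M i)
          have e₂ : T₂ \ M i ∪ T₂ ∩ M i = T₂ := Finset.sdiff_union_inter T₂ (M i)
          rw [← e₁, ← e₂, (Finset.mem_filter.1 h₁).2, (Finset.mem_filter.1 h₂).2, heq]
        have hmaps : ∀ T ∈ A.filter (fun T => T \ M i = V),
            T ∩ M i ∈ (M i).powerset := by
          intro T _
          exact Finset.mem_powerset.2 Finset.inter_subset_right
        calc (A.filter (fun T => T \ M i = V)).card ≤ (M i).powerset.card :=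
              Finset.card_le_card_of_injOn _ hmaps hinj
          _ = 2 ^ (M i).card := Finset.card_powerset _
          _ ≤ 2 ^ d := Nat.pow_le_pow_right (by norm_num) (hMd i)
      -- real arithmetic
      have hcardinsert : (insert i I').card = I'.card + 1 := Finset.card_insert_of_notMem hiI'
      rw [hsplitset, hcardinsert]
      have hBreal : ((A.card : ℝ)) * ((2 : ℝ) ^ d)⁻¹ ≤ (B.card : ℝ) := by
        rw [hBD]
        have : (A.card : ℝ) ≤ 2 ^ d * (D.card : ℝ) := by
          have := hAD
          push_cast at this ⊢
          exact_mod_cast this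
        calc (A.card : ℝ) * ((2 : ℝ) ^ d)⁻¹
            ≤ (2 ^ d * (D.card : ℝ)) * ((2 : ℝ) ^ d)⁻¹ :=
              mul_le_mul_of_nonneg_right this (by positivity)
          _ = (D.card : ℝ) := by field_simp
      have hfilterreal : ((A.filter (fun T => ¬ M i ⊆ T)).card : ℝ)
          = (A.card : ℝ) - (B.card : ℝ) := by
        have := hcards
        push_cast [← this]
        ring
      have hAnn : (0 : ℝ) ≤ (A.card : ℝ) := Nat.cast_nonneg _
      calc ((A.filter (fun T => ¬ M i ⊆ T)).card : ℝ)
          = (A.card : ℝ) - (B.card : ℝ) := hfilterreal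
        _ ≤ (A.card : ℝ) - (A.card : ℝ) * ((2 : ℝ) ^ d)⁻¹ := by linarith
        _ = (1 - (2 : ℝ) ^ (-(d : ℤ))) * (A.card : ℝ) := by rw [h2d]; ring
        _ ≤ (1 - (2 : ℝ) ^ (-(d : ℤ))) * ((1 - (2 : ℝ) ^ (-(d : ℤ))) ^ I'.card * 2 ^ n) := by
            apply mul_le_mul_of_nonneg_left _ hfrac
            exact ih
        _ = (1 - (2 : ℝ) ^ (-(d : ℤ))) ^ (I'.card + 1) * 2 ^ n := by ring

end Stmt9Aux


/-- Footprint-type bound: if the leading monomials of `S₁, …, S_t` are pairwise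
disjoint, then for every `I ⊆ [t]` the fraction of points of `{0,1}ⁿ` at which all
`S_i`, `i ∈ I`, vanish simultaneously is at most `(1 − 2^{-d})^{|I|}`. -/
theorem stmt9 (F : Type u) [Field F] (n d t : ℕ) (hd : 1 ≤ d)
    (c : Fin t → Finset (Fin n) → F)
    (hdeg : ∀ i (T : Finset (Fin n)), d < T.card → c i T = 0)
    (M : Fin t → Finset (Fin n))
    (hM : ∀ i, IsLeadingMonomial (c i) (M i))
    (hdisj : ∀ i j, i ≠ j → Disjoint (M i) (M j)) :
    ∀ I : Finset (Fin t),
      ((Finset.univ.filter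
          (fun a : Fin n → Bool => ∀ i ∈ I, evalPoly (c i) a = 0)).card : ℝ)
        ≤ (1 - (2 : ℝ) ^ (-(d : ℤ))) ^ I.card * 2 ^ n := by
  intro I
  have hMd : ∀ i, (M i).card ≤ d := by
    intro i
    by_contra h
    exact (hM i).1 (hdeg i (M i) (by omega))
  calc ((Finset.univ.filter
          (fun a : Fin n → Bool => ∀ i ∈ I, evalPoly (c i) a = 0)).card : ℝ)
      ≤ ((Finset.univ.filter
          (fun T : Finset (Fin n) => ∀ i ∈ I, ¬ M i ⊆ T)).card : ℝ) := by
        exact_mod_cast Stmt9Aux.card_zero_le_std t c M hM I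
    _ ≤ (1 - (2 : ℝ) ^ (-(d : ℤ))) ^ I.card * 2 ^ n :=
        Stmt9Aux.std_count d t hd M hMd hdisj I
end

section
/- Let F be a field, d ≥ 1, and S_1,…,S_t : {0,1}^n → F degree-≤d polynomials whose leading monomials (as subsets of [n]) are pairwise disjoint. Then for every η > 0, Pr over uniform a ∈ {0,1}^n that at least (1 − 2^{-d} + η)·t of the polynomials vanish at a is at most exp(−Ω(η² t)). -/
open Finset
open scoped Classical

universe u

namespace Stmt10Aux

variable {n : ℕ}

def binval (S : Finset (Fin n)) : ℕ := ∑ i ∈ S, 2 ^ (n - 1 - (i : ℕ))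

lemma sum_two_pow_lt (E : ℕ) : (∑ e ∈ Finset.range E, 2 ^ e) < 2 ^ E := by
  induction E with
  | zero => simp
  | succ E ih =>
    rw [Finset.sum_range_succ, pow_succ]
    omega

lemma binval_lt_pow {S : Finset (Fin n)} {E : ℕ} (h : ∀ i ∈ S, n - 1 - (i : ℕ) < E) :
    binval S < 2 ^ E := by
  have hinj : ∀ a ∈ S, ∀ b ∈ S, n - 1 - (a : ℕ) = n - 1 - (b : ℕ) → a = b := by
    intro a _ b _ hab
    have ha := a.isLt; have hb := b.isLt
    exact Fin.ext (by omega)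
  calc binval S = ∑ e ∈ S.image (fun i : Fin n => n - 1 - (i : ℕ)), 2 ^ e :=
        (Finset.sum_image hinj).symm
    _ ≤ ∑ e ∈ Finset.range E, 2 ^ e := by
        apply Finset.sum_le_sum_of_subset
        intro e he
        rw [Finset.mem_image] at he
        obtain ⟨i, hi, rfl⟩ := he
        exact Finset.mem_range.2 (h i hi)
    _ < 2 ^ E := sum_two_pow_lt E

lemma binval_lt (S : Finset (Fin n)) : binval S < 2 ^ n := by
  apply binval_lt_pow
  intro i _
  have := i.isLt
  omega

lemma binval_lt_of_pivot {S T : Finset (Fin n)} {i : Fin n} (hiS : i ∉ S) (hiT : i ∈ T)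
    (hag : ∀ j : Fin n, j < i → (j ∈ S ↔ j ∈ T)) : binval S < binval T := by
  unfold binval
  rw [← Finset.sum_filter_add_sum_filter_not S (fun j => j < i),
      ← Finset.sum_filter_add_sum_filter_not T (fun j => j < i)]
  have heq : S.filter (fun j => j < i) = T.filter (fun j => j < i) := by
    ext j
    simp only [Finset.mem_filter]
    constructor
    · rintro ⟨hj, hji⟩; exact ⟨(hag j hji).1 hj, hji⟩
    · rintro ⟨hj, hji⟩; exact ⟨(hag j hji).2 hj, hji⟩
  rw [heq]
  have h1 : (∑ j ∈ S.filter (fun j => ¬ j < i), 2 ^ (n - 1 - (j : ℕ))) < 2 ^ (n - 1 - (i : ℕ)) := by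
    apply binval_lt_pow (S := S.filter (fun j => ¬ j < i))
    intro j hj
    rw [Finset.mem_filter] at hj
    have hij : i < j := by
      rcases lt_trichotomy i j with h | h | h
      · exact h
      · exact absurd (h ▸ hj.1) hiS
      · exact absurd h hj.2
    have := j.isLt
    have : (i : ℕ) < (j : ℕ) := hij
    omega
  have h2 : 2 ^ (n - 1 - (i : ℕ)) ≤ ∑ j ∈ T.filter (fun j => ¬ j < i), 2 ^ (n - 1 - (j : ℕ)) := by
    apply Finset.single_le_sum (f := fun j : Fin n => 2 ^ (n - 1 - (j : ℕ)))
    · intro j _; positivity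
    · exact Finset.mem_filter.2 ⟨hiT, lt_irrefl i⟩
  omega

def mu (S : Finset (Fin n)) : ℕ := S.card * 2 ^ n + binval S

lemma mu_lt_of_card_lt {S T : Finset (Fin n)} (h : S.card < T.card) : mu S < mu T := by
  have := binval_lt S
  have h2 : (S.card + 1) * 2 ^ n ≤ T.card * 2 ^ n := Nat.mul_le_mul_right _ h
  unfold mu
  nlinarith [binval_lt T]

lemma mu_union_lt {S M T : Finset (Fin n)} (h : glexLT S M) (hMT : M ⊆ T) :
    mu (S ∪ (T \ M)) < mu T := by
  have hcardMT : (T \ M).card + M.card = T.card := Finset.card_sdiff_add_card_eq_card hMT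
  rcases h with hcard | ⟨hcard, i, hiS, hiM, hag⟩
  · apply mu_lt_of_card_lt
    calc (S ∪ (T \ M)).card ≤ S.card + (T \ M).card := Finset.card_union_le _ _
      _ < M.card + (T \ M).card := by omega
      _ = T.card := by omega
  · by_cases hSR : (S ∩ (T \ M)).Nonempty
    · apply mu_lt_of_card_lt
      have := Finset.card_union_add_card_inter S (T \ M)
      have hpos : 0 < (S ∩ (T \ M)).card := Finset.card_pos.2 hSR
      omega
    · rw [Finset.not_nonempty_iff_eq_empty] at hSR
      have hdisjSR : Disjoint S (T \ M) := Finset.disjoint_iff_inter_eq_empty.2 hSR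
      have hdisjMR : Disjoint M (T \ M) := Finset.disjoint_sdiff
      have hcardU : (S ∪ (T \ M)).card = T.card := by
        rw [Finset.card_union_of_disjoint hdisjSR]; omega
      have hbS : binval (S ∪ (T \ M)) = binval S + binval (T \ M) :=
        Finset.sum_union hdisjSR
      have hbT : binval T = binval M + binval (T \ M) := by
        conv_lhs => rw [← Finset.union_sdiff_of_subset hMT]
        exact Finset.sum_union hdisjMR
      have hlt : binval S < binval M := binval_lt_of_pivot hiS hiM hag
      unfold mu
      rw [hcardU, hbS, hbT]
      omega



variable {F : Type u} [Field F] {n : ℕ}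

def chi (T : Finset (Fin n)) (x : Fin n → Bool) : F := if ∀ i ∈ T, x i = true then 1 else 0

def suppB (x : Fin n → Bool) : Finset (Fin n) := Finset.univ.filter (fun i => x i = true)

lemma suppB_injective : Function.Injective (suppB (n := n)) := by
  intro x y h
  funext i
  have hx : i ∈ suppB x ↔ i ∈ suppB y := by rw [h]
  simp only [suppB, Finset.mem_filter, Finset.mem_univ, true_and] at hx
  cases hxi : x i <;> cases hyi : y i <;> simp_all

lemma chi_eq (T : Finset (Fin n)) (x : Fin n → Bool) :
    (chi T x : F) = if T ⊆ suppB x then 1 else 0 := by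
  unfold chi suppB
  congr 1
  simp [Finset.subset_iff]

lemma evalPoly_eq (c : Finset (Fin n) → F) (x : Fin n → Bool) :
    evalPoly c x = ∑ S : Finset (Fin n), c S * chi S x := by
  unfold evalPoly chi
  apply Finset.sum_congr rfl
  intro S _
  split <;> simp

lemma chi_union (S T : Finset (Fin n)) (x : Fin n → Bool) :
    (chi (S ∪ T) x : F) = chi S x * chi T x := by
  unfold chi
  rw [if_congr Finset.forall_mem_union rfl rfl, ite_and]
  split_ifs <;> simp

def resZ (Z : Finset (Fin n → Bool)) (T : Finset (Fin n)) : ↥Z → F := fun a => chi T a.1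

lemma delta_mem_span (Z : Finset (Fin n → Bool)) (b : ↥Z) :
    (fun a : ↥Z => if a = b then (1 : F) else 0) ∈
      Submodule.span F (Set.range (resZ (F := F) Z)) := by
  set B := suppB b.1 with hB
  have hformula : (fun a : ↥Z => if a = b then (1 : F) else 0) =
      ∑ S ∈ Bᶜ.powerset, ((-1 : F) ^ S.card) • resZ Z (B ∪ S) := by
    funext a
    set A := suppB a.1 with hA
    have hZsum : (∑ S ∈ (Bᶜ ∩ A).powerset, (-1 : F) ^ S.card)
        = if Bᶜ ∩ A = ∅ then 1 else 0 := by
      have h := Finset.sum_powerset_neg_one_pow_card (x := Bᶜ ∩ A)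
      have h2 := congrArg (Int.cast : ℤ → F) h
      push_cast at h2
      convert h2 using 1
    have hval : (∑ S ∈ Bᶜ.powerset, ((-1 : F) ^ S.card) • resZ Z (B ∪ S)) a
        = chi B a.1 * ∑ S ∈ (Bᶜ ∩ A).powerset, (-1 : F) ^ S.card := by
      rw [Finset.sum_apply]
      have hterm : ∀ S ∈ Bᶜ.powerset, (((-1 : F) ^ S.card) • resZ Z (B ∪ S)) a
          = chi B a.1 * (if S ∈ (Bᶜ ∩ A).powerset then (-1 : F) ^ S.card else 0) := by
        intro S hS
        rw [Finset.mem_powerset] at hS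
        simp only [Pi.smul_apply, smul_eq_mul, resZ, chi_union]
        rw [chi_eq S, ← hA]
        simp only [Finset.mem_powerset, Finset.subset_inter_iff]
        by_cases hSA : S ⊆ A
        · simp only [hSA, hS, if_true, and_self]; ring
        · simp [hSA]
      rw [Finset.sum_congr rfl hterm, ← Finset.mul_sum]
      congr 1
      rw [Finset.sum_ite_mem, Finset.inter_eq_right.2
        (Finset.powerset_mono.2 Finset.inter_subset_left)]
    rw [hval, hZsum, chi_eq, ← hA]
    have hab : a = b ↔ (B ⊆ A ∧ Bᶜ ∩ A = ∅) := by
      have h1 : Bᶜ ∩ A = ∅ ↔ A ⊆ B := by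
        rw [Finset.inter_comm, Finset.eq_empty_iff_forall_notMem]
        simp only [Finset.mem_inter, Finset.mem_compl, not_and, not_not, Finset.subset_iff]
      rw [h1]
      constructor
      · rintro rfl; exact ⟨Finset.Subset.refl _, Finset.Subset.refl _⟩
      · rintro ⟨hBA, hAB⟩
        have : A = B := Finset.Subset.antisymm hAB hBA
        have : a.1 = b.1 := suppB_injective (by rw [← hA, ← hB, this])
        exact Subtype.ext this
    by_cases hab' : a = b
    · rw [if_pos hab']
      obtain ⟨h1, h2⟩ := hab.1 hab'
      rw [if_pos h1, if_pos h2]; ring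
    · rw [if_neg hab']
      rw [hab, not_and_or] at hab'
      rcases hab' with h | h
      · rw [if_neg h]; ring
      · rw [if_neg h]; ring
  rw [hformula]
  apply Submodule.sum_mem
  intro S _
  exact Submodule.smul_mem _ _ (Submodule.subset_span ⟨B ∪ S, rfl⟩)

lemma top_le_span_resZ (Z : Finset (Fin n → Bool)) :
    (⊤ : Submodule F (↥Z → F)) ≤ Submodule.span F (Set.range (resZ (F := F) Z)) := by
  intro f _
  have hf : f = ∑ b : ↥Z, f b • (fun a : ↥Z => if a = b then (1 : F) else 0) := by
    funext a
    rw [Finset.sum_apply]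
    simp [Pi.smul_apply]
  rw [hf]
  exact Submodule.sum_mem _ fun b _ => Submodule.smul_mem _ _ (delta_mem_span Z b)


lemma card_zeroset_le {F : Type u} [Field F] {n t : ℕ}
    (c : Fin t → Finset (Fin n) → F) (M : Fin t → Finset (Fin n))
    (hlm : ∀ i, IsLeadingMonomial (c i) (M i)) (I : Finset (Fin t)) :
    (Finset.univ.filter (fun a : Fin n → Bool => ∀ i ∈ I, evalPoly (c i) a = 0)).card
      ≤ (Finset.univ.filter (fun T : Finset (Fin n) => ∀ i ∈ I, ¬ M i ⊆ T)).card := by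
  set Z : Finset (Fin n → Bool) :=
    Finset.univ.filter (fun a : Fin n → Bool => ∀ i ∈ I, evalPoly (c i) a = 0) with hZ
  set Std : Finset (Finset (Fin n)) :=
    Finset.univ.filter (fun T : Finset (Fin n) => ∀ i ∈ I, ¬ M i ⊆ T) with hStd
  have claim : ∀ N : ℕ, ∀ T : Finset (Fin n), mu T < N →
      resZ (F := F) Z T ∈ Submodule.span F (resZ (F := F) Z '' (Std : Set (Finset (Fin n)))) := by
    intro N
    induction N with
    | zero => intro T hT; omega
    | succ N ih =>
      intro T hT
      by_cases hst : ∀ i ∈ I, ¬ M i ⊆ T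
      · exact Submodule.subset_span ⟨T, by simpa [hStd] using hst, rfl⟩
      · push_neg at hst
        obtain ⟨i, hiI, hMT⟩ := hst
        have hkey : ∀ a : ↥Z, ∑ S : Finset (Fin n), c i S * chi (F := F) (S ∪ (T \ M i)) a.1 = 0 := by
          intro a
          have ha : evalPoly (c i) a.1 = 0 := (Finset.mem_filter.1 a.2).2 i hiI
          calc ∑ S : Finset (Fin n), c i S * chi (F := F) (S ∪ (T \ M i)) a.1
              = (∑ S : Finset (Fin n), c i S * chi (F := F) S a.1) * chi (F := F) (T \ M i) a.1 := by
                rw [Finset.sum_mul]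
                exact Finset.sum_congr rfl fun S _ => by rw [chi_union]; ring
            _ = 0 := by rw [← evalPoly_eq, ha, zero_mul]
        have hMun : M i ∪ (T \ M i) = T := Finset.union_sdiff_of_subset hMT
        have hform : resZ (F := F) Z T = (-(c i (M i))⁻¹) •
            ∑ S ∈ Finset.univ.erase (M i), c i S • resZ (F := F) Z (S ∪ (T \ M i)) := by
          funext a
          have h0 := hkey a
          rw [← Finset.add_sum_erase _ _ (Finset.mem_univ (M i)), hMun] at h0
          have hc : (c i (M i)) ≠ 0 := (hlm i).1
          simp only [Pi.smul_apply, smul_eq_mul, Finset.sum_apply, resZ]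
          have hS2 : ∑ x ∈ Finset.univ.erase (M i), c i x * chi (F := F) (x ∪ T \ M i) a.1
              = -(c i (M i) * chi (F := F) T a.1) := by linear_combination h0
          rw [hS2]
          field_simp
        rw [hform]
        apply Submodule.smul_mem
        apply Submodule.sum_mem
        intro S hS
        by_cases hcS : c i S = 0
        · simp [hcS]
        · rcases (hlm i).2 S hcS with rfl | hglex
          · exact absurd rfl (Finset.ne_of_mem_erase hS)
          · have hmu : mu (S ∪ (T \ M i)) < mu T := mu_union_lt hglex hMT
            exact Submodule.smul_mem _ _ (ih _ (by omega))
  have hspan : Submodule.span F (resZ (F := F) Z '' (Std : Set (Finset (Fin n))))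
      = (⊤ : Submodule F (↥Z → F)) := by
    apply le_antisymm le_top
    refine le_trans (top_le_span_resZ Z) (Submodule.span_le.2 ?_)
    rintro _ ⟨T, rfl⟩
    exact claim (mu T + 1) T (Nat.lt_succ_self _)
  have h1 : Z.card = Module.finrank F (↥Z → F) := by
    rw [Module.finrank_pi, Fintype.card_coe]
  have h2 : Module.finrank F (↥Z → F) ≤ (Std.image (resZ (F := F) Z)).card := by
    have h3 := finrank_span_finset_le_card (R := F) (Std.image (resZ (F := F) Z))
    rw [Set.finrank, Finset.coe_image, hspan, finrank_top] at h3
    exact h3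
  calc Z.card = Module.finrank F (↥Z → F) := h1
    _ ≤ (Std.image (resZ (F := F) Z)).card := h2
    _ ≤ Std.card := Finset.card_image_le

lemma two_zpow_le_half {d : ℕ} (hd : 1 ≤ d) : (2 : ℝ) ^ (-(d : ℤ)) ≤ 1 / 2 := by
  rw [zpow_neg, zpow_natCast]
  rw [inv_le_comm₀ (by positivity) (by norm_num)]
  calc (1 / 2 : ℝ)⁻¹ = 2 ^ 1 := by norm_num
    _ ≤ 2 ^ d := by exact pow_le_pow_right₀ (by norm_num) hd

lemma std_count {n d t : ℕ} (hd : 1 ≤ d) (M : Fin t → Finset (Fin n))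
    (hcard : ∀ i, (M i).card ≤ d)
    (hdisj : ∀ i j, i ≠ j → Disjoint (M i) (M j)) (I : Finset (Fin t)) :
    ((Finset.univ.filter (fun T : Finset (Fin n) => ∀ i ∈ I, ¬ M i ⊆ T)).card : ℝ)
      ≤ (1 - 2 ^ (-(d : ℤ))) ^ I.card * 2 ^ n := by
  have hp0 : (0 : ℝ) ≤ 1 - 2 ^ (-(d : ℤ)) := by
    have := two_zpow_le_half hd; linarith
  induction I using Finset.induction with
  | empty =>
    simp only [Finset.notMem_empty, false_implies, implies_true, Finset.filter_true_of_mem,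
      Finset.card_empty, pow_zero, one_mul]
    rw [Finset.card_univ, Fintype.card_finset, Fintype.card_fin]
    norm_num
  | @insert r I hrI ih =>
    by_cases hMr : M r = ∅
    · have hempty : (Finset.univ.filter
          (fun T : Finset (Fin n) => ∀ i ∈ insert r I, ¬ M i ⊆ T)) = ∅ := by
        apply Finset.filter_false_of_mem
        intro T _ h
        exact (h r (Finset.mem_insert_self r I)) (hMr ▸ Finset.empty_subset T)
      rw [hempty]
      simp only [Finset.card_empty, Nat.cast_zero]
      positivity
    · set m := (M r).card with hm
      have hm1 : 1 ≤ m := Finset.card_pos.2 (Finset.nonempty_iff_ne_empty.2 hMr)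
      have hmd : m ≤ d := hcard r
      set G := ((M r)ᶜ.powerset.filter (fun T₀ : Finset (Fin n) => ∀ i ∈ I, ¬ M i ⊆ T₀)) with hG
      have hdisjMi : ∀ i ∈ I, Disjoint (M i) (M r) := fun i hi =>
        hdisj i r (fun h => hrI (h ▸ hi))
      -- bijection for A_I
      have hAI : (Finset.univ.filter (fun T : Finset (Fin n) => ∀ i ∈ I, ¬ M i ⊆ T)).card
          = G.card * 2 ^ m := by
        rw [← Finset.card_powerset, ← Finset.card_product]
        apply Finset.card_bij' (fun T _ => (T \ M r, T ∩ M r)) (fun q _ => q.1 ∪ q.2)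
        · intro T hT
          rw [Finset.mem_filter] at hT
          rw [Finset.mem_product, Finset.mem_powerset]
          constructor
          · rw [hG, Finset.mem_filter, Finset.mem_powerset]
            refine ⟨fun x hx => Finset.mem_compl.2 (Finset.mem_sdiff.1 hx).2, ?_⟩
            intro i hi hsub
            exact hT.2 i hi (hsub.trans (Finset.sdiff_subset))
          · exact Finset.inter_subset_right
        · rintro ⟨q1, q2⟩ hq
          rw [Finset.mem_product, Finset.mem_powerset] at hq
          obtain ⟨hq1, hq2⟩ := hq
          rw [hG, Finset.mem_filter, Finset.mem_powerset] at hq1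
          rw [Finset.mem_filter]
          refine ⟨Finset.mem_univ _, ?_⟩
          intro i hi hsub
          apply hq1.2 i hi
          intro x hx
          rcases Finset.mem_union.1 (hsub hx) with h | h
          · exact h
          · exact absurd (hq2 h) (Finset.disjoint_left.1 (hdisjMi i hi) hx)
        · intro T _
          exact Finset.sdiff_union_inter T (M r)
        · rintro ⟨q1, q2⟩ hq
          rw [Finset.mem_product, Finset.mem_powerset] at hq
          obtain ⟨hq1, hq2⟩ := hq
          rw [hG, Finset.mem_filter, Finset.mem_powerset] at hq1
          have hd1 : Disjoint q1 (M r) := Finset.disjoint_left.2 fun x hx =>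
            Finset.mem_compl.1 (hq1.1 hx)
          have e1 : (q1 ∪ q2) \ M r = q1 := by
            rw [Finset.union_sdiff_distrib, Finset.sdiff_eq_empty_iff_subset.2 hq2,
              Finset.union_empty, Finset.sdiff_eq_self_of_disjoint hd1]
          have e2 : (q1 ∪ q2) ∩ M r = q2 := by
            rw [Finset.union_inter_distrib_right, (Finset.inter_eq_left).2 hq2,
              Finset.disjoint_iff_inter_eq_empty.1 hd1, Finset.empty_union]
          exact Prod.ext e1 e2
      -- bijection for A_{insert r I}
      have hAI' : (Finset.univ.filter
            (fun T : Finset (Fin n) => ∀ i ∈ insert r I, ¬ M i ⊆ T)).card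
          = G.card * (2 ^ m - 1) := by
        have hcarderase : ((M r).powerset.erase (M r)).card = 2 ^ m - 1 := by
          rw [Finset.card_erase_of_mem (Finset.mem_powerset_self _), Finset.card_powerset]
        rw [← hcarderase, ← Finset.card_product]
        apply Finset.card_bij' (fun T _ => (T \ M r, T ∩ M r)) (fun q _ => q.1 ∪ q.2)
        · intro T hT
          rw [Finset.mem_filter] at hT
          have hTr := hT.2 r (Finset.mem_insert_self r I)
          have hTI : ∀ i ∈ I, ¬ M i ⊆ T := fun i hi =>
            hT.2 i (Finset.mem_insert_of_mem hi)
          rw [Finset.mem_product, Finset.mem_erase, Finset.mem_powerset]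
          refine ⟨?_, ?_, Finset.inter_subset_right⟩
          · rw [hG, Finset.mem_filter, Finset.mem_powerset]
            refine ⟨fun x hx => Finset.mem_compl.2 (Finset.mem_sdiff.1 hx).2, ?_⟩
            intro i hi hsub
            exact hTI i hi (hsub.trans (Finset.sdiff_subset))
          · intro heq
            exact hTr (fun x hx => Finset.mem_inter.1 (heq ▸ hx) |>.1)
        · rintro ⟨q1, q2⟩ hq
          rw [Finset.mem_product, Finset.mem_erase, Finset.mem_powerset] at hq
          obtain ⟨hq1, hq2ne, hq2⟩ := hq
          rw [hG, Finset.mem_filter, Finset.mem_powerset] at hq1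
          rw [Finset.mem_filter]
          refine ⟨Finset.mem_univ _, ?_⟩
          intro i hi
          rcases Finset.mem_insert.1 hi with rfl | hiI'
          · intro hsub
            apply hq2ne
            apply Finset.Subset.antisymm hq2
            intro x hx
            rcases Finset.mem_union.1 (hsub hx) with h | h
            · exact absurd hx (Finset.mem_compl.1 (hq1.1 h))
            · exact h
          · intro hsub
            apply hq1.2 i hiI'
            intro x hx
            rcases Finset.mem_union.1 (hsub hx) with h | h
            · exact h
            · exact absurd (hq2 h) (Finset.disjoint_left.1 (hdisjMi i hiI') hx)
        · intro T _
          exact Finset.sdiff_union_inter T (M r)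
        · rintro ⟨q1, q2⟩ hq
          rw [Finset.mem_product, Finset.mem_erase, Finset.mem_powerset] at hq
          obtain ⟨hq1, _, hq2⟩ := hq
          rw [hG, Finset.mem_filter, Finset.mem_powerset] at hq1
          have hd1 : Disjoint q1 (M r) := Finset.disjoint_left.2 fun x hx =>
            Finset.mem_compl.1 (hq1.1 hx)
          have e1 : (q1 ∪ q2) \ M r = q1 := by
            rw [Finset.union_sdiff_distrib, Finset.sdiff_eq_empty_iff_subset.2 hq2,
              Finset.union_empty, Finset.sdiff_eq_self_of_disjoint hd1]
          have e2 : (q1 ∪ q2) ∩ M r = q2 := by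
            rw [Finset.union_inter_distrib_right, (Finset.inter_eq_left).2 hq2,
              Finset.disjoint_iff_inter_eq_empty.1 hd1, Finset.empty_union]
          exact Prod.ext e1 e2
      -- real arithmetic
      rw [hAI', Finset.card_insert_of_notMem hrI]
      have hAIreal : (G.card : ℝ) * 2 ^ m ≤ (1 - 2 ^ (-(d : ℤ))) ^ I.card * 2 ^ n := by
        have h := ih
        rw [hAI] at h
        push_cast at h
        exact h
      have hfac : ((2 : ℝ) ^ m - 1) ≤ (1 - 2 ^ (-(d : ℤ))) * 2 ^ m := by
        have h2m : ((2 : ℝ) ^ (-(d : ℤ))) * 2 ^ m ≤ 1 := by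
          rw [zpow_neg, zpow_natCast]
          rw [inv_mul_le_iff₀ (by positivity), mul_one]
          exact pow_le_pow_right₀ (by norm_num) hmd
        nlinarith
      have hcast : ((G.card * (2 ^ m - 1) : ℕ) : ℝ) = (G.card : ℝ) * ((2:ℝ) ^ m - 1) := by
        have : (1 : ℕ) ≤ 2 ^ m := Nat.one_le_two_pow
        push_cast [this]
        ring
      rw [hcast, pow_succ]
      calc (G.card : ℝ) * ((2:ℝ) ^ m - 1)
          ≤ (G.card : ℝ) * ((1 - 2 ^ (-(d : ℤ))) * 2 ^ m) := by
            apply mul_le_mul_of_nonneg_left hfac (Nat.cast_nonneg _)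
        _ = (1 - 2 ^ (-(d : ℤ))) * ((G.card : ℝ) * 2 ^ m) := by ring
        _ ≤ (1 - 2 ^ (-(d : ℤ))) * ((1 - 2 ^ (-(d : ℤ))) ^ I.card * 2 ^ n) := by
            apply mul_le_mul_of_nonneg_left hAIreal hp0
        _ = (1 - 2 ^ (-(d : ℤ))) ^ I.card * (1 - 2 ^ (-(d : ℤ))) * 2 ^ n := by ring

lemma key_prob {F : Type u} [Field F] {n d t : ℕ} (hd : 1 ≤ d)
    (c : Fin t → Finset (Fin n) → F)
    (hdeg : ∀ i (T : Finset (Fin n)), d < T.card → c i T = 0)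
    (M : Fin t → Finset (Fin n)) (hlm : ∀ i, IsLeadingMonomial (c i) (M i))
    (hdisj : ∀ i j, i ≠ j → Disjoint (M i) (M j)) (I : Finset (Fin t)) :
    ((Finset.univ.filter (fun a : Fin n → Bool => ∀ i ∈ I, evalPoly (c i) a = 0)).card : ℝ)
      ≤ (1 - 2 ^ (-(d : ℤ))) ^ I.card * 2 ^ n := by
  have hcard : ∀ i, (M i).card ≤ d := by
    intro i
    by_contra h
    push_neg at h
    exact (hlm i).1 (hdeg i (M i) h)
  calc ((Finset.univ.filter (fun a : Fin n → Bool => ∀ i ∈ I, evalPoly (c i) a = 0)).card : ℝ)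
      ≤ ((Finset.univ.filter (fun T : Finset (Fin n) => ∀ i ∈ I, ¬ M i ⊆ T)).card : ℝ) := by
        exact_mod_cast card_zeroset_le c M hlm I
    _ ≤ (1 - 2 ^ (-(d : ℤ))) ^ I.card * 2 ^ n := std_count hd M hcard hdisj I

end Stmt10Aux

set_option maxHeartbeats 1000000 in
/-- Tail bound for degree-`d` polynomials with pairwise disjoint leading monomials:
for a uniformly random `a ∈ {0,1}ⁿ`, the probability that at least
`(1 − 2^{-d} + η)·t` of the polynomials vanish at `a` is at most `exp(−Ω(η² t))`. -/
theorem stmt10 :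
    ∃ γ : ℝ, 0 < γ ∧
      ∀ (F : Type u) [Field F] (n d t : ℕ), 1 ≤ d →
        ∀ (c : Fin t → Finset (Fin n) → F),
          (∀ i (T : Finset (Fin n)), d < T.card → c i T = 0) →
          ∀ (M : Fin t → Finset (Fin n)),
            (∀ i, IsLeadingMonomial (c i) (M i)) →
            (∀ i j, i ≠ j → Disjoint (M i) (M j)) →
            ∀ η : ℝ, 0 < η →
              ((Finset.univ.filter (fun a : Fin n → Bool =>
                  (1 - (2 : ℝ) ^ (-(d : ℤ)) + η) * t ≤
                    ((Finset.univ.filter (fun i : Fin t => evalPoly (c i) a = 0)).card : ℝ))).card : ℝ)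
                ≤ Real.exp (-(γ * η ^ 2 * t)) * 2 ^ n := by
  refine ⟨1/4, by norm_num, ?_⟩
  intro F _ n d t hd c hdeg M hlm hdisj η hη
  have h2d : (2 : ℝ) ^ (-(d : ℤ)) ≤ 1 / 2 := Stmt10Aux.two_zpow_le_half hd
  have h2dpos : (0 : ℝ) < 2 ^ (-(d : ℤ)) := by positivity
  set p : ℝ := 1 - 2 ^ (-(d : ℤ)) with hp
  have hp_half : (1/2 : ℝ) ≤ p := by rw [hp]; linarith
  have hp_lt1 : p < 1 := by rw [hp]; linarith
  set Zs : (Fin n → Bool) → Finset (Fin t) :=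
    fun a => Finset.univ.filter (fun i : Fin t => evalPoly (c i) a = 0) with hZs
  set A : Finset (Fin n → Bool) := Finset.univ.filter (fun a : Fin n → Bool =>
      (p + η) * t ≤ ((Zs a).card : ℝ)) with hA
  show (A.card : ℝ) ≤ Real.exp (-(1/4 * η ^ 2 * t)) * 2 ^ n
  rcases Nat.eq_zero_or_pos t with rfl | ht
  · calc (A.card : ℝ) ≤ ((Finset.univ : Finset (Fin n → Bool)).card : ℝ) := by
          exact_mod_cast Finset.card_le_card (Finset.filter_subset _ _)
      _ = 2 ^ n := by
          rw [Finset.card_univ, Fintype.card_fun, Fintype.card_bool, Fintype.card_fin]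
          norm_num
      _ ≤ Real.exp (-(1/4 * η ^ 2 * ((0:ℕ):ℝ))) * 2 ^ n := by
          push_cast
          norm_num
  have htR : (1 : ℝ) ≤ t := by exact_mod_cast ht
  clear_value Zs A p
  by_cases hgt : 1 < p + η
  · have hAempty : A = ∅ := by
      apply Finset.eq_empty_of_forall_notMem
      intro a ha
      rw [hA, Finset.mem_filter] at ha
      have h1 : ((Zs a).card : ℝ) ≤ t := by
        have := Finset.card_filter_le (Finset.univ : Finset (Fin t))
          (fun i => evalPoly (c i) a = 0)
        rw [Finset.card_univ, Fintype.card_fin] at this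
        rw [hZs]
        exact_mod_cast this
      nlinarith [ha.2]
    rw [hAempty]
    simp only [Finset.card_empty, Nat.cast_zero]
    positivity
  push_neg at hgt
  have hηd : η ≤ 2 ^ (-(d : ℤ)) := by rw [hp] at hgt; linarith
  have hη1 : η ≤ 1/2 := le_trans hηd h2d
  set k := ⌈η * t / 2⌉₊ with hk
  clear_value k
  have hηt2 : (0 : ℝ) < η * t / 2 := by positivity
  have hk_ge : η * t / 2 ≤ (k : ℝ) := by rw [hk]; exact Nat.le_ceil _
  have hk_lt : (k : ℝ) < η * t / 2 + 1 := by
    rw [hk]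
    exact_mod_cast Nat.ceil_lt_add_one (le_of_lt hηt2)
  have hden : (0 : ℝ) < (p + η/2) * t := by positivity
  have hjb : ∀ j ∈ Finset.range k, (p + η/2) * t ≤ (p + η) * t - j := by
    intro j hj
    have hjk : (j : ℝ) ≤ (k : ℝ) - 1 := by
      have := Finset.mem_range.1 hj
      have : (j : ℝ) + 1 ≤ (k : ℝ) := by exact_mod_cast this
      linarith
    have : (j : ℝ) < η * t / 2 := by linarith
    nlinarith
  have hjb' : ∀ j ∈ Finset.range k, (0:ℝ) ≤ (p + η) * t - j := fun j hj =>
    le_trans (le_of_lt hden) (hjb j hj)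
  set L : ℝ := ∏ j ∈ Finset.range k, ((p + η) * t - j) with hL
  set P : Finset (Finset (Fin t)) := (Finset.univ : Finset (Fin t)).powersetCard k with hP
  -- Step 1 : double counting in ℕ
  have step1 : ∑ a ∈ A, ((Zs a).card.choose k) ≤
      ∑ I ∈ P, (Finset.univ.filter
        (fun a : Fin n → Bool => ∀ i ∈ I, evalPoly (c i) a = 0)).card := by
    have h1 : ∀ a ∈ A, (Zs a).card.choose k
        = ∑ I ∈ P, (if I ⊆ Zs a then 1 else 0) := by
      intro a _
      have hsub : (Zs a).powersetCard k ⊆ P := by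
        rw [hP]; exact Finset.powersetCard_mono (Finset.subset_univ _)
      rw [← Finset.card_powersetCard]
      rw [eq_comm]
      calc ∑ I ∈ P, (if I ⊆ Zs a then 1 else 0)
          = ∑ I ∈ P, (if I ∈ (Zs a).powersetCard k then 1 else 0) := by
            apply Finset.sum_congr rfl
            intro I hI
            have hIk : I.card = k := (Finset.mem_powersetCard.1 (hP ▸ hI)).2
            apply if_congr _ rfl rfl
            rw [Finset.mem_powersetCard]
            exact ⟨fun h => ⟨h, hIk⟩, fun h => h.1⟩
        _ = ∑ I ∈ P ∩ (Zs a).powersetCard k, 1 := Finset.sum_ite_mem _ _ _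
        _ = ((Zs a).powersetCard k).card := by
            rw [Finset.inter_eq_right.2 hsub, Finset.sum_const, smul_eq_mul, mul_one]
    rw [Finset.sum_congr rfl h1, Finset.sum_comm]
    apply Finset.sum_le_sum
    intro I _
    calc ∑ a ∈ A, (if I ⊆ Zs a then 1 else 0)
        ≤ ∑ a ∈ (Finset.univ : Finset (Fin n → Bool)), (if I ⊆ Zs a then 1 else 0) :=
          Finset.sum_le_sum_of_subset (by rw [hA]; exact Finset.filter_subset _ _)
      _ = (Finset.univ.filter (fun a : Fin n → Bool => I ⊆ Zs a)).card :=
          (Finset.card_filter _ _).symm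
      _ = (Finset.univ.filter
            (fun a : Fin n → Bool => ∀ i ∈ I, evalPoly (c i) a = 0)).card := by
          congr 1
          apply Finset.filter_congr
          intro a _
          rw [hZs]
          simp [Finset.subset_iff]
  -- Step 2 : per-element lower bound
  have hL_le : ∀ a ∈ A, L ≤ ((Zs a).card.choose k : ℝ) * (k.factorial : ℝ) := by
    intro a ha
    have hc : (p + η) * t ≤ ((Zs a).card : ℝ) := by
      rw [hA, Finset.mem_filter] at ha
      exact ha.2
    have hkm : k ≤ (Zs a).card := by
      have h1 : (k : ℝ) < ((Zs a).card : ℝ) + 1 := by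
        have h2 : η * t / 2 ≤ (p + η) * t := by nlinarith
        linarith
      exact_mod_cast Nat.lt_succ_iff.1 (by exact_mod_cast h1)
    have hdesc : ((Zs a).card.choose k : ℝ) * (k.factorial : ℝ)
        = (((Zs a).card.descFactorial k : ℕ) : ℝ) := by
      rw [Nat.descFactorial_eq_factorial_mul_choose]
      push_cast
      ring
    rw [hdesc, Nat.descFactorial_eq_prod_range, Nat.cast_prod, hL]
    apply Finset.prod_le_prod hjb'
    intro j hj
    have hjk : j < k := Finset.mem_range.1 hj
    have hjcard : j ≤ (Zs a).card := le_trans (le_of_lt hjk) hkm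
    rw [Nat.cast_sub hjcard]
    have : (j : ℝ) ≤ (j : ℝ) := le_refl _
    linarith
  -- Step 3 : assemble
  have hp0 : (0 : ℝ) ≤ p := by linarith
  have big : (A.card : ℝ) * L ≤ ((t : ℝ) * p) ^ k * 2 ^ n := by
    have c3 : ∑ a ∈ A, ((Zs a).card.choose k : ℝ) * (k.factorial : ℝ)
        = ((∑ a ∈ A, (Zs a).card.choose k : ℕ) : ℝ) * (k.factorial : ℝ) := by
      rw [← Finset.sum_mul]
      push_cast
      ring
    have c5 : ((∑ I ∈ P, (Finset.univ.filter
          (fun a : Fin n → Bool => ∀ i ∈ I, evalPoly (c i) a = 0)).card : ℕ) : ℝ)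
        ≤ (t.choose k : ℝ) * (p ^ k * 2 ^ n) := by
      push_cast
      calc ∑ I ∈ P, ((Finset.univ.filter
            (fun a : Fin n → Bool => ∀ i ∈ I, evalPoly (c i) a = 0)).card : ℝ)
          ≤ ∑ _I ∈ P, p ^ k * 2 ^ n := by
            apply Finset.sum_le_sum
            intro I hI
            have hIc : I.card = k := (Finset.mem_powersetCard.1 (hP ▸ hI)).2
            have hkp := Stmt10Aux.key_prob hd c hdeg M hlm hdisj I
            rw [hIc] at hkp
            rw [hp]
            exact hkp
        _ = (P.card : ℝ) * (p ^ k * 2 ^ n) := by rw [Finset.sum_const, nsmul_eq_mul]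
        _ = (t.choose k : ℝ) * (p ^ k * 2 ^ n) := by
            rw [hP, Finset.card_powersetCard, Finset.card_univ, Fintype.card_fin]
    have c6 : (t.choose k : ℝ) * (k.factorial : ℝ) ≤ (t : ℝ) ^ k := by
      calc (t.choose k : ℝ) * (k.factorial : ℝ) = ((t.descFactorial k : ℕ) : ℝ) := by
            rw [Nat.descFactorial_eq_factorial_mul_choose]
            push_cast
            ring
        _ ≤ ((t ^ k : ℕ) : ℝ) := by exact_mod_cast Nat.descFactorial_le_pow _ _
        _ = (t : ℝ) ^ k := by push_cast; ring
    calc (A.card : ℝ) * L = ∑ _a ∈ A, L := by rw [Finset.sum_const, nsmul_eq_mul]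
      _ ≤ ∑ a ∈ A, ((Zs a).card.choose k : ℝ) * (k.factorial : ℝ) := Finset.sum_le_sum hL_le
      _ = ((∑ a ∈ A, (Zs a).card.choose k : ℕ) : ℝ) * (k.factorial : ℝ) := c3
      _ ≤ ((∑ I ∈ P, (Finset.univ.filter
            (fun a : Fin n → Bool => ∀ i ∈ I, evalPoly (c i) a = 0)).card : ℕ) : ℝ)
            * (k.factorial : ℝ) := by
          apply mul_le_mul_of_nonneg_right _ (by positivity)
          exact_mod_cast step1
      _ ≤ ((t.choose k : ℝ) * (p ^ k * 2 ^ n)) * (k.factorial : ℝ) :=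
          mul_le_mul_of_nonneg_right c5 (by positivity)
      _ = ((t.choose k : ℝ) * (k.factorial : ℝ)) * (p ^ k * 2 ^ n) := by ring
      _ ≤ (t : ℝ) ^ k * (p ^ k * 2 ^ n) := by
          apply mul_le_mul_of_nonneg_right c6
          exact mul_nonneg (pow_nonneg hp0 k) (by positivity)
      _ = ((t : ℝ) * p) ^ k * 2 ^ n := by rw [mul_pow]; ring
  have hLlow : ((p + η/2) * t) ^ k ≤ L := by
    have e : ((p + η/2) * t) ^ k = ∏ _j ∈ Finset.range k, ((p + η/2) * t) := by
      rw [Finset.prod_const, Finset.card_range]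
    rw [e, hL]
    exact Finset.prod_le_prod (fun j _ => le_of_lt hden) hjb
  have hpow_pos : (0 : ℝ) < ((p + η/2) * t) ^ k := pow_pos hden k
  have hfinal1 : (A.card : ℝ) * ((p + η/2) * t) ^ k ≤ ((t : ℝ) * p) ^ k * 2 ^ n :=
    le_trans (mul_le_mul_of_nonneg_left hLlow (Nat.cast_nonneg _)) big
  have ht0 : (t : ℝ) ≠ 0 := by linarith
  have hpe : (p + η/2) ≠ 0 := by linarith
  have hfinal2 : (A.card : ℝ) ≤ (p / (p + η/2)) ^ k * 2 ^ n := by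
    have hdiveq : ((t : ℝ) * p) ^ k * 2 ^ n / ((p + η/2) * t) ^ k
        = (p / (p + η/2)) ^ k * 2 ^ n := by
      have e1 : (t : ℝ) * p / ((p + η/2) * t) = p / (p + η/2) := by
        field_simp
      calc ((t : ℝ) * p) ^ k * 2 ^ n / ((p + η/2) * t) ^ k
          = ((t : ℝ) * p / ((p + η/2) * t)) ^ k * 2 ^ n := by rw [div_pow]; ring
        _ = (p / (p + η/2)) ^ k * 2 ^ n := by rw [e1]
    rw [← hdiveq, le_div_iff₀ hpow_pos]
    exact hfinal1
  have hq_exp : p / (p + η/2) ≤ Real.exp (-(η/2)) := by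
    have h1 : p / (p + η/2) ≤ 1 - η/2 := by
      rw [div_le_iff₀ (by linarith)]
      nlinarith
    have h2 : 1 - η/2 ≤ Real.exp (-(η/2)) := by
      have := Real.add_one_le_exp (-(η/2))
      linarith
    linarith
  have hq_nonneg : (0 : ℝ) ≤ p / (p + η/2) := div_nonneg hp0 (by linarith)
  have hfinal3 : (p / (p + η/2)) ^ k ≤ Real.exp (-(η/2)) ^ k :=
    pow_le_pow_left₀ hq_nonneg hq_exp k
  have hfinal4 : Real.exp (-(η/2)) ^ k = Real.exp (-(η/2) * k) := by
    rw [← Real.exp_nat_mul]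
    congr 1
    ring
  have hfinal5 : Real.exp (-(η/2) * k) ≤ Real.exp (-(1/4 * η^2 * t)) := by
    apply Real.exp_le_exp.2
    nlinarith [hk_ge, hη]
  calc (A.card : ℝ) ≤ (p / (p + η/2)) ^ k * 2 ^ n := hfinal2
    _ ≤ Real.exp (-(1/4 * η^2 * t)) * 2 ^ n := by
        apply mul_le_mul_of_nonneg_right _ (by positivity)
        calc (p / (p + η/2)) ^ k ≤ Real.exp (-(η/2)) ^ k := hfinal3
          _ = Real.exp (-(η/2) * k) := hfinal4
          _ ≤ _ := hfinal5
end

section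
/- Let Z_1,…,Z_t be Boolean (i.e., {0,1}-valued) random variables and α ∈ [0,1] such that for every subset I ⊆ [t], Pr[∧_{i∈I} Z_i = 1] ≤ α^{|I|}. Then for every η > 0, Pr[Σ_{i=1}^t Z_i ≥ (α + η)t] ≤ exp(−Ω(η² t)). -/
open Finset MeasureTheory

set_option maxHeartbeats 1000000

universe u

/-- Panconesi–Srinivasan generalized Chernoff–Hoeffding bound: if Boolean random
variables `Z₁, …, Z_t` satisfy `Pr[∧_{i∈I} Z_i = 1] ≤ α^{|I|}` for every `I ⊆ [t]`,
then `Pr[Σ Z_i ≥ (α+η)t] ≤ exp(−Ω(η² t))`. -/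
theorem stmt11 :
    ∃ γ : ℝ, 0 < γ ∧
      ∀ (Ω : Type u) [MeasurableSpace Ω] (μ : Measure Ω) [IsProbabilityMeasure μ]
        (t : ℕ) (Z : Fin t → Ω → Bool) (α η : ℝ),
        0 ≤ α → α ≤ 1 → 0 < η →
        (∀ I : Finset (Fin t),
          μ {ω | ∀ i ∈ I, Z i ω = true} ≤ ENNReal.ofReal (α ^ I.card)) →
        μ {ω | (α + η) * t ≤ ((Finset.univ.filter (fun i => Z i ω = true)).card : ℝ)}
          ≤ ENNReal.ofReal (Real.exp (-(γ * η ^ 2 * t))) := by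
  refine ⟨1/6, by norm_num, ?_⟩
  intro Ω _ μ _ t Z α η hα0 hα1 hη hhyp
  rcases Nat.eq_zero_or_pos t with ht0 | ht
  · subst ht0
    simp only [Nat.cast_zero, mul_zero, neg_zero, Real.exp_zero, ENNReal.ofReal_one]
    exact prob_le_one
  have ht1 : (1:ℝ) ≤ t := by exact_mod_cast ht
  by_cases hβ : 1 < α + η
  · have hemp : {ω | (α + η) * t ≤ ((Finset.univ.filter (fun i => Z i ω = true)).card : ℝ)} = ∅ := by
      ext ω
      simp only [Set.mem_setOf_eq, Set.mem_empty_iff_false, iff_false, not_le]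
      calc ((Finset.univ.filter (fun i => Z i ω = true)).card : ℝ)
          ≤ t := by
            have h := (Finset.card_filter_le Finset.univ (fun i => Z i ω = true)).trans
              (le_of_eq (by simp : (Finset.univ : Finset (Fin t)).card = t))
            exact_mod_cast h
        _ < (α + η) * t := by nlinarith
    rw [hemp]
    simp
  push_neg at hβ
  have hη1 : η ≤ 1 := by linarith
  -- choices
  set s : ℕ := ⌈η * t / 2⌉₊ with hs_def
  set k : ℕ := ⌈(α + η) * t⌉₊ with hk_def
  have hηt : 0 < η * t / 2 := by positivity
  have hs1 : 1 ≤ s := by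
    have := Nat.ceil_pos.mpr hηt
    omega
  have hsk : s ≤ k := Nat.ceil_le_ceil (by nlinarith)
  have hkr : (α + η) * t ≤ k := Nat.le_ceil _
  have hsr : (s : ℝ) ≤ η * t / 2 + 1 := (Nat.ceil_lt_add_one hηt.le).le
  have hsr2 : η * t / 2 ≤ (s : ℝ) := Nat.le_ceil _
  have hks : (α + η / 2) * t ≤ ((k + 1 - s : ℕ) : ℝ) := by
    have hcast : ((k + 1 - s : ℕ) : ℝ) = (k : ℝ) + 1 - s := by
      have : s ≤ k + 1 := hsk.trans (Nat.le_succ _)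
      push_cast [Nat.cast_sub this]
      ring
    rw [hcast]; linarith
  have hc1pos : (0:ℝ) < (α + η / 2) * t := by positivity
  have hkle : ∀ x : ℕ, (α + η) * t ≤ x → k ≤ x := fun x hx => Nat.ceil_le.mpr hx
  clear_value s k
  -- events
  set B : Finset (Fin t) → Set Ω := fun I => {ω | ∀ i ∈ I, Z i ω = true} with hB_def
  set G : Finset (Fin t) → Set Ω := fun I => toMeasurable μ (B I) with hG_def
  set g : Ω → ENNReal := fun ω => ∑ I ∈ Finset.powersetCard s Finset.univ, (G I).indicator 1 ω
    with hg_def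
  have hGmeas : ∀ I, MeasurableSet (G I) := fun I => measurableSet_toMeasurable μ _
  have hgmeas : Measurable g :=
    Finset.measurable_sum _ fun I _ => measurable_const.indicator (hGmeas I)
  -- integral bound
  have hint : ∫⁻ ω, g ω ∂μ ≤ (t.choose s : ENNReal) * ENNReal.ofReal (α ^ s) := by
    have heq : ∫⁻ ω, g ω ∂μ = ∑ I ∈ Finset.powersetCard s Finset.univ, μ (G I) := by
      simp only [hg_def]
      rw [lintegral_finset_sum (f := fun I => (G I).indicator 1) _ fun I _ => measurable_const.indicator (hGmeas I)]
      exact Finset.sum_congr rfl fun I _ => lintegral_indicator_one (hGmeas I)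
    rw [heq]
    calc ∑ I ∈ Finset.powersetCard s Finset.univ, μ (G I)
        ≤ ∑ I ∈ Finset.powersetCard s Finset.univ, ENNReal.ofReal (α ^ s) := by
          refine Finset.sum_le_sum fun I hI => ?_
          rw [hG_def, measure_toMeasurable]
          have hcard : I.card = s := (Finset.mem_powersetCard.mp hI).2
          simpa [hB_def, hcard] using hhyp I
      _ = (t.choose s : ENNReal) * ENNReal.ofReal (α ^ s) := by
          rw [Finset.sum_const, nsmul_eq_mul, Finset.card_powersetCard, Finset.card_univ,
            Fintype.card_fin]
  -- event inclusion
  have hsub : {ω | (α + η) * t ≤ ((Finset.univ.filter (fun i => Z i ω = true)).card : ℝ)}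
      ⊆ {ω | (k.choose s : ENNReal) ≤ g ω} := by
    intro ω hω
    set S := Finset.univ.filter (fun i => Z i ω = true) with hS_def
    have hkS : k ≤ S.card := hkle _ hω
    have hsum : ∑ I ∈ Finset.powersetCard s S, (G I).indicator 1 ω ≤ g ω := by
      refine Finset.sum_le_sum_of_subset (Finset.powersetCard_mono (Finset.subset_univ S))
    have hone : ∀ I ∈ Finset.powersetCard s S, (G I).indicator (1 : Ω → ENNReal) ω = 1 := by
      intro I hI
      have hIS : I ⊆ S := (Finset.mem_powersetCard.mp hI).1
      have hωB : ω ∈ B I := by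
        intro i hi
        exact (Finset.mem_filter.mp (hIS hi)).2
      exact Set.indicator_of_mem (subset_toMeasurable μ _ hωB) 1
    have : (∑ I ∈ Finset.powersetCard s S, (G I).indicator (1 : Ω → ENNReal) ω)
        = (S.card.choose s : ENNReal) := by
      rw [Finset.sum_congr rfl hone, Finset.sum_const, nsmul_eq_mul, mul_one,
        Finset.card_powersetCard]
    have hle : (k.choose s : ENNReal) ≤ (S.card.choose s : ENNReal) := by
      exact_mod_cast Nat.choose_le_choose s hkS
    exact le_trans (hle.trans this.ge) hsum
  -- Markov
  have hchoosepos : 0 < k.choose s := Nat.choose_pos hsk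
  have hc0 : (k.choose s : ENNReal) ≠ 0 := by exact_mod_cast hchoosepos.ne'
  have hctop : (k.choose s : ENNReal) ≠ ⊤ := ENNReal.natCast_ne_top _
  have hmark := meas_ge_le_lintegral_div (μ := μ) hgmeas.aemeasurable hc0 hctop
  have hμ : μ {ω | (α + η) * t ≤ ((Finset.univ.filter (fun i => Z i ω = true)).card : ℝ)}
      ≤ ((t.choose s : ENNReal) * ENNReal.ofReal (α ^ s)) / (k.choose s : ENNReal) :=
    (measure_mono hsub).trans (hmark.trans (ENNReal.div_le_div_right hint _))
  refine hμ.trans ?_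
  -- final real inequality
  rw [ENNReal.div_le_iff hc0 hctop]
  rw [← ENNReal.ofReal_natCast (t.choose s), ← ENNReal.ofReal_natCast (k.choose s),
    ← ENNReal.ofReal_mul (by positivity), ← ENNReal.ofReal_mul (Real.exp_nonneg _)]
  refine ENNReal.ofReal_le_ofReal ?_
  -- ★ : (t.choose s) * α^s ≤ exp(-(1/6*η^2*t)) * (k.choose s)
  set c1 : ℝ := ((k + 1 - s : ℕ) : ℝ) with hc1_def
  have hc1pos' : (0:ℝ) < c1 := lt_of_lt_of_le hc1pos hks
  -- nat inequality
  have hnat : t.choose s * (k + 1 - s) ^ s ≤ k.choose s * t ^ s := by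
    calc t.choose s * (k + 1 - s) ^ s ≤ t.choose s * k.descFactorial s :=
          Nat.mul_le_mul_left _ (Nat.pow_sub_le_descFactorial k s)
      _ = t.choose s * (s.factorial * k.choose s) := by
          rw [Nat.descFactorial_eq_factorial_mul_choose]
      _ = (s.factorial * t.choose s) * k.choose s := by ring
      _ = t.descFactorial s * k.choose s := by rw [Nat.descFactorial_eq_factorial_mul_choose]
      _ ≤ t ^ s * k.choose s := Nat.mul_le_mul_right _ (Nat.descFactorial_le_pow t s)
      _ = k.choose s * t ^ s := by ring
  have hnatR : (t.choose s : ℝ) * c1 ^ s ≤ (k.choose s : ℝ) * (t:ℝ) ^ s := by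
    rw [hc1_def]
    exact_mod_cast hnat
  -- key exponential bound: (α/(α+η/2))^s ≤ exp(-(1/6*η^2*t))
  set r : ℝ := α / (α + η / 2) with hr_def
  have hrnn : 0 ≤ r := by positivity
  have hrs : r ^ s ≤ Real.exp (-(1/6 * η ^ 2 * t)) := by
    rcases eq_or_lt_of_le hα0 with hα | hα
    · rw [hr_def, ← hα]
      simp only [zero_div]
      rw [zero_pow (by omega)]
      positivity
    · have hrpos : 0 < r := by positivity
      have hlog : Real.log r ≤ -(η / 3) := by
        have h1 : Real.log r ≤ r - 1 := Real.log_le_sub_one_of_pos hrpos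
        have h2 : r ≤ 1 - η / 3 := by
          rw [hr_def, div_le_iff₀ (by positivity)]
          nlinarith
        linarith
      have hsl : (s : ℝ) * Real.log r ≤ -(1/6 * η ^ 2 * t) := by
        have h3 : (s : ℝ) * Real.log r ≤ (s : ℝ) * (-(η / 3)) :=
          mul_le_mul_of_nonneg_left hlog (by positivity)
        have h4 : (s : ℝ) * (-(η / 3)) ≤ (η * t / 2) * (-(η / 3)) := by
          nlinarith
        nlinarith
      calc r ^ s = Real.exp ((s : ℝ) * Real.log r) := by
            rw [← Real.log_pow, Real.exp_log (pow_pos hrpos s)]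
        _ ≤ Real.exp (-(1/6 * η ^ 2 * t)) := Real.exp_le_exp.mpr hsl
  -- combine
  have hkey : (α * t) ^ s ≤ Real.exp (-(1/6 * η ^ 2 * t)) * c1 ^ s := by
    have hne : (0:ℝ) < α + η / 2 := by positivity
    have h5 : (α * t) ^ s = r ^ s * ((α + η / 2) * t) ^ s := by
      rw [← mul_pow, hr_def, div_mul_eq_mul_div, mul_left_comm,
        mul_div_cancel_left₀ _ hne.ne']
    have h6 : ((α + η / 2) * t) ^ s ≤ c1 ^ s :=
      pow_le_pow_left₀ hc1pos.le hks s
    calc (α * t) ^ s = r ^ s * ((α + η / 2) * t) ^ s := h5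
      _ ≤ Real.exp (-(1/6 * η ^ 2 * t)) * c1 ^ s := by
          apply mul_le_mul hrs h6 (by positivity) (Real.exp_nonneg _)
  have hfin : (t.choose s : ℝ) * α ^ s * c1 ^ s
      ≤ Real.exp (-(1/6 * η ^ 2 * t)) * (k.choose s : ℝ) * c1 ^ s := by
    calc (t.choose s : ℝ) * α ^ s * c1 ^ s = ((t.choose s : ℝ) * c1 ^ s) * α ^ s := by ring
      _ ≤ ((k.choose s : ℝ) * (t:ℝ) ^ s) * α ^ s := by
          apply mul_le_mul_of_nonneg_right hnatR (by positivity)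
      _ = (k.choose s : ℝ) * (α * t) ^ s := by rw [mul_pow]; ring
      _ ≤ (k.choose s : ℝ) * (Real.exp (-(1/6 * η ^ 2 * t)) * c1 ^ s) := by
          apply mul_le_mul_of_nonneg_left hkey (by positivity)
      _ = Real.exp (-(1/6 * η ^ 2 * t)) * (k.choose s : ℝ) * c1 ^ s := by ring
  have := le_of_mul_le_mul_right (by linarith [hfin] : (t.choose s : ℝ) * α ^ s * c1 ^ s
      ≤ (Real.exp (-(1/6 * η ^ 2 * t)) * (k.choose s : ℝ)) * c1 ^ s) (by positivity : (0:ℝ) < c1 ^ s)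
  exact this
end

section
/- There is a constant B > 0 such that for any degree-1 multilinear polynomial P(x) over the reals with at least r variables having non-zero coefficients, Pr over uniform x ∈ {0,1}^n that P(x) = 0 is at most B/√r. -/
open Finset

/-!
Flip the coordinates whose coefficient is negative. On the support of `c`, of size `m`, the zero
set of `P` then becomes a family of sets with prescribed `|c|`-weight; since all weights are
positive this family is an antichain, so Sperner's theorem bounds it by `C(m, ⌊m/2⌋) ≤ 2^m/√m`.
The `n - m` coordinates outside the support are free and contribute a factor `2^(n-m)`, so
`B = 1` works.
-/

namespace Nat

theorem centralBinom_sq_mul_le_sixteen_pow (k : ℕ) :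
    (centralBinom k : ℝ) ^ 2 * (3 * k + 1) ≤ 16 ^ k := by
  induction k with
  | zero => simp
  | succ k ih =>
    have hrec : ((k : ℝ) + 1) * centralBinom (k + 1) = 2 * (2 * k + 1) * centralBinom k := by
      exact_mod_cast succ_mul_centralBinom_succ k
    have hpoly : (2 * (2 * (k : ℝ) + 1)) ^ 2 * (3 * (k + 1) + 1)
        ≤ 16 * ((k : ℝ) + 1) ^ 2 * (3 * k + 1) := by nlinarith -- the two sides differ by `4k`
    have key : ((k : ℝ) + 1) ^ 2 * (centralBinom (k + 1) ^ 2 * (3 * (k + 1) + 1))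
        ≤ ((k : ℝ) + 1) ^ 2 * 16 ^ (k + 1) :=
      calc _ = (2 * (2 * k + 1)) ^ 2 * (3 * (k + 1) + 1) * (centralBinom k : ℝ) ^ 2 := by
              rw [← mul_assoc, ← mul_pow, hrec]; ring
        _ ≤ 16 * ((k : ℝ) + 1) ^ 2 * (3 * k + 1) * centralBinom k ^ 2 := by gcongr
        _ = 16 * ((k : ℝ) + 1) ^ 2 * (centralBinom k ^ 2 * (3 * k + 1)) := by ring
        _ ≤ 16 * ((k : ℝ) + 1) ^ 2 * 16 ^ k := by gcongr
        _ = ((k : ℝ) + 1) ^ 2 * 16 ^ (k + 1) := by ring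
    push_cast
    exact le_of_mul_le_mul_left key (by positivity)

theorem centralBinom_mul_sqrt_le_four_pow {k t : ℕ} (ht : t ≤ 3 * k + 1) :
    (centralBinom k : ℝ) * √t ≤ 4 ^ k := by
  refine (pow_le_pow_iff_left₀ (by positivity) (by positivity) two_ne_zero).1 ?_
  rw [mul_pow, Real.sq_sqrt t.cast_nonneg, ← pow_mul, mul_comm k, pow_mul]
  calc (centralBinom k : ℝ) ^ 2 * t ≤ centralBinom k ^ 2 * (3 * k + 1) := by
        gcongr; exact_mod_cast ht
    _ ≤ _ := by norm_num [centralBinom_sq_mul_le_sixteen_pow]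

theorem choose_half_mul_sqrt_le_two_pow (m : ℕ) : (m.choose (m / 2) : ℝ) * √m ≤ 2 ^ m := by
  obtain ⟨k, rfl | rfl⟩ := m.even_or_odd'
  · have hk : 2 * k / 2 = k := by omega
    have := centralBinom_mul_sqrt_le_four_pow (k := k) (t := 2 * k) (by omega)
    rw [hk, ← centralBinom_eq_two_mul_choose, pow_mul]
    norm_num at this ⊢
    exact this
  · have hk : (2 * k + 1) / 2 = k := by omega
    have hcb : centralBinom (k + 1) = 2 * (2 * k + 1).choose k := by
      rw [centralBinom_eq_two_mul_choose, mul_add_one, choose_succ_succ, choose_symm_half]; ring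
    have := centralBinom_mul_sqrt_le_four_pow (k := k + 1) (t := 2 * k + 1) (by omega)
    rw [hcb] at this
    rw [hk]
    push_cast at this ⊢
    have h4 : (4 : ℝ) ^ (k + 1) = 2 * 2 ^ (2 * k + 1) := by rw [pow_succ, pow_succ, pow_mul]; ring
    linarith

end Nat

theorem isAntichain_setOf_sum_eq {α M : Type*} [AddCommMonoid M] [PartialOrder M]
    [IsOrderedCancelAddMonoid M] {w : α → M} (hw : ∀ i, 0 < w i) (K : M) :
    IsAntichain (· ⊆ ·) {s : Finset α | ∑ i ∈ s, w i = K} := by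
  intro s hs t ht hne hst
  obtain ⟨i, hit, his⟩ := not_subset.1 fun hts => hne (hst.antisymm hts)
  exact (sum_lt_sum_of_subset hst hit his (hw i) fun j _ _ => (hw j).le).ne (hs.trans ht.symm)

theorem card_filter_sum_eq_le_choose {α M : Type*} [Fintype α] [AddCommMonoid M] [PartialOrder M]
    [IsOrderedCancelAddMonoid M] [DecidableEq M] {w : α → M} (hw : ∀ i, 0 < w i) (K : M) :
    #{s : Finset α | ∑ i ∈ s, w i = K} ≤ (Fintype.card α).choose (Fintype.card α / 2) :=
  IsAntichain.sperner (by simpa using isAntichain_setOf_sum_eq hw K)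

theorem mul_ite_one_zero_eq_min_add {c : ℝ} (hc : c ≠ 0) (b : Bool) :
    c * (if b then 1 else 0) = min c 0 + if b = decide (0 < c) then |c| else 0 := by
  rcases hc.lt_or_gt with hc | hc <;> cases b <;>
    simp [hc, hc.le, hc.not_gt, abs_of_neg, abs_of_pos]

section BooleanCube

variable {ι : Type*} [Fintype ι] [DecidableEq ι] (c0 : ℝ)

noncomputable def affineZeroSet (c : ι → ℝ) : Finset (ι → Bool) :=
  {x | c0 + ∑ i, c i * (if x i then 1 else 0) = 0}

theorem card_affineZeroSet_le_choose {c : ι → ℝ} (hc : ∀ i, c i ≠ 0) :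
    #(affineZeroSet c0 c) ≤ (Fintype.card ι).choose (Fintype.card ι / 2) := by
  -- the support of `x` after flipping the coordinates where `c < 0`
  let T : (ι → Bool) → Finset ι := fun x => {i | x i = decide (0 < c i)}
  have hsplit (x : ι → Bool) :
      ∑ i, c i * (if x i then 1 else 0) = ∑ i, min (c i) 0 + ∑ i ∈ T x, |c i| := by
    rw [sum_filter, ← sum_add_distrib]
    exact sum_congr rfl fun i _ => mul_ite_one_zero_eq_min_add (hc i) (x i)
  have hT : Function.Injective T := by
    intro x y hxy
    funext i
    have := Finset.ext_iff.1 hxy i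
    simp only [T, mem_filter, mem_univ, true_and] at this
    revert this
    generalize decide (0 < c i) = b
    cases x i <;> cases y i <;> cases b <;> decide
  calc _ ≤ #{s : Finset ι | ∑ i ∈ s, |c i| = -c0 - ∑ i, min (c i) 0} := by
        refine card_le_card_of_injOn T (fun x hx => ?_) hT.injOn
        simp only [affineZeroSet, coe_filter, mem_univ, true_and, Set.mem_ofPred_eq,
          hsplit] at hx ⊢
        linarith
    _ ≤ _ := card_filter_sum_eq_le_choose (fun i => abs_pos.2 (hc i)) _

theorem card_affineZeroSet_le_card_restrict_mul (c : ι → ℝ) :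
    #(affineZeroSet c0 c) ≤ #(affineZeroSet c0 fun i : {i // c i ≠ 0} => c i)
      * 2 ^ (Fintype.card ι - Fintype.card {i // c i ≠ 0}) := by
  let e := Equiv.piEquivPiSubtypeProd (fun i => c i ≠ 0) fun _ => Bool
  have hsupp (x : ι → Bool) :
      ∑ i : {i // c i ≠ 0}, c i * (if x i then 1 else 0) = ∑ i, c i * (if x i then 1 else 0) := by
    rw [← Fintype.sum_subtype_add_sum_subtype (fun i => c i ≠ 0), left_eq_add]
    exact sum_eq_zero fun i _ => by simp [not_not.1 i.2]
  calc _ ≤ #(affineZeroSet c0 (fun i : {i // c i ≠ 0} => c i)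
            ×ˢ (univ : Finset ({i // ¬c i ≠ 0} → Bool))) := by
        refine card_le_card_of_injOn e (fun x hx => ?_) e.injective.injOn
        simp only [affineZeroSet, coe_filter, mem_univ, true_and, Set.mem_ofPred_eq, coe_product,
          coe_univ, Set.mem_prod, Set.mem_univ, and_true] at hx ⊢
        change c0 + ∑ i : {i // c i ≠ 0}, c i * (if x i then 1 else 0) = 0
        rwa [hsupp]
    _ = _ := by
        rw [card_product, card_univ, Fintype.card_fun, Fintype.card_bool,
          Fintype.card_subtype_compl]

theorem card_affineZeroSet_mul_sqrt_le (c : ι → ℝ) :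
    (#(affineZeroSet c0 c) : ℝ) * √(#{i | c i ≠ 0}) ≤ 2 ^ Fintype.card ι := by
  rw [← Fintype.card_subtype (fun i => c i ≠ 0)]
  set m := Fintype.card {i // c i ≠ 0}
  have hcount := (card_affineZeroSet_le_card_restrict_mul c0 c).trans <|
    Nat.mul_le_mul_right _ <|
      card_affineZeroSet_le_choose c0 (c := fun i : {i // c i ≠ 0} => c i) fun i => i.2
  have hm : m ≤ Fintype.card ι := Fintype.card_subtype_le _
  calc _ ≤ (m.choose (m / 2) * 2 ^ (Fintype.card ι - m) : ℕ) * √m :=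
        mul_le_mul_of_nonneg_right (by exact_mod_cast hcount) (Real.sqrt_nonneg _)
    _ = m.choose (m / 2) * √m * 2 ^ (Fintype.card ι - m) := by push_cast; ring
    _ ≤ 2 ^ m * 2 ^ (Fintype.card ι - m) := by
        gcongr; exact Nat.choose_half_mul_sqrt_le_two_pow m
    _ = 2 ^ Fintype.card ι := by rw [← pow_add, Nat.add_sub_cancel' hm]

end BooleanCube

/-- Erdős's strengthening of the Littlewood–Offord theorem on the Boolean cube:
there is a constant `B > 0` such that any real degree-1 multilinear polynomial with
at least `r ≥ 1` non-zero coefficients vanishes on at most a `B/√r` fraction of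
`{0,1}ⁿ`. -/
theorem stmt14 :
    ∃ B : ℝ, 0 < B ∧
      ∀ (n r : ℕ) (c0 : ℝ) (c : Fin n → ℝ),
        0 < r →
        r ≤ (Finset.univ.filter (fun i => c i ≠ 0)).card →
        ((Finset.univ.filter (fun x : Fin n → Bool =>
            c0 + ∑ i, c i * (if x i then 1 else 0) = 0)).card : ℝ)
          ≤ B / Real.sqrt r * 2 ^ n := by
  refine ⟨1, one_pos, fun n r c0 c hr hrm => ?_⟩
  have hsqrt_r : 0 < √(r : ℝ) := Real.sqrt_pos.2 (by exact_mod_cast hr)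
  have hsqrt_le : √(r : ℝ) ≤ √(#{i | c i ≠ 0} : ℝ) := Real.sqrt_le_sqrt (by exact_mod_cast hrm)
  have hcount := card_affineZeroSet_mul_sqrt_le c0 c
  rw [Fintype.card_fin] at hcount
  calc _ ≤ 2 ^ n / √(#{i | c i ≠ 0} : ℝ) :=
        (le_div_iff₀ (hsqrt_r.trans_le hsqrt_le)).2 hcount
    _ ≤ 2 ^ n / √(r : ℝ) := div_le_div_of_nonneg_left (by positivity) hsqrt_r hsqrt_le
    _ = 1 / √(r : ℝ) * 2 ^ n := by ring
end

section
/- Let d, r, n be positive integers and c = c(d, r) a real number. Suppose that every real multilinear polynomial of degree at most d in n variables with at least r pairwise-disjoint non-zero monomials of degree exactly d has at most c·2^n zeros in {0,1}^n. Let G be an Abelian group in which every non-zero element has order greater than (C(rd, ≤d))!, where C(rd, ≤d) = Σ_{i≤d} C(rd, i). Then every degree-≤d polynomial Q over G (in n variables) with at least r pairwise-disjoint non-zero degree-d monomials has at most c·2^n zeros in {0,1}^n. -/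
open Finset
open scoped Classical

universe u

/-!
Let `M₁, …, M_r` be disjoint degree-`d` monomials of `Q` with non-zero coefficients and `V` their
union, so `|V| = rd`. Fixing the variables outside `V` turns `Q` into a polynomial on `V` supported
on the `t = Σ_{i ≤ d} C(rd, i)` subsets of `V` of size at most `d`, whose coefficient at `Mᵢ` is
still `Q(Mᵢ)`. In `ℝ^t` the unit vector of `Mᵢ` is not in the span of the monomial vectors of the
zeros of this restriction: Cramer's rule would turn a real relation into an integer one with a
determinant `N` of a `0/1` matrix, `0 < |N| ≤ t!`, and evaluating it at the coefficients gives
`N • Q(Mᵢ) = 0`. Hence some real functional kills all these monomial vectors but none of the unit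
vectors of the `Mᵢ`: a real polynomial with `r` disjoint degree-`d` monomials vanishing wherever the
restriction does. Averaging the real bound over all ways of fixing the variables outside `V` bounds
the zeros of `Q`.
-/

open Matrix

theorem Matrix.exists_isUnit_submatrix_of_linearIndependent_col {m n K : Type*} [Field K]
    [Fintype m] [Fintype n] {A : Matrix m n K} (hA : LinearIndependent K A.col) :
    ∃ f : n → m, IsUnit (A.submatrix f id) := by
  have hrank : Module.finrank K (Submodule.span K (Set.range A.row)) = Fintype.card n := by
    rw [← rank_eq_finrank_span_row, ← rank_transpose]
    exact LinearIndependent.rank_matrix (M := Aᵀ) hA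
  have htop : Submodule.span K (Set.range A.row) = ⊤ :=
    Submodule.eq_top_of_finrank_eq (by rw [hrank, Module.finrank_fintype_fun_eq_card])
  obtain ⟨ρ, b, -, hspan, hli⟩ := exists_linearIndependent' K A.row
  have : Finite ρ := hli.finite
  have : Fintype ρ := Fintype.ofFinite ρ
  let B : Module.Basis ρ K (n → K) := .mk hli (by rw [hspan, htop])
  have hcard : Fintype.card n = Fintype.card ρ := by
    rw [← Module.finrank_fintype_fun_eq_card K, Module.finrank_eq_card_basis B]
  let σ : n ≃ ρ := Fintype.equivOfCardEq hcard
  refine ⟨b ∘ σ, linearIndependent_rows_iff_isUnit.mp ?_⟩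
  exact hli.comp σ σ.injective

theorem Matrix.natAbs_det_le_factorial {n : Type*} [Fintype n] [DecidableEq n]
    (B : Matrix n n ℤ) (hB : ∀ i j, B i j = 0 ∨ B i j = 1) :
    B.det.natAbs ≤ (Fintype.card n).factorial := by
  have h := Matrix.det_le (A := B) (abv := AbsoluteValue.abs) (x := 1) fun i j => by
    rcases hB i j with h | h <;> simp [h]
  have : (B.det.natAbs : ℤ) ≤ (Fintype.card n).factorial := by simpa using h
  exact_mod_cast this

theorem Matrix.mulVec_cramer_submatrix {K ι κ : Type*} [Field K] [CharZero K] [Fintype κ]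
    [DecidableEq κ] (U : Matrix ι κ ℤ) (f : κ → ι)
    (hf : IsUnit ((U.map (Int.cast : ℤ → K)).submatrix f id)) {e : ι → ℤ} {α : κ → K}
    (hα : U.map Int.cast *ᵥ α = fun i => (e i : K)) :
    U *ᵥ (U.submatrix f id).cramer (e ∘ f) = (U.submatrix f id).det • e := by
  set B := U.submatrix f id
  have hcast (v : κ → ℤ) (i : ι) :
      ((U *ᵥ v) i : K) = (U.map (Int.cast : ℤ → K) *ᵥ fun j => (v j : K)) i :=
    RingHom.map_mulVec (Int.castRingHom K) U v i
  -- over `K` the solution of the square system is unique, so it is `det B • α`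
  have hsol : (fun j => (B.cramer (e ∘ f) j : K)) = (B.det : K) • α := by
    refine mulVec_injective_iff_isUnit.mpr hf (funext fun i => ?_)
    change (U.map (Int.cast : ℤ → K) *ᵥ fun j => (B.cramer (e ∘ f) j : K)) (f i) =
      (U.map (Int.cast : ℤ → K) *ᵥ ((B.det : K) • α)) (f i)
    rw [← hcast, mulVec_smul, hα]
    change ((B *ᵥ B.cramer (e ∘ f)) i : K) = _
    simp [mulVec_cramer]
  ext i
  apply Int.cast_injective (α := K)
  rw [hcast, hsol, mulVec_smul, hα]
  simp

theorem exists_nsmul_mem_span_int_of_mem_span {K ι κ : Type*} [Field K] [CharZero K]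
    [Fintype ι] (u : κ → ι → ℤ) (hu : ∀ k i, u k i = 0 ∨ u k i = 1) (e : ι → ℤ)
    (he : (fun i => (e i : K)) ∈ Submodule.span K (Set.range fun k i => (u k i : K))) :
    ∃ N : ℕ, 0 < N ∧ N ≤ (Fintype.card ι).factorial ∧
      N • e ∈ Submodule.span ℤ (Set.range u) := by
  obtain ⟨κ', a, -, hspan, hli⟩ := exists_linearIndependent' K fun k i => (u k i : K)
  have : Fintype κ' := @Fintype.ofFinite κ' hli.finite
  let U : Matrix ι κ' ℤ := fun i j => u (a j) i
  obtain ⟨f, hf⟩ :=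
    exists_isUnit_submatrix_of_linearIndependent_col (A := U.map (Int.cast : ℤ → K)) hli
  obtain ⟨α, hα⟩ : ∃ α, U.map Int.cast *ᵥ α = fun i => (e i : K) := by
    have he' : (fun i => (e i : K)) ∈ Submodule.span K (Set.range (U.map Int.cast).col) :=
      hspan ▸ he
    rwa [← Matrix.range_mulVecLin] at he'
  set B := U.submatrix f id
  have hdet : B.det ≠ 0 := by
    have : ((B.det : ℤ) : K) ≠ 0 := by
      rw [Int.cast_det]
      exact ((isUnit_iff_isUnit_det _).mp hf).ne_zero
    exact_mod_cast this
  have hmem : B.det • e ∈ Submodule.span ℤ (Set.range u) := by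
    rw [← mulVec_cramer_submatrix U f hf hα]
    refine Submodule.span_mono (Set.range_comp_subset_range a u) ?_
    change _ ∈ Submodule.span ℤ (Set.range U.col)
    rw [← Matrix.range_mulVecLin]
    exact LinearMap.mem_range_self _ _
  have hcard : Fintype.card κ' ≤ Fintype.card ι := by
    simpa using hli.fintype_card_le_finrank
  refine ⟨B.det.natAbs, Int.natAbs_pos.mpr hdet,
    (B.natAbs_det_le_factorial fun i j => hu (a j) (f i)).trans (Nat.factorial_le hcard), ?_⟩
  rw [← natCast_zsmul]
  rcases Int.natAbs_eq B.det with h | h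
  · rwa [← h]
  · rw [show (B.det.natAbs : ℤ) = -B.det by omega, neg_smul]
    exact neg_mem hmem

theorem Submodule.exists_dual_le_ker_forall_apply_ne_zero {ι K M : Type*} [Field K] [Infinite K]
    [Finite ι] [AddCommGroup M] [Module K M] (W : Submodule K M) (v : ι → M)
    (hv : ∀ i, v i ∉ W) : ∃ f : Module.Dual K M, W ≤ LinearMap.ker f ∧ ∀ i, f (v i) ≠ 0 := by
  obtain ⟨f, hf⟩ := Module.exists_dual_forall_apply_ne_zero (K := K) (fun i => W.mkQ (v i))
    fun i => by simpa [Submodule.Quotient.mk_eq_zero] using hv i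
  exact ⟨f ∘ₗ W.mkQ, fun w hw => by simp [(Submodule.Quotient.mk_eq_zero W).mpr hw], hf⟩

def monomialVector {n : ℕ} (𝒮 : Finset (Finset (Fin n))) (x : Fin n → Bool) (S : 𝒮) : ℤ :=
  if ∀ i ∈ S.1, x i = true then 1 else 0

theorem evalPoly_eq_sum_monomialVector_smul {G : Type*} [AddCommGroup G] {n : ℕ}
    {𝒮 : Finset (Finset (Fin n))} {R : Finset (Fin n) → G} (hR : ∀ S ∉ 𝒮, R S = 0)
    (x : Fin n → Bool) : evalPoly R x = ∑ S : 𝒮, monomialVector 𝒮 x S • R S := by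
  rw [evalPoly, ← Finset.sum_subset (Finset.subset_univ 𝒮) fun S _ hS => by simp [hR S hS],
    ← Finset.sum_coe_sort 𝒮]
  simp [monomialVector, ite_smul]

theorem single_notMem_span_monomialVector {G : Type*} [AddCommGroup G] {n : ℕ}
    {𝒮 : Finset (Finset (Fin n))} {R : Finset (Fin n) → G} (hR : ∀ S ∉ 𝒮, R S = 0)
    (hG : ∀ g : G, g ≠ 0 → ∀ m : ℕ, 0 < m → m ≤ (#𝒮).factorial → m • g ≠ 0)
    {M : Finset (Fin n)} (hM𝒮 : M ∈ 𝒮) (hM : R M ≠ 0) :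
    Pi.single ⟨M, hM𝒮⟩ 1 ∉ Submodule.span ℝ
      (Set.range fun x : {x // evalPoly R x = 0} => fun S => (monomialVector 𝒮 x S : ℝ)) := by
  intro hmem
  let ev : (𝒮 → ℤ) →ₗ[ℤ] G := Fintype.linearCombination ℤ fun S => R S
  have hker : Submodule.span ℤ (Set.range fun x : {x // evalPoly R x = 0} =>
      monomialVector 𝒮 x) ≤ LinearMap.ker ev := Submodule.span_le.mpr <| by
    rintro _ ⟨x, rfl⟩
    exact (evalPoly_eq_sum_monomialVector_smul hR x).symm.trans x.2
  have hsingle : (Pi.single ⟨M, hM𝒮⟩ 1 : 𝒮 → ℝ) =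
      fun S => ((Pi.single ⟨M, hM𝒮⟩ 1 : 𝒮 → ℤ) S : ℝ) := by
    ext S; simp [Pi.single_apply]
  obtain ⟨N, hN0, hNle, hN⟩ := exists_nsmul_mem_span_int_of_mem_span _
    (fun x S => by unfold monomialVector; split_ifs <;> simp) _ (hsingle ▸ hmem)
  have hevN : ev (N • Pi.single ⟨M, hM𝒮⟩ 1) = N • R M := by
    simp [ev, Fintype.linearCombination_apply, Pi.single_apply]
  exact hG _ hM N hN0 (by simpa using hNle) (hevN ▸ hker hN)

theorem exists_real_poly_vanishing_on_zeros {n : ℕ} {G ι : Type*} [AddCommGroup G] [Finite ι]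
    (𝒮 : Finset (Finset (Fin n))) (R : Finset (Fin n) → G) (hR : ∀ S ∉ 𝒮, R S = 0)
    (hG : ∀ g : G, g ≠ 0 → ∀ m : ℕ, 0 < m → m ≤ (#𝒮).factorial → m • g ≠ 0)
    (M : ι → Finset (Fin n)) (hM : ∀ i, R (M i) ≠ 0) :
    ∃ P : Finset (Fin n) → ℝ, (∀ S ∉ 𝒮, P S = 0) ∧ (∀ i, P (M i) ≠ 0) ∧
      ∀ x, evalPoly R x = 0 → evalPoly P x = 0 := by
  have hM𝒮 (i : ι) : M i ∈ 𝒮 := by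
    by_contra h
    exact hM i (hR _ h)
  obtain ⟨f, hfW, hfM⟩ := Submodule.exists_dual_le_ker_forall_apply_ne_zero _ _
    fun i => single_notMem_span_monomialVector hR hG (hM𝒮 i) (hM i)
  let P (S : Finset (Fin n)) : ℝ := if h : S ∈ 𝒮 then f (Pi.single ⟨S, h⟩ 1) else 0
  have hP : ∀ S ∉ 𝒮, P S = 0 := fun S hS => dif_neg hS
  refine ⟨P, hP, fun i => by simpa [P, hM𝒮 i] using hfM i, fun x hx => ?_⟩
  rw [evalPoly_eq_sum_monomialVector_smul hP, ← hfW (Submodule.subset_span ⟨⟨x, hx⟩, rfl⟩),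
    LinearMap.pi_apply_eq_sum_univ f]
  refine Finset.sum_congr rfl fun S _ => ?_
  have hS : (fun j => if S = j then (1 : ℝ) else 0) = Pi.single S 1 := by
    ext j; simp [Pi.single_apply, eq_comm]
  simp [P, hS]

theorem sum_card_filter_piecewise {ι β : Type*} [Fintype ι] [DecidableEq ι] [Fintype β]
    (V : Finset ι) (p : (ι → β) → Prop) [DecidablePred p] :
    ∑ y : ι → β, #{x | p (V.piecewise x y)} = #{x | p x} * Fintype.card (ι → β) := by
  have hσ : Function.Involutive fun q : (ι → β) × (ι → β) =>
      (V.piecewise q.2 q.1, V.piecewise q.1 q.2) := by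
    intro q
    ext i <;> by_cases hi : i ∈ V <;> simp [hi]
  calc ∑ y : ι → β, #{x | p (V.piecewise x y)}
      = ∑ q : (ι → β) × (ι → β), if p (V.piecewise q.2 q.1) then 1 else 0 := by
        rw [Fintype.sum_prod_type]; simp only [Finset.card_filter]
    _ = ∑ q : (ι → β) × (ι → β), if p q.1 then 1 else 0 :=
        Fintype.sum_equiv (hσ.toPerm _) _ _ fun q => rfl
    _ = #{x | p x} * Fintype.card (ι → β) := by
        rw [Fintype.sum_prod_type, Finset.card_filter, Finset.sum_mul]
        refine Finset.sum_congr rfl fun x _ => ?_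
        split_ifs <;> simp

theorem card_filter_le_of_forall_piecewise {ι β : Type*} [Fintype ι] [DecidableEq ι] [Fintype β]
    [Nonempty β] (V : Finset ι) (p : (ι → β) → Prop) [DecidablePred p] {C : ℝ}
    (h : ∀ y, (#{x | p (V.piecewise x y)} : ℝ) ≤ C) : (#{x | p x} : ℝ) ≤ C := by
  refine le_of_mul_le_mul_right ?_ (Nat.cast_pos.mpr (Fintype.card_pos (α := ι → β)))
  calc (#{x | p x} : ℝ) * Fintype.card (ι → β)
      = ∑ y : ι → β, (#{x | p (V.piecewise x y)} : ℝ) := by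
        exact_mod_cast (sum_card_filter_piecewise V p).symm
    _ ≤ ∑ _y : ι → β, C := Finset.sum_le_sum fun y _ => h y
    _ = C * Fintype.card (ι → β) := by simp [mul_comm]

theorem Finset.card_filter_powerset_card_le {α : Type*} (V : Finset α) (d : ℕ) :
    #{S ∈ V.powerset | S.card ≤ d} = ∑ i ∈ range (d + 1), (#V).choose i := by
  have h : {S ∈ V.powerset | S.card ≤ d} = (range (d + 1)).biUnion (V.powersetCard ·) := by
    ext S
    simp [Finset.mem_powersetCard, and_comm]
  rw [h, card_biUnion fun i _ j _ hij => pairwise_disjoint_powersetCard V hij]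
  simp

theorem Finset.sum_powerset_product_compl {α M : Type*} [Fintype α] [DecidableEq α]
    [AddCommMonoid M] (V : Finset α) (f : Finset α → M) :
    ∑ p ∈ V.powerset ×ˢ Vᶜ.powerset, f (p.1 ∪ p.2) = ∑ U, f U := by
  refine Finset.sum_nbij' (fun p => p.1 ∪ p.2) (fun U => (U ∩ V, U \ V)) (by simp) ?_ ?_ ?_
    fun _ _ => rfl
  · intro U _
    simp only [Finset.mem_product, Finset.mem_powerset]
    exact ⟨Finset.inter_subset_right, fun a ha => by simp_all⟩
  · rintro ⟨S, T⟩ h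
    simp only [Finset.mem_product, Finset.mem_powerset] at h
    have hS (a) := @h.1 a
    have hT (a) := @h.2 a
    simp only [Finset.mem_compl] at hT
    ext a <;> simp only [Finset.mem_inter, Finset.mem_union, Finset.mem_sdiff] <;> grind
  · intro U _
    ext a
    simp only [Finset.mem_union, Finset.mem_inter, Finset.mem_sdiff]
    tauto

def restrictPoly {G : Type*} [AddCommMonoid G] {n : ℕ} (V : Finset (Fin n))
    (Q : Finset (Fin n) → G) (y : Fin n → Bool) (S : Finset (Fin n)) : G :=
  if S ⊆ V then ∑ T ∈ Vᶜ.powerset with ∀ i ∈ T, y i = true, Q (S ∪ T) else 0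

theorem evalPoly_restrictPoly {G : Type*} [AddCommMonoid G] {n : ℕ} (V : Finset (Fin n))
    (Q : Finset (Fin n) → G) (y x : Fin n → Bool) :
    evalPoly (restrictPoly V Q y) x = evalPoly Q (V.piecewise x y) := by
  have hpiece {S T : Finset (Fin n)} (hS : S ⊆ V) (hT : T ⊆ Vᶜ) :
      (∀ i ∈ S ∪ T, V.piecewise x y i = true) ↔
        (∀ i ∈ S, x i = true) ∧ ∀ i ∈ T, y i = true := by
    simp only [Finset.mem_union, or_imp, forall_and]
    refine and_congr (forall₂_congr fun i hi => by rw [Finset.piecewise_eq_of_mem _ _ _ (hS hi)])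
      (forall₂_congr fun i hi => by
        rw [Finset.piecewise_eq_of_notMem _ _ _ (Finset.mem_compl.mp (hT hi))])
  have hsupp : evalPoly (restrictPoly V Q y) x =
      ∑ S ∈ V.powerset, if ∀ i ∈ S, x i = true then restrictPoly V Q y S else 0 :=
    (Finset.sum_subset (Finset.subset_univ _) fun S _ hS => by
      simp [restrictPoly, Finset.mem_powerset.not.mp hS]).symm
  rw [hsupp, evalPoly, ← Finset.sum_powerset_product_compl V, Finset.sum_product]
  refine Finset.sum_congr rfl fun S hS => ?_
  rw [Finset.mem_powerset] at hS
  simp only [restrictPoly, if_pos hS, Finset.sum_filter]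
  split_ifs with hx
  · exact Finset.sum_congr rfl fun T hT =>
      if_congr (by rw [hpiece hS (Finset.mem_powerset.mp hT)]; exact (and_iff_right hx).symm)
        rfl rfl
  · exact (Finset.sum_eq_zero fun T hT =>
      if_neg (by rw [hpiece hS (Finset.mem_powerset.mp hT)]; exact fun h => hx h.1)).symm

section restrictPoly

variable {G : Type*} [AddCommMonoid G] {n d : ℕ} {Q : Finset (Fin n) → G}

theorem restrictPoly_eq_zero_of_notMem (hQ : ∀ S : Finset (Fin n), d < S.card → Q S = 0)
    (V : Finset (Fin n)) (y : Fin n → Bool) {S : Finset (Fin n)}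
    (hS : S ∉ {T ∈ V.powerset | T.card ≤ d}) : restrictPoly V Q y S = 0 := by
  rw [Finset.mem_filter, Finset.mem_powerset, not_and_or, not_le] at hS
  unfold restrictPoly
  split_ifs with hSV
  · exact Finset.sum_eq_zero fun T _ => hQ _ ((hS.resolve_left (not_not.mpr hSV)).trans_le
      (Finset.card_le_card Finset.subset_union_left))
  · rfl

theorem restrictPoly_eq_self_of_card_eq (hQ : ∀ S : Finset (Fin n), d < S.card → Q S = 0)
    {V : Finset (Fin n)} (y : Fin n → Bool) {M : Finset (Fin n)} (hMV : M ⊆ V)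
    (hM : M.card = d) : restrictPoly V Q y M = Q M := by
  rw [restrictPoly, if_pos hMV, Finset.sum_eq_single_of_mem ∅ (by simp) ?_, Finset.union_empty]
  intro T hT hT0
  rw [Finset.mem_filter, Finset.mem_powerset] at hT
  apply hQ
  rw [Finset.card_union_of_disjoint
    (Finset.disjoint_of_subset_left hMV (Finset.subset_compl_iff_disjoint_left.mp hT.1)), hM]
  have := Finset.card_pos.mpr (Finset.nonempty_iff_ne_empty.mpr hT0)
  omega

end restrictPoly

theorem stmt15_general (n d r : ℕ) (c : ℝ)
    (hreal : ∀ P : Finset (Fin n) → ℝ,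
      (∀ S : Finset (Fin n), d < S.card → P S = 0) →
      (∃ M : Fin r → Finset (Fin n),
        (∀ i, (M i).card = d ∧ P (M i) ≠ 0) ∧
        (∀ i j, i ≠ j → Disjoint (M i) (M j))) →
      ((Finset.univ.filter (fun x : Fin n → Bool => evalPoly P x = 0)).card : ℝ)
        ≤ c * 2 ^ n)
    (G : Type u) [AddCommGroup G]
    (hG : ∀ g : G, g ≠ 0 → ∀ m : ℕ, 0 < m →
      m ≤ (∑ i ∈ Finset.range (d + 1), (r * d).choose i).factorial → m • g ≠ 0)
    (Q : Finset (Fin n) → G)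
    (hQdeg : ∀ S : Finset (Fin n), d < S.card → Q S = 0)
    (hQM : ∃ M : Fin r → Finset (Fin n),
      (∀ i, (M i).card = d ∧ Q (M i) ≠ 0) ∧
      (∀ i j, i ≠ j → Disjoint (M i) (M j))) :
    ((Finset.univ.filter (fun x : Fin n → Bool => evalPoly Q x = 0)).card : ℝ)
      ≤ c * 2 ^ n := by
  obtain ⟨M, hM, hdisj⟩ := hQM
  let V := Finset.univ.biUnion M
  have hMV (i : Fin r) : M i ⊆ V := Finset.subset_biUnion_of_mem M (Finset.mem_univ i)
  have hV : V.card = r * d := by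
    rw [Finset.card_biUnion fun i _ j _ hij => hdisj i j hij,
      Finset.sum_congr rfl fun i _ => (hM i).1]
    simp
  refine card_filter_le_of_forall_piecewise V _ fun y => ?_
  obtain ⟨P, hP, hPM, hPzero⟩ := exists_real_poly_vanishing_on_zeros
    {S ∈ V.powerset | S.card ≤ d} (restrictPoly V Q y)
    (fun S => restrictPoly_eq_zero_of_notMem hQdeg V y)
    (by rwa [Finset.card_filter_powerset_card_le, hV]) M
    fun i => by rw [restrictPoly_eq_self_of_card_eq hQdeg y (hMV i) (hM i).1]; exact (hM i).2
  have hPdeg (S : Finset (Fin n)) (hS : d < S.card) : P S = 0 :=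
    hP S fun hS' => (Finset.mem_filter.mp hS').2.not_gt hS
  calc (#{x | evalPoly Q (V.piecewise x y) = 0} : ℝ)
      ≤ #{x | evalPoly P x = 0} := by
        simp only [← evalPoly_restrictPoly]
        exact_mod_cast Finset.card_le_card (Finset.monotone_filter_right _ fun x _ => hPzero x)
    _ ≤ c * 2 ^ n := hreal P hPdeg ⟨M, fun i => ⟨(hM i).1, hPM i⟩, hdisj⟩

/-- Transfer of zero bounds from ℝ to Abelian groups without small-order elements:
if every real degree-`≤d` multilinear polynomial with `r` pairwise-disjoint non-zero
degree-`d` monomials has at most `c·2ⁿ` zeros in `{0,1}ⁿ`, then the same holds for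
polynomials over any Abelian group `G` in which every non-zero element has order
greater than `(Σ_{i≤d} C(rd, i))!`. -/
theorem stmt15 (n d r : ℕ) (hd : 0 < d) (hr : 0 < r) (c : ℝ)
    (hreal : ∀ P : Finset (Fin n) → ℝ,
      (∀ S : Finset (Fin n), d < S.card → P S = 0) →
      (∃ M : Fin r → Finset (Fin n),
        (∀ i, (M i).card = d ∧ P (M i) ≠ 0) ∧
        (∀ i j, i ≠ j → Disjoint (M i) (M j))) →
      ((Finset.univ.filter (fun x : Fin n → Bool => evalPoly P x = 0)).card : ℝ)
        ≤ c * 2 ^ n)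
    (G : Type u) [AddCommGroup G]
    (hG : ∀ g : G, g ≠ 0 → ∀ m : ℕ, 0 < m →
      m ≤ (∑ i ∈ Finset.range (d + 1), (r * d).choose i).factorial → m • g ≠ 0)
    (Q : Finset (Fin n) → G)
    (hQdeg : ∀ S : Finset (Fin n), d < S.card → Q S = 0)
    (hQM : ∃ M : Fin r → Finset (Fin n),
      (∀ i, (M i).card = d ∧ Q (M i) ≠ 0) ∧
      (∀ i j, i ≠ j → Disjoint (M i) (M j))) :
    ((Finset.univ.filter (fun x : Fin n → Bool => evalPoly Q x = 0)).card : ℝ)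
      ≤ c * 2 ^ n :=
  stmt15_general n d r c hreal G hG Q hQdeg hQM
end
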